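/- arXiv:2007.12922 — 9 statements merged into one kernel-verified Lean document; each statement's English description precedes it below -/
import Mathlib

section
/- Suppose g₁ and g₀ are 𝒢-measurable random variables such that 1_{S=0}·E[Y(0) | ℋ] = 1_{S=0}·(A·g₁ + (1−A)·g₀) almost surely, and set λ = g₁ − g₀ (the confounding function). Then 1_{S=0}·(E[Y(0) | ℋ] − E[Y(0) | 𝒢]) = 1_{S=0}·(A − e)·λ almost surely. (Equation (A.1)/(keyadj) of the paper: the discrepancy between treated and untreated conditional means of Y(0) in the observational study equals the confounding function times the centered treatment.) -/
open MeasureTheory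

/-! Conditioning on `𝒢` turns the model `A g₁ + (1 - A) g₀` for `E[Y(0) | ℋ]` into
`e g₁ + (1 - e) g₀` for `E[Y(0) | 𝒢]`: on each of the events `A = 1`, `A = 0` the mixture is a
`𝒢`-measurable factor times an indicator, which pulls out of the conditional expectation.
Subtracting the two models gives `(A - e)(g₁ - g₀)`. -/

lemma norm_le_one_of_eq_zero_or_eq_one {x : ℝ} (hx : x = 0 ∨ x = 1) : ‖x‖ ≤ 1 := by
  rcases hx with rfl | rfl <;> simp

lemma one_sub_eq_zero_or_eq_one {x : ℝ} (hx : x = 0 ∨ x = 1) : 1 - x = 0 ∨ 1 - x = 1 := by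
  rcases hx with rfl | rfl <;> simp

section BinaryMixture

variable {Ω : Type*} {m mΩ : MeasurableSpace Ω} {μ : Measure Ω} {A g₁ g₀ : Ω → ℝ}

lemma condExp_one_sub (hm : m ≤ mΩ) [IsFiniteMeasure μ] (hA : Integrable A μ) :
    μ[fun ω => 1 - A ω | m] =ᵐ[μ] fun ω => 1 - μ[A|m] ω := by
  have h := condExp_sub (integrable_const (1 : ℝ)) hA m
  rw [condExp_const hm] at h
  exact h

lemma condExp_binary_mixture (hm : m ≤ mΩ) [IsFiniteMeasure μ] (hA : AEStronglyMeasurable A μ)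
    (hA01 : ∀ᵐ ω ∂μ, A ω = 0 ∨ A ω = 1)
    (hg₁ : StronglyMeasurable[m] g₁) (hg₀ : StronglyMeasurable[m] g₀)
    (hint : Integrable (fun ω => A ω * g₁ ω + (1 - A ω) * g₀ ω) μ) :
    μ[fun ω => A ω * g₁ ω + (1 - A ω) * g₀ ω | m] =ᵐ[μ]
      fun ω => μ[A|m] ω * g₁ ω + (1 - μ[A|m] ω) * g₀ ω := by
  set f := fun ω => A ω * g₁ ω + (1 - A ω) * g₀ ω
  have hAi : Integrable A μ :=
    Integrable.of_bound hA 1 (hA01.mono fun _ => norm_le_one_of_eq_zero_or_eq_one)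
  have h1Ai : Integrable (fun ω => 1 - A ω) μ := (integrable_const 1).sub hAi
  have h₁ : (fun ω => A ω * f ω) =ᵐ[μ] g₁ * A := hA01.mono fun ω h => by
    rcases h with h | h <;> simp [f, h, mul_comm]
  have h₀ : (fun ω => (1 - A ω) * f ω) =ᵐ[μ] g₀ * fun ω => 1 - A ω := hA01.mono fun ω h => by
    rcases h with h | h <;> simp [f, h, mul_comm]
  have hint₁ : Integrable (g₁ * A) μ :=
    (hint.bdd_mul hA (hA01.mono fun _ => norm_le_one_of_eq_zero_or_eq_one)).congr h₁
  have hint₀ : Integrable (g₀ * fun ω => 1 - A ω) μ :=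
    (hint.bdd_mul h1Ai.aestronglyMeasurable
      (hA01.mono fun _ h => norm_le_one_of_eq_zero_or_eq_one (one_sub_eq_zero_or_eq_one h))).congr h₀
  have hsplit : f = g₁ * A + g₀ * fun ω => 1 - A ω := by
    funext ω
    simp only [f, Pi.add_apply, Pi.mul_apply]
    ring
  rw [hsplit]
  filter_upwards [condExp_add hint₁ hint₀ m,
    condExp_mul_of_stronglyMeasurable_left hg₁ hint₁ hAi,
    condExp_mul_of_stronglyMeasurable_left hg₀ hint₀ h1Ai, condExp_one_sub hm hAi]
    with ω hadd hpull₁ hpull₀ hone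
  simp only [Pi.add_apply, Pi.mul_apply] at hadd hpull₁ hpull₀
  rw [hadd, hpull₁, hpull₀, hone]
  ring

end BinaryMixture

lemma condExp_mul_condExp_of_le {Ω : Type*} {mG mH mΩ : MeasurableSpace Ω} {μ : Measure Ω}
    {T Y : Ω → ℝ} (hGH : mG ≤ mH) (hHF : mH ≤ mΩ) [SigmaFinite (μ.trim hHF)]
    (hT : StronglyMeasurable[mG] T) (hint : Integrable (T * μ[Y|mH]) μ) :
    μ[T * μ[Y|mH] | mG] =ᵐ[μ] T * μ[Y|mG] :=
  (condExp_mul_of_stronglyMeasurable_left hT hint integrable_condExp).trans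
    (Filter.EventuallyEq.rfl.mul (condExp_condExp_of_le hGH hHF))

theorem confounding_function_keyadj_general
    {Ω : Type*} {mΩ : MeasurableSpace Ω} {P : Measure Ω} [IsProbabilityMeasure P]
    {mG mH : MeasurableSpace Ω} (hGH : mG ≤ mH) (hHF : mH ≤ mΩ)
    (A S Y0 : Ω → ℝ)
    (hA : StronglyMeasurable[mH] A) (hA01 : ∀ ω, A ω = 0 ∨ A ω = 1)
    (hS : StronglyMeasurable[mG] S) (hS01 : ∀ ω, S ω = 0 ∨ S ω = 1)
    (e : Ω → ℝ) (he : e = P[A|mG])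
    (g1 g0 : Ω → ℝ) (hg1 : StronglyMeasurable[mG] g1) (hg0 : StronglyMeasurable[mG] g0)
    (hg : (fun ω => (1 - S ω) * (P[Y0|mH]) ω) =ᵐ[P]
      (fun ω => (1 - S ω) * (A ω * g1 ω + (1 - A ω) * g0 ω))) :
    (fun ω => (1 - S ω) * ((P[Y0|mH]) ω - (P[Y0|mG]) ω)) =ᵐ[P]
      (fun ω => (1 - S ω) * (A ω - e ω) * (g1 ω - g0 ω)) := by
  subst he
  set T := fun ω => 1 - S ω
  have hT : StronglyMeasurable[mG] T := stronglyMeasurable_const.sub hS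
  have hTH : Integrable (T * P[Y0|mH]) P :=
    integrable_condExp.bdd_mul (hT.mono (hGH.trans hHF)).aestronglyMeasurable
      (ae_of_all _ fun ω => norm_le_one_of_eq_zero_or_eq_one (one_sub_eq_zero_or_eq_one (hS01 ω)))
  have hmix : (fun ω => T ω * (A ω * g1 ω + (1 - A ω) * g0 ω)) =
      fun ω => A ω * (T * g1) ω + (1 - A ω) * (T * g0) ω := by
    funext ω
    simp only [Pi.mul_apply]
    ring
  rw [hmix] at hg
  have hG : T * P[Y0|mG] =ᵐ[P] fun ω => P[A|mG] ω * (T * g1) ω + (1 - P[A|mG] ω) * (T * g0) ω :=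
    (condExp_mul_condExp_of_le hGH hHF hT hTH).symm.trans <| (condExp_congr_ae hg).trans <|
      condExp_binary_mixture (hGH.trans hHF) (hA.mono hHF).aestronglyMeasurable (ae_of_all _ hA01)
        (hT.mul hg1) (hT.mul hg0) (hTH.congr hg)
  filter_upwards [hg, hG] with ω hH hG
  simp only [T, Pi.mul_apply] at hH hG ⊢
  linear_combination hH - hG

/-- equation (keyadj)/(A.1): on the observational sample `S = 0`,
the discrepancy between the `ℋ`- and `𝒢`-conditional means of the potential outcome `Y(0)`
equals the confounding function `λ = g₁ − g₀` times the centered treatment `A − e`. -/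
theorem confounding_function_keyadj
    {Ω : Type*} {mΩ : MeasurableSpace Ω} {P : Measure Ω} [IsProbabilityMeasure P]
    {mG mH : MeasurableSpace Ω} (hGH : mG ≤ mH) (hHF : mH ≤ mΩ)
    (A S Y0 Y1 : Ω → ℝ)
    (hA : StronglyMeasurable[mH] A) (hA01 : ∀ ω, A ω = 0 ∨ A ω = 1)
    (hS : StronglyMeasurable[mG] S) (hS01 : ∀ ω, S ω = 0 ∨ S ω = 1)
    (hY0 : MemLp Y0 2 P) (hY1 : MemLp Y1 2 P)
    (e : Ω → ℝ) (he : e = P[A|mG]) (he01 : ∀ᵐ ω ∂P, 0 < e ω ∧ e ω < 1)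
    (g1 g0 : Ω → ℝ) (hg1 : StronglyMeasurable[mG] g1) (hg0 : StronglyMeasurable[mG] g0)
    (hg : (fun ω => (1 - S ω) * (P[Y0|mH]) ω) =ᵐ[P]
      (fun ω => (1 - S ω) * (A ω * g1 ω + (1 - A ω) * g0 ω))) :
    (fun ω => (1 - S ω) * ((P[Y0|mH]) ω - (P[Y0|mG]) ω)) =ᵐ[P]
      (fun ω => (1 - S ω) * (A ω - e ω) * (g1 ω - g0 ω)) :=
  confounding_function_keyadj_general hGH hHF A S Y0 hA hA01 hS hS01 e he g1 g0 hg1 hg0 hg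
end

section
/- Suppose m₁, m₀, d₁, d₀, g₁, g₀ are 𝒢-measurable random variables with E[Y | ℋ] = A·m₁ + (1−A)·m₀, 1_{S=0}·E[Y(1) − Y(0) | ℋ] = 1_{S=0}·(A·d₁ + (1−A)·d₀), and 1_{S=0}·E[Y(0) | ℋ] = 1_{S=0}·(A·g₁ + (1−A)·g₀) almost surely. Let τ be a 𝒢-measurable random variable and assume transportability on the treated observational sample: 1_{S=0}·d₁ = 1_{S=0}·τ almost surely. Set λ = g₁ − g₀. Then 1_{S=0}·(m₁ − m₀) = 1_{S=0}·(τ + λ) almost surely. (Nonparametric identification of the confounding function by coupling the trial-identified treatment effect with the observational contrast, equation (id2).) -/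
/-!
The tower decomposition `E[Y | ℋ] = E[Y(0) | ℋ] + A·E[Y(1) − Y(0) | ℋ]` turns the three
regression identities into `A·u + (1 − A)·v = 0` with the `𝒢`-measurable functions
`u = (1 − S)(m₁ − g₁ − d₁)` and `v = (1 − S)(m₀ − g₀)`. Overlap forces `u = v = 0`: on the
`𝒢`-set `{u ≠ 0}` we have `A = 0`, so `∫ e = ∫ A = 0` there, and `e > 0` makes the set null
(symmetrically for `v` with `1 − A` and `1 − e`).
Hence `(1 − S)(m₁ − m₀) = (1 − S)(d₁ + λ) = (1 − S)(τ + λ)`.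
-/

open MeasureTheory

section
variable {Ω : Type*} {mΩ : MeasurableSpace Ω} {P : Measure Ω} [IsFiniteMeasure P]
  {mG : MeasurableSpace Ω} {A : Ω → ℝ}

theorem measure_eq_zero_of_condExp_pos (hGF : mG ≤ mΩ) (hAint : Integrable A P)
    (hpos : ∀ᵐ ω ∂P, 0 < P[A|mG] ω) {B : Set Ω} (hB : MeasurableSet[mG] B)
    (hA : ∀ᵐ ω ∂P, ω ∈ B → A ω = 0) : P B = 0 := by
  have hint : ∫ ω in B, P[A|mG] ω ∂P = 0 := by
    rw [setIntegral_condExp hGF hAint hB]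
    exact setIntegral_eq_zero_of_ae_eq_zero hA
  have hzero : P[A|mG] =ᵐ[P.restrict B] 0 :=
    (setIntegral_eq_zero_iff_of_nonneg_ae (ae_restrict_of_ae (hpos.mono fun _ h => h.le))
      integrable_condExp.integrableOn).mp hint
  have hfalse : ∀ᵐ ω ∂P.restrict B, False := by
    filter_upwards [hzero, ae_restrict_of_ae hpos] with ω hz hp
    exact hp.ne' hz
  rwa [Filter.eventually_false_iff_eq_bot, ae_eq_bot, Measure.restrict_eq_zero] at hfalse

theorem ae_eq_zero_of_condExp_pos (hGF : mG ≤ mΩ) (hAint : Integrable A P)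
    (hpos : ∀ᵐ ω ∂P, 0 < P[A|mG] ω) {f : Ω → ℝ} (hf : StronglyMeasurable[mG] f)
    (hAf : ∀ᵐ ω ∂P, A ω ≠ 0 → f ω = 0) : ∀ᵐ ω ∂P, f ω = 0 := by
  have hB : MeasurableSet[mG] {ω | f ω ≠ 0} := (hf.measurable (measurableSet_singleton 0)).compl
  have hnull := measure_eq_zero_of_condExp_pos hGF hAint hpos hB
    (hAf.mono fun ω h hω => not_not.mp (mt h hω))
  filter_upwards [measure_eq_zero_iff_ae_notMem.mp hnull] with ω hω
  exact not_not.mp hω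

theorem condExp_one_sub_s2 (hGF : mG ≤ mΩ) (hAint : Integrable A P) :
    P[fun ω => 1 - A ω|mG] =ᵐ[P] fun ω => 1 - P[A|mG] ω := by
  filter_upwards [condExp_sub (integrable_const 1) hAint mG] with ω h
  exact h.trans (by simp [condExp_const hGF])

theorem ae_eq_zero_of_mul_add_one_sub_mul_eq_zero (hGF : mG ≤ mΩ)
    (hA01 : ∀ ω, A ω = 0 ∨ A ω = 1) (hAint : Integrable A P)
    (hoverlap : ∀ᵐ ω ∂P, 0 < P[A|mG] ω ∧ P[A|mG] ω < 1) {f g : Ω → ℝ}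
    (hf : StronglyMeasurable[mG] f) (hg : StronglyMeasurable[mG] g)
    (hfg : ∀ᵐ ω ∂P, A ω * f ω + (1 - A ω) * g ω = 0) :
    (∀ᵐ ω ∂P, f ω = 0) ∧ ∀ᵐ ω ∂P, g ω = 0 := by
  constructor
  · refine ae_eq_zero_of_condExp_pos hGF hAint (hoverlap.mono fun _ h => h.1) hf ?_
    filter_upwards [hfg] with ω h hA
    simpa [(hA01 ω).resolve_left hA] using h
  · have hpos : ∀ᵐ ω ∂P, 0 < P[fun ω => 1 - A ω|mG] ω := by
      filter_upwards [condExp_one_sub_s2 hGF hAint, hoverlap] with ω h h01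
      linarith [h01.2]
    refine ae_eq_zero_of_condExp_pos hGF ((integrable_const 1).sub hAint) hpos hg ?_
    filter_upwards [hfg] with ω h hA
    simpa [(hA01 ω).resolve_right (by contrapose! hA; simp [hA])] using h

end

theorem condExp_mul_add_one_sub_mul {Ω : Type*} {mH mΩ : MeasurableSpace Ω} {P : Measure Ω}
    (hHF : mH ≤ mΩ) {A Y0 Y1 : Ω → ℝ} (hA : StronglyMeasurable[mH] A)
    (hA01 : ∀ ω, A ω = 0 ∨ A ω = 1) (hY0 : Integrable Y0 P) (hY1 : Integrable Y1 P) :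
    P[fun ω => A ω * Y1 ω + (1 - A ω) * Y0 ω|mH] =ᵐ[P]
      fun ω => P[Y0|mH] ω + A ω * P[fun ω => Y1 ω - Y0 ω|mH] ω := by
  have hdiff : Integrable (fun ω => Y1 ω - Y0 ω) P := hY1.sub hY0
  have hAdiff : Integrable (A * fun ω => Y1 ω - Y0 ω) P :=
    hdiff.bdd_mul (c := 1) (hA.mono hHF).aestronglyMeasurable
      (ae_of_all _ fun ω => by rcases hA01 ω with h | h <;> simp [h])
  have hY : (fun ω => A ω * Y1 ω + (1 - A ω) * Y0 ω) = Y0 + A * fun ω => Y1 ω - Y0 ω := by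
    funext ω; simp only [Pi.add_apply, Pi.mul_apply]; ring
  rw [hY]
  filter_upwards [condExp_add hY0 hAdiff mH,
    condExp_mul_of_stronglyMeasurable_left hA hAdiff hdiff] with ω hadd hmul
  rw [hadd, Pi.add_apply, hmul]; rfl

theorem identification_of_confounding_function_general
    {Ω : Type*} {mΩ : MeasurableSpace Ω} {P : Measure Ω} [IsProbabilityMeasure P]
    {mG mH : MeasurableSpace Ω} (hGH : mG ≤ mH) (hHF : mH ≤ mΩ)
    (A S Y0 Y1 : Ω → ℝ)
    (hA : StronglyMeasurable[mH] A) (hA01 : ∀ ω, A ω = 0 ∨ A ω = 1)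
    (hS : StronglyMeasurable[mG] S)
    (hY0 : MemLp Y0 2 P) (hY1 : MemLp Y1 2 P)
    (e : Ω → ℝ) (he : e = P[A|mG]) (he01 : ∀ᵐ ω ∂P, 0 < e ω ∧ e ω < 1)
    -- observed outcome and its conditional mean decomposition
    (Y : Ω → ℝ) (hY : Y = fun ω => A ω * Y1 ω + (1 - A ω) * Y0 ω)
    (m1 m0 d1 d0 g1 g0 : Ω → ℝ)
    (hm1 : StronglyMeasurable[mG] m1) (hm0 : StronglyMeasurable[mG] m0)
    (hd1 : StronglyMeasurable[mG] d1)
    (hg1 : StronglyMeasurable[mG] g1) (hg0 : StronglyMeasurable[mG] g0)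
    (hm : P[Y|mH] =ᵐ[P] (fun ω => A ω * m1 ω + (1 - A ω) * m0 ω))
    (hd : (fun ω => (1 - S ω) * (P[fun ω => Y1 ω - Y0 ω|mH]) ω) =ᵐ[P]
      (fun ω => (1 - S ω) * (A ω * d1 ω + (1 - A ω) * d0 ω)))
    (hg : (fun ω => (1 - S ω) * (P[Y0|mH]) ω) =ᵐ[P]
      (fun ω => (1 - S ω) * (A ω * g1 ω + (1 - A ω) * g0 ω)))
    -- transportability on the treated observational sample
    (τ : Ω → ℝ)
    (htrans : (fun ω => (1 - S ω) * d1 ω) =ᵐ[P] (fun ω => (1 - S ω) * τ ω))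
    -- confounding function
    (lam : Ω → ℝ) (hlam : lam = fun ω => g1 ω - g0 ω) :
    (fun ω => (1 - S ω) * (m1 ω - m0 ω)) =ᵐ[P]
      (fun ω => (1 - S ω) * (τ ω + lam ω)) := by
  subst hY he hlam
  have hAint : Integrable A P :=
    (integrable_const 1).mono' (hA.mono hHF).aestronglyMeasurable
      (ae_of_all _ fun ω => by rcases hA01 ω with h | h <;> simp [h])
  have hobs := condExp_mul_add_one_sub_mul hHF hA hA01 (hY0.integrable one_le_two)
    (hY1.integrable one_le_two)
  have hmix : ∀ᵐ ω ∂P, A ω * ((1 - S ω) * (m1 ω - (g1 ω + d1 ω)))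
      + (1 - A ω) * ((1 - S ω) * (m0 ω - g0 ω)) = 0 := by
    filter_upwards [hm, hd, hg, hobs] with ω hm hd hg hobs
    have hA2 : A ω * A ω = A ω := by rcases hA01 ω with h | h <;> simp [h]
    linear_combination (1 - S ω) * (hobs - hm) + A ω * hd + hg
      + (1 - S ω) * (d1 ω - d0 ω) * hA2
  obtain ⟨htreated, hcontrol⟩ := ae_eq_zero_of_mul_add_one_sub_mul_eq_zero (hGH.trans hHF) hA01
    hAint he01 ((stronglyMeasurable_const.sub hS).mul (hm1.sub (hg1.add hd1)))
    ((stronglyMeasurable_const.sub hS).mul (hm0.sub hg0)) hmix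
  filter_upwards [htreated, hcontrol, htrans] with ω h1 h0 ht
  simp only [Pi.mul_apply, Pi.sub_apply, Pi.add_apply] at h1 h0
  linear_combination h1 - h0 + ht

/-- equation (id2): coupling the trial-identified treatment effect `τ`
with the observational contrast identifies the confounding function: on `S = 0`,
`m₁ − m₀ = τ + λ` almost surely, where `λ = g₁ − g₀`. -/
theorem identification_of_confounding_function
    {Ω : Type*} {mΩ : MeasurableSpace Ω} {P : Measure Ω} [IsProbabilityMeasure P]
    {mG mH : MeasurableSpace Ω} (hGH : mG ≤ mH) (hHF : mH ≤ mΩ)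
    (A S Y0 Y1 : Ω → ℝ)
    (hA : StronglyMeasurable[mH] A) (hA01 : ∀ ω, A ω = 0 ∨ A ω = 1)
    (hS : StronglyMeasurable[mG] S) (hS01 : ∀ ω, S ω = 0 ∨ S ω = 1)
    (hY0 : MemLp Y0 2 P) (hY1 : MemLp Y1 2 P)
    (e : Ω → ℝ) (he : e = P[A|mG]) (he01 : ∀ᵐ ω ∂P, 0 < e ω ∧ e ω < 1)
    -- observed outcome and its conditional mean decomposition
    (Y : Ω → ℝ) (hY : Y = fun ω => A ω * Y1 ω + (1 - A ω) * Y0 ω)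
    (m1 m0 d1 d0 g1 g0 : Ω → ℝ)
    (hm1 : StronglyMeasurable[mG] m1) (hm0 : StronglyMeasurable[mG] m0)
    (hd1 : StronglyMeasurable[mG] d1) (hd0 : StronglyMeasurable[mG] d0)
    (hg1 : StronglyMeasurable[mG] g1) (hg0 : StronglyMeasurable[mG] g0)
    (hm : P[Y|mH] =ᵐ[P] (fun ω => A ω * m1 ω + (1 - A ω) * m0 ω))
    (hd : (fun ω => (1 - S ω) * (P[fun ω => Y1 ω - Y0 ω|mH]) ω) =ᵐ[P]
      (fun ω => (1 - S ω) * (A ω * d1 ω + (1 - A ω) * d0 ω)))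
    (hg : (fun ω => (1 - S ω) * (P[Y0|mH]) ω) =ᵐ[P]
      (fun ω => (1 - S ω) * (A ω * g1 ω + (1 - A ω) * g0 ω)))
    -- transportability on the treated observational sample
    (τ : Ω → ℝ) (hτ : StronglyMeasurable[mG] τ)
    (htrans : (fun ω => (1 - S ω) * d1 ω) =ᵐ[P] (fun ω => (1 - S ω) * τ ω))
    -- confounding function
    (lam : Ω → ℝ) (hlam : lam = fun ω => g1 ω - g0 ω) :
    (fun ω => (1 - S ω) * (m1 ω - m0 ω)) =ᵐ[P]
      (fun ω => (1 - S ω) * (τ ω + lam ω)) :=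
  identification_of_confounding_function_general hGH hHF A S Y0 Y1 hA hA01 hS hY0 hY1 e he he01 Y hY
    m1 m0 d1 d0 g1 g0 hm1 hm0 hd1 hg1 hg0 hm hd hg τ htrans lam hlam
end

section
/- (Proposition 1, conditional moment restriction.) Assume: (i) trial ignorability, 1_{S=1}·E[Y(a) | ℋ] = 1_{S=1}·E[Y(a) | 𝒢] almost surely for a = 0, 1; (ii) transportability, i.e., τ is 𝒢-measurable with 1_{S=1}·E[Y(1) − Y(0) | 𝒢] = 1_{S=1}·τ and, writing 1_{S=0}·E[Y(1) − Y(0) | ℋ] = 1_{S=0}·(A·d₁ + (1−A)·d₀) with d₁, d₀ 𝒢-measurable, 1_{S=0}·d₁ = 1_{S=0}·τ almost surely; (iii) the confounding function λ = g₁ − g₀, where g₁, g₀ are 𝒢-measurable with 1_{S=0}·E[Y(0) | ℋ] = 1_{S=0}·(A·g₁ + (1−A)·g₀) almost surely. Define H = Y − τ·A − (1−S)·λ·(A − e). Then E[H | ℋ] = E[H | 𝒢] = E[Y(0) | 𝒢] almost surely. -/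
open MeasureTheory

/-! On `{S = 1}` trial ignorability turns `E[Y(1) - Y(0) | ℋ]` into `E[Y(1) - Y(0) | 𝒢] = τ` and
`E[Y(0) | ℋ]` into `E[Y(0) | 𝒢]`, so `E[H | ℋ] = E[Y(0) | ℋ] + A·E[Y(1) - Y(0) | ℋ] - τA` collapses
to `E[Y(0) | 𝒢]`. On `{S = 0}` the treatment effect is `d₁ = τ` for the treated, which cancels `τA`,
and `E[Y(0) | ℋ] = A g₁ + (1 - A) g₀`; subtracting `λ(A - e)` leaves `g₀ + λe`, which is also
`E[Y(0) | 𝒢]` there because averaging `A g₁ + (1 - A) g₀` over `ℋ` given `𝒢` replaces `A` by `e`.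
The second equality is the tower property. -/

namespace MeasureTheory

variable {Ω : Type*} {m m' m₀ : MeasurableSpace Ω} {μ : Measure Ω}

theorem condExp_sub_of_stronglyMeasurable {E : Type*} [NormedAddCommGroup E] [NormedSpace ℝ E]
    [CompleteSpace E] (hm : m ≤ m₀) [SigmaFinite (μ.trim hm)] {f g : Ω → E}
    (hf : Integrable f μ) (hg : StronglyMeasurable[m] g) (hgi : Integrable g μ) :
    μ[fun ω => f ω - g ω|m] =ᵐ[μ] fun ω => μ[f|m] ω - g ω := by
  have h := condExp_sub hf hgi m
  rwa [condExp_of_stronglyMeasurable hm hg hgi] at h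

theorem condExp_mul_sub_condExp_eq_zero (hm : m ≤ m₀) [SigmaFinite (μ.trim hm)] {g f : Ω → ℝ}
    (hg : StronglyMeasurable[m] g) (hf : Integrable f μ)
    (hgf : Integrable (fun ω => g ω * (f ω - μ[f|m] ω)) μ) :
    μ[fun ω => g ω * (f ω - μ[f|m] ω)|m] =ᵐ[μ] 0 := by
  have hcentered : μ[fun ω => f ω - μ[f|m] ω|m] =ᵐ[μ] 0 :=
    (condExp_sub_of_stronglyMeasurable hm hf stronglyMeasurable_condExp integrable_condExp).trans
      (.of_eq (funext fun ω => sub_self _))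
  have hpull : μ[fun ω => g ω * (f ω - μ[f|m] ω)|m] =ᵐ[μ] g * μ[fun ω => f ω - μ[f|m] ω|m] :=
    condExp_mul_of_stronglyMeasurable_left hg hgf (hf.sub integrable_condExp)
  filter_upwards [hpull, hcentered] with ω hpull hzero
  rw [hpull, Pi.mul_apply, hzero, Pi.zero_apply, mul_zero]

theorem condExp_mul_add_one_sub_mul_sub (hm : m ≤ m₀) [SigmaFinite (μ.trim hm)]
    {A Y₀ Y₁ c : Ω → ℝ} {C : ℝ} (hA : StronglyMeasurable[m] A) (hAC : ∀ ω, ‖A ω‖ ≤ C)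
    (hY₀ : Integrable Y₀ μ) (hY₁ : Integrable Y₁ μ) (hc : StronglyMeasurable[m] c)
    (hci : Integrable c μ) :
    μ[fun ω => A ω * Y₁ ω + (1 - A ω) * Y₀ ω - c ω|m] =ᵐ[μ]
      fun ω => μ[Y₀|m] ω + A ω * μ[fun ω => Y₁ ω - Y₀ ω|m] ω - c ω := by
  have hAD : Integrable (fun ω => A ω * (Y₁ ω - Y₀ ω)) μ :=
    (hY₁.sub hY₀).bdd_mul (hA.mono hm).aestronglyMeasurable (ae_of_all _ hAC)
  have hsplit : (fun ω => A ω * Y₁ ω + (1 - A ω) * Y₀ ω - c ω) =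
      fun ω => Y₀ ω + A ω * (Y₁ ω - Y₀ ω) - c ω := by
    funext ω; ring
  have hsub : μ[fun ω => Y₀ ω + A ω * (Y₁ ω - Y₀ ω) - c ω|m] =ᵐ[μ]
      fun ω => μ[fun ω => Y₀ ω + A ω * (Y₁ ω - Y₀ ω)|m] ω - c ω :=
    condExp_sub_of_stronglyMeasurable hm (hY₀.add hAD) hc hci
  have hadd : μ[fun ω => Y₀ ω + A ω * (Y₁ ω - Y₀ ω)|m] =ᵐ[μ]
      μ[Y₀|m] + μ[fun ω => A ω * (Y₁ ω - Y₀ ω)|m] := condExp_add hY₀ hAD m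
  have hpull : μ[fun ω => A ω * (Y₁ ω - Y₀ ω)|m] =ᵐ[μ] A * μ[fun ω => Y₁ ω - Y₀ ω|m] :=
    condExp_mul_of_stronglyMeasurable_left hA hAD (hY₁.sub hY₀)
  rw [hsplit]
  filter_upwards [hsub, hadd, hpull] with ω hsub hadd hpull
  rw [hsub, hadd, Pi.add_apply, hpull, Pi.mul_apply]

theorem mul_condExp_sub_ae_eq_of_mul_condExp_ae_eq {m₁ m₂ : MeasurableSpace Ω} {S X Z : Ω → ℝ}
    (hX : Integrable X μ) (hZ : Integrable Z μ)
    (hXeq : (fun ω => S ω * μ[X|m₁] ω) =ᵐ[μ] fun ω => S ω * μ[X|m₂] ω)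
    (hZeq : (fun ω => S ω * μ[Z|m₁] ω) =ᵐ[μ] fun ω => S ω * μ[Z|m₂] ω) :
    (fun ω => S ω * μ[fun ω => X ω - Z ω|m₁] ω) =ᵐ[μ]
      fun ω => S ω * μ[fun ω => X ω - Z ω|m₂] ω := by
  filter_upwards [condExp_sub hX hZ m₁, condExp_sub hX hZ m₂, hXeq, hZeq] with ω h₁ h₂ hX hZ
  simp only [Pi.sub_apply] at h₁ h₂
  rw [show (fun ω => X ω - Z ω) = X - Z from rfl, h₁, h₂, mul_sub, mul_sub, hX, hZ]

theorem mul_condExp_ae_eq_of_affine (hmm' : m ≤ m') (hm' : m' ≤ m₀)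
    [SigmaFinite (μ.trim (hmm'.trans hm'))] {R A f g₁ g₀ : Ω → ℝ} {C : ℝ}
    (hR : StronglyMeasurable[m] R) (hRC : ∀ ω, ‖R ω‖ ≤ C) (hA : Integrable A μ)
    (hg₁ : StronglyMeasurable[m] g₁) (hg₀ : StronglyMeasurable[m] g₀)
    (haffine : (fun ω => R ω * μ[f|m'] ω) =ᵐ[μ]
      fun ω => R ω * (A ω * g₁ ω + (1 - A ω) * g₀ ω))
    (hint : Integrable (fun ω => R ω * (g₁ ω - g₀ ω) * (A ω - μ[A|m] ω)) μ) :
    (fun ω => R ω * μ[f|m] ω) =ᵐ[μ] fun ω => R ω * (g₀ ω + (g₁ ω - g₀ ω) * μ[A|m] ω) := by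
  have := sigmaFiniteTrim_mono (μ := μ) hm' hmm'
  have hm := hmm'.trans hm'
  have hRf : Integrable (fun ω => R ω * μ[f|m'] ω) μ :=
    integrable_condExp.bdd_mul (hR.mono hm).aestronglyMeasurable (ae_of_all _ hRC)
  have hsplit : (fun ω => R ω * (A ω * g₁ ω + (1 - A ω) * g₀ ω)) = fun ω =>
      R ω * (g₁ ω - g₀ ω) * (A ω - μ[A|m] ω) + R ω * (g₀ ω + (g₁ ω - g₀ ω) * μ[A|m] ω) := by
    funext ω; ring
  have hbase_sm : StronglyMeasurable[m] fun ω => R ω * (g₀ ω + (g₁ ω - g₀ ω) * μ[A|m] ω) :=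
    hR.mul (hg₀.add ((hg₁.sub hg₀).mul stronglyMeasurable_condExp))
  have hbase_int : Integrable (fun ω => R ω * (g₀ ω + (g₁ ω - g₀ ω) * μ[A|m] ω)) μ := by
    refine ((hRf.congr haffine).sub hint).congr (.of_eq (funext fun ω => ?_))
    simp only [Pi.sub_apply]; ring
  calc (fun ω => R ω * μ[f|m] ω)
      =ᵐ[μ] μ[fun ω => R ω * μ[f|m'] ω|m] := by
        have hpull : μ[fun ω => R ω * μ[f|m'] ω|m] =ᵐ[μ] R * μ[μ[f|m']|m] :=
          condExp_mul_of_stronglyMeasurable_left hR hRf integrable_condExp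
        filter_upwards [hpull, condExp_condExp_of_le (f := f) hmm' hm'] with ω hpull htower
        rw [hpull, Pi.mul_apply, htower]
    _ =ᵐ[μ] μ[fun ω => R ω * (g₁ ω - g₀ ω) * (A ω - μ[A|m] ω)|m]
        + μ[fun ω => R ω * (g₀ ω + (g₁ ω - g₀ ω) * μ[A|m] ω)|m] :=
        (condExp_congr_ae (haffine.trans (.of_eq hsplit))).trans (condExp_add hint hbase_int m)
    _ =ᵐ[μ] fun ω => R ω * (g₀ ω + (g₁ ω - g₀ ω) * μ[A|m] ω) := by
        have hzero : μ[fun ω => R ω * (g₁ ω - g₀ ω) * (A ω - μ[A|m] ω)|m] =ᵐ[μ] 0 :=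
          condExp_mul_sub_condExp_eq_zero hm (hR.mul (hg₁.sub hg₀)) hA hint
        filter_upwards [hzero] with ω hzero
        rw [Pi.add_apply, hzero, condExp_of_stronglyMeasurable hm hbase_sm hbase_int]
        exact zero_add _

end MeasureTheory

theorem conditional_moment_restriction_general
    {Ω : Type*} {mΩ : MeasurableSpace Ω} {P : Measure Ω} [IsProbabilityMeasure P]
    {mG mH : MeasurableSpace Ω} (hGH : mG ≤ mH) (hHF : mH ≤ mΩ)
    (A S Y0 Y1 : Ω → ℝ)
    (hA : StronglyMeasurable[mH] A) (hA01 : ∀ ω, A ω = 0 ∨ A ω = 1)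
    (hS : StronglyMeasurable[mG] S) (hS01 : ∀ ω, S ω = 0 ∨ S ω = 1)
    (hY0 : MemLp Y0 2 P) (hY1 : MemLp Y1 2 P)
    (e : Ω → ℝ) (he : e = P[A|mG])
    -- (i) trial ignorability for a = 0, 1
    (hig0 : (fun ω => S ω * (P[Y0|mH]) ω) =ᵐ[P] (fun ω => S ω * (P[Y0|mG]) ω))
    (hig1 : (fun ω => S ω * (P[Y1|mH]) ω) =ᵐ[P] (fun ω => S ω * (P[Y1|mG]) ω))
    -- (ii) transportability
    (τ : Ω → ℝ) (hτ : StronglyMeasurable[mG] τ)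
    (htransS1 : (fun ω => S ω * (P[fun ω => Y1 ω - Y0 ω|mG]) ω) =ᵐ[P]
      (fun ω => S ω * τ ω))
    (d1 d0 : Ω → ℝ)
    (hd : (fun ω => (1 - S ω) * (P[fun ω => Y1 ω - Y0 ω|mH]) ω) =ᵐ[P]
      (fun ω => (1 - S ω) * (A ω * d1 ω + (1 - A ω) * d0 ω)))
    (htransS0 : (fun ω => (1 - S ω) * d1 ω) =ᵐ[P] (fun ω => (1 - S ω) * τ ω))
    -- (iii) confounding function
    (g1 g0 : Ω → ℝ) (hg1 : StronglyMeasurable[mG] g1) (hg0 : StronglyMeasurable[mG] g0)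
    (hg : (fun ω => (1 - S ω) * (P[Y0|mH]) ω) =ᵐ[P]
      (fun ω => (1 - S ω) * (A ω * g1 ω + (1 - A ω) * g0 ω)))
    (lam : Ω → ℝ) (hlam : lam = fun ω => g1 ω - g0 ω)
    -- observed outcome and the adjusted outcome H
    (Y : Ω → ℝ) (hY : Y = fun ω => A ω * Y1 ω + (1 - A ω) * Y0 ω)
    (H : Ω → ℝ)
    (hH : H = fun ω => Y ω - τ ω * A ω - (1 - S ω) * lam ω * (A ω - e ω))
    -- regularity: integrability of the adjustment terms
    (hτA : Integrable (fun ω => τ ω * A ω) P)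
    (hlamint : Integrable (fun ω => (1 - S ω) * lam ω * (A ω - e ω)) P) :
    P[H|mH] =ᵐ[P] P[Y0|mG] ∧ P[H|mG] =ᵐ[P] P[Y0|mG] := by
  subst hlam he
  have hAbd : ∀ ω, ‖A ω‖ ≤ 1 := fun ω => by rcases hA01 ω with h | h <;> simp [h]
  have hSbd : ∀ ω, ‖1 - S ω‖ ≤ 1 := fun ω => by rcases hS01 ω with h | h <;> simp [h]
  have intY0 := hY0.integrable one_le_two
  have intY1 := hY1.integrable one_le_two
  have intA : Integrable A P := .of_bound (hA.mono hHF).aestronglyMeasurable 1 (ae_of_all _ hAbd)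
  have hadj_sm : StronglyMeasurable[mH] fun ω =>
      τ ω * A ω + (1 - S ω) * (g1 ω - g0 ω) * (A ω - P[A|mG] ω) :=
    ((hτ.mono hGH).mul hA).add ((((stronglyMeasurable_const.sub hS).mul (hg1.sub hg0)).mono hGH).mul
      (hA.sub (stronglyMeasurable_condExp.mono hGH)))
  have hH' : H = fun ω => A ω * Y1 ω + (1 - A ω) * Y0 ω
      - (τ ω * A ω + (1 - S ω) * (g1 ω - g0 ω) * (A ω - P[A|mG] ω)) := by
    rw [hH, hY]; funext ω; ring
  have hEH := condExp_mul_add_one_sub_mul_sub hHF hA hAbd intY0 intY1 hadj_sm (hτA.add hlamint)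
  rw [← hH'] at hEH
  have hdiffS1 : (fun ω => S ω * P[fun ω => Y1 ω - Y0 ω|mH] ω) =ᵐ[P] fun ω => S ω * τ ω :=
    (mul_condExp_sub_ae_eq_of_mul_condExp_ae_eq intY1 intY0 hig1 hig0).trans htransS1
  have hY0S0 : (fun ω => (1 - S ω) * P[Y0|mG] ω) =ᵐ[P]
      fun ω => (1 - S ω) * (g0 ω + (g1 ω - g0 ω) * P[A|mG] ω) :=
    mul_condExp_ae_eq_of_affine hGH hHF (stronglyMeasurable_const.sub hS) hSbd intA hg1 hg0 hg
      hlamint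
  have hmain : P[H|mH] =ᵐ[P] P[Y0|mG] := by
    filter_upwards [hEH, hig0, hdiffS1, hd, htransS0, hg, hY0S0]
      with ω hEH hig0 hdiffS1 hd htransS0 hg hY0S0
    rw [hEH]
    rcases hS01 ω with hs | hs <;> rcases hA01 ω with ha | ha <;>
      simp only [hs, ha] at hig0 hdiffS1 hd htransS0 hg hY0S0 ⊢ <;> linarith
  refine ⟨hmain, ?_⟩
  calc P[H|mG] =ᵐ[P] P[P[H|mH]|mG] := (condExp_condExp_of_le hGH hHF).symm
    _ =ᵐ[P] P[P[Y0|mG]|mG] := condExp_congr_ae hmain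
    _ = P[Y0|mG] :=
      condExp_of_stronglyMeasurable (hGH.trans hHF) stronglyMeasurable_condExp integrable_condExp

/-- Proposition 1, conditional moment restriction: under trial
ignorability, transportability, and the definition of the confounding function
`λ = g₁ − g₀`, the adjusted outcome `H = Y − τ·A − (1−S)·λ·(A − e)` satisfies
`E[H | ℋ] = E[H | 𝒢] = E[Y(0) | 𝒢]` almost surely. -/
theorem conditional_moment_restriction
    {Ω : Type*} {mΩ : MeasurableSpace Ω} {P : Measure Ω} [IsProbabilityMeasure P]
    {mG mH : MeasurableSpace Ω} (hGH : mG ≤ mH) (hHF : mH ≤ mΩ)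
    (A S Y0 Y1 : Ω → ℝ)
    (hA : StronglyMeasurable[mH] A) (hA01 : ∀ ω, A ω = 0 ∨ A ω = 1)
    (hS : StronglyMeasurable[mG] S) (hS01 : ∀ ω, S ω = 0 ∨ S ω = 1)
    (hY0 : MemLp Y0 2 P) (hY1 : MemLp Y1 2 P)
    (e : Ω → ℝ) (he : e = P[A|mG]) (he01 : ∀ᵐ ω ∂P, 0 < e ω ∧ e ω < 1)
    -- (i) trial ignorability for a = 0, 1
    (hig0 : (fun ω => S ω * (P[Y0|mH]) ω) =ᵐ[P] (fun ω => S ω * (P[Y0|mG]) ω))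
    (hig1 : (fun ω => S ω * (P[Y1|mH]) ω) =ᵐ[P] (fun ω => S ω * (P[Y1|mG]) ω))
    -- (ii) transportability
    (τ : Ω → ℝ) (hτ : StronglyMeasurable[mG] τ)
    (htransS1 : (fun ω => S ω * (P[fun ω => Y1 ω - Y0 ω|mG]) ω) =ᵐ[P]
      (fun ω => S ω * τ ω))
    (d1 d0 : Ω → ℝ) (hd1 : StronglyMeasurable[mG] d1) (hd0 : StronglyMeasurable[mG] d0)
    (hd : (fun ω => (1 - S ω) * (P[fun ω => Y1 ω - Y0 ω|mH]) ω) =ᵐ[P]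
      (fun ω => (1 - S ω) * (A ω * d1 ω + (1 - A ω) * d0 ω)))
    (htransS0 : (fun ω => (1 - S ω) * d1 ω) =ᵐ[P] (fun ω => (1 - S ω) * τ ω))
    -- (iii) confounding function
    (g1 g0 : Ω → ℝ) (hg1 : StronglyMeasurable[mG] g1) (hg0 : StronglyMeasurable[mG] g0)
    (hg : (fun ω => (1 - S ω) * (P[Y0|mH]) ω) =ᵐ[P]
      (fun ω => (1 - S ω) * (A ω * g1 ω + (1 - A ω) * g0 ω)))
    (lam : Ω → ℝ) (hlam : lam = fun ω => g1 ω - g0 ω)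
    -- observed outcome and the adjusted outcome H
    (Y : Ω → ℝ) (hY : Y = fun ω => A ω * Y1 ω + (1 - A ω) * Y0 ω)
    (H : Ω → ℝ)
    (hH : H = fun ω => Y ω - τ ω * A ω - (1 - S ω) * lam ω * (A ω - e ω))
    -- regularity: integrability of the adjustment terms
    (hτA : Integrable (fun ω => τ ω * A ω) P)
    (hlamint : Integrable (fun ω => (1 - S ω) * lam ω * (A ω - e ω)) P) :
    P[H|mH] =ᵐ[P] P[Y0|mG] ∧ P[H|mG] =ᵐ[P] P[Y0|mG] :=
  conditional_moment_restriction_general hGH hHF A S Y0 Y1 hA hA01 hS hS01 hY0 hY1 e he hig0 hig1 τ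
    hτ htransS1 d1 d0 hd htransS0 g1 g0 hg1 hg0 hg lam hlam Y hY H hH hτA hlamint
end

section
/- (Core of Theorem 3, efficiency gain by data integration.) Let (Ω, ℱ, P) be a probability space, w₀, w₁ : Ω → [0,∞) measurable weights, and u : Ω → ℝ^{p₁}, v : Ω → ℝ^{p₂} measurable with ∫ (w₀ + w₁)·(‖u‖² + ‖v‖²) dP < ∞. Define the matrices Γ_rct = ∫ w₁·u·uᵀ dP, Γ_rwd = ∫ w₀·u·uᵀ dP, Γ₁₂ = ∫ w₀·u·vᵀ dP, Γ₂ = ∫ w₀·v·vᵀ dP, and assume Γ_rct and Γ₂ are positive definite. Then: (a) Γ_rwd − Γ₁₂·Γ₂⁻¹·Γ₁₂ᵀ is positive semidefinite; (b) Γ_rwd − Γ₁₂·Γ₂⁻¹·Γ₁₂ᵀ = 0 if and only if there exists a matrix M ∈ ℝ^{p₁×p₂} with u = M·v almost everywhere with respect to the measure w₀·dP; (c) consequently, in the Loewner order, (Γ_rct + Γ_rwd − Γ₁₂·Γ₂⁻¹·Γ₁₂ᵀ)⁻¹ ≼ Γ_rct⁻¹, with equality exactly under the condition in (b). -/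
/-!
Regard the Γ's as second-moment matrices under the weighted measure `μ = w₀ · P`. The population
regression of `u` on `v` has coefficient `Γ₁₂ Γ₂⁻¹`, and its residual `r = u − Γ₁₂ Γ₂⁻¹ v` is
orthogonal to `v` (the normal equations). Hence the Schur complement `Γ_rwd − Γ₁₂ Γ₂⁻¹ Γ₁₂ᵀ` is
exactly the second-moment matrix of `r`: it is positive semidefinite, and it vanishes iff `r = 0`
`μ`-a.e., i.e. iff `u` is `μ`-a.e. a linear function of `v` (any such coefficient must be
`Γ₁₂ Γ₂⁻¹`). Part (c) then follows from `A⁻¹ − (A + S)⁻¹ = (A + S)⁻¹ (S + S A⁻¹ S) (A + S)⁻¹`.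
-/

open MeasureTheory Matrix

section CrossMoment

variable {Ω ι κ ν : Type*} [MeasurableSpace Ω] {μ : Measure Ω}

noncomputable def crossMoment (μ : Measure Ω) (f : Ω → ι → ℝ) (g : Ω → κ → ℝ) : Matrix ι κ ℝ :=
  Matrix.of fun i j => ∫ ω, f ω i * g ω j ∂μ

theorem crossMoment_transpose (f : Ω → ι → ℝ) (g : Ω → κ → ℝ) :
    (crossMoment μ f g)ᵀ = crossMoment μ g f := by
  ext i j
  simp only [crossMoment, transpose_apply, of_apply, mul_comm]

theorem crossMoment_congr_ae_left {f f' : Ω → ι → ℝ} (hf : f =ᵐ[μ] f') (g : Ω → κ → ℝ) :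
    crossMoment μ f g = crossMoment μ f' g := by
  ext i j
  exact integral_congr_ae (hf.mono fun ω h => by simp only [h])

theorem crossMoment_zero_left (g : Ω → κ → ℝ) : crossMoment μ (0 : Ω → ι → ℝ) g = 0 := by
  ext i j
  simp [crossMoment]

variable [Fintype ι] [Fintype κ]

theorem MeasureTheory.MemLp.integrable_mul_apply {f : Ω → ι → ℝ} {g : Ω → κ → ℝ}
    (hf : MemLp f 2 μ) (hg : MemLp g 2 μ) (i : ι) (j : κ) :
    Integrable (fun ω => f ω i * g ω j) μ :=
  (hf.eval i).integrable_mul (hg.eval j)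

theorem MeasureTheory.MemLp.mulVec [Fintype ν] {p : ENNReal} {f : Ω → ι → ℝ} (hf : MemLp f p μ)
    (A : Matrix ν ι ℝ) : MemLp (fun ω => A *ᵥ f ω) p μ :=
  memLp_pi_iff.2 fun k => memLp_finsetSum _ fun i _ => (hf.eval i).const_mul (A k i)

theorem crossMoment_mulVec_left [Fintype ν] {f : Ω → ι → ℝ} {g : Ω → κ → ℝ} (hf : MemLp f 2 μ)
    (hg : MemLp g 2 μ) (A : Matrix ν ι ℝ) :
    crossMoment μ (fun ω => A *ᵥ f ω) g = A * crossMoment μ f g := by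
  ext k j
  simp only [crossMoment, of_apply, mul_apply, mulVec, dotProduct, Finset.sum_mul, mul_assoc]
  rw [integral_finsetSum _ fun i _ => (hf.integrable_mul_apply hg i j).const_mul _]
  simp only [integral_const_mul]

theorem crossMoment_sub_left {f f' : Ω → ι → ℝ} {g : Ω → κ → ℝ} (hf : MemLp f 2 μ)
    (hf' : MemLp f' 2 μ) (hg : MemLp g 2 μ) :
    crossMoment μ (f - f') g = crossMoment μ f g - crossMoment μ f' g := by
  ext i j
  simp only [crossMoment, of_apply, Matrix.sub_apply, Pi.sub_apply, sub_mul]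
  exact integral_sub (hf.integrable_mul_apply hg i j) (hf'.integrable_mul_apply hg i j)

theorem dotProduct_crossMoment_mulVec {f : Ω → ι → ℝ} {g : Ω → κ → ℝ} (hf : MemLp f 2 μ)
    (hg : MemLp g 2 μ) (x : ι → ℝ) (y : κ → ℝ) :
    x ⬝ᵥ crossMoment μ f g *ᵥ y = ∫ ω, (x ⬝ᵥ f ω) * (y ⬝ᵥ g ω) ∂μ := by
  have hexpand (ω : Ω) :
      (x ⬝ᵥ f ω) * (y ⬝ᵥ g ω) = ∑ i, ∑ j, x i * y j * (f ω i * g ω j) := by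
    simp only [dotProduct, Finset.sum_mul_sum]
    exact Finset.sum_congr rfl fun i _ => Finset.sum_congr rfl fun j _ => by ring
  simp only [hexpand]
  rw [integral_finsetSum _ fun i _ => integrable_finsetSum _ fun j _ =>
    (hf.integrable_mul_apply hg i j).const_mul _]
  simp only [dotProduct, mulVec, crossMoment, of_apply, Finset.mul_sum]
  refine Finset.sum_congr rfl fun i _ => ?_
  rw [integral_finsetSum _ fun j _ => (hf.integrable_mul_apply hg i j).const_mul _]
  exact Finset.sum_congr rfl fun j _ => by rw [integral_const_mul]; ring

theorem posSemidef_crossMoment_self {f : Ω → ι → ℝ} (hf : MemLp f 2 μ) :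
    (crossMoment μ f f).PosSemidef := by
  refine .of_dotProduct_mulVec_nonneg (crossMoment_transpose f f) fun x => ?_
  rw [star_trivial, dotProduct_crossMoment_mulVec hf hf]
  exact integral_nonneg fun ω => mul_self_nonneg _

theorem crossMoment_self_eq_zero_iff {f : Ω → ι → ℝ} (hf : MemLp f 2 μ) :
    crossMoment μ f f = 0 ↔ f =ᵐ[μ] 0 := by
  refine ⟨fun h => ?_, fun h => by rw [crossMoment_congr_ae_left h, crossMoment_zero_left]⟩
  have hcoord (i : ι) : ∀ᵐ ω ∂μ, f ω i = 0 := by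
    have hi : ∫ ω, f ω i * f ω i ∂μ = 0 := congrFun₂ h i i
    rw [integral_eq_zero_iff_of_nonneg (fun ω => mul_self_nonneg _)
      (hf.integrable_mul_apply hf i i)] at hi
    exact hi.mono fun ω h => mul_self_eq_zero.1 h
  exact (ae_all_iff.2 hcoord).mono fun ω h => funext h

theorem crossMoment_sub_right {f : Ω → ι → ℝ} {g g' : Ω → κ → ℝ} (hf : MemLp f 2 μ)
    (hg : MemLp g 2 μ) (hg' : MemLp g' 2 μ) :
    crossMoment μ f (g - g') = crossMoment μ f g - crossMoment μ f g' := by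
  rw [← crossMoment_transpose, crossMoment_sub_left hg hg' hf, transpose_sub,
    crossMoment_transpose, crossMoment_transpose]

theorem crossMoment_mulVec_right [Fintype ν] {f : Ω → ι → ℝ} {g : Ω → κ → ℝ} (hf : MemLp f 2 μ)
    (hg : MemLp g 2 μ) (B : Matrix ν κ ℝ) :
    crossMoment μ f (fun ω => B *ᵥ g ω) = crossMoment μ f g * Bᵀ := by
  rw [← crossMoment_transpose, crossMoment_mulVec_left hg hf, transpose_mul,
    crossMoment_transpose]

end CrossMoment

section Regression

variable {Ω ι κ : Type*} [MeasurableSpace Ω] [Fintype ι] [Fintype κ] [DecidableEq κ]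
  {μ : Measure Ω} {f : Ω → ι → ℝ} {g : Ω → κ → ℝ}

theorem transpose_inv_crossMoment_self (μ : Measure Ω) (g : Ω → κ → ℝ) :
    ((crossMoment μ g g)⁻¹)ᵀ = (crossMoment μ g g)⁻¹ := by
  rw [transpose_nonsing_inv, crossMoment_transpose]

noncomputable def regressionMatrix (μ : Measure Ω) (f : Ω → ι → ℝ) (g : Ω → κ → ℝ) :
    Matrix ι κ ℝ :=
  crossMoment μ f g * (crossMoment μ g g)⁻¹

noncomputable def regressionResidual (μ : Measure Ω) (f : Ω → ι → ℝ) (g : Ω → κ → ℝ) :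
    Ω → ι → ℝ :=
  f - fun ω => regressionMatrix μ f g *ᵥ g ω

theorem MeasureTheory.MemLp.regressionResidual (hf : MemLp f 2 μ) (hg : MemLp g 2 μ) :
    MemLp (regressionResidual μ f g) 2 μ :=
  hf.sub (hg.mulVec _)

theorem crossMoment_regressionResidual_right_eq_zero (hf : MemLp f 2 μ) (hg : MemLp g 2 μ)
    (hG : IsUnit (crossMoment μ g g).det) :
    crossMoment μ g (regressionResidual μ f g) = 0 := by
  rw [regressionResidual, crossMoment_sub_right hg hf (hg.mulVec _),
    crossMoment_mulVec_right hg hg, regressionMatrix, transpose_mul,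
    transpose_inv_crossMoment_self, mul_nonsing_inv_cancel_left _ _ hG, crossMoment_transpose,
    sub_self]

theorem crossMoment_regressionResidual_self (hf : MemLp f 2 μ) (hg : MemLp g 2 μ)
    (hG : IsUnit (crossMoment μ g g).det) :
    crossMoment μ (regressionResidual μ f g) (regressionResidual μ f g)
      = crossMoment μ f f - crossMoment μ f g * (crossMoment μ g g)⁻¹ * (crossMoment μ f g)ᵀ := by
  have hr := hf.regressionResidual hg
  calc crossMoment μ (regressionResidual μ f g) (regressionResidual μ f g)
      = crossMoment μ f (regressionResidual μ f g)
          - regressionMatrix μ f g * crossMoment μ g (regressionResidual μ f g) := by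
        rw [← crossMoment_mulVec_left hg hr, ← crossMoment_sub_left hf (hg.mulVec _) hr]
        rfl
    _ = crossMoment μ f f - crossMoment μ f g * (crossMoment μ g g)⁻¹ * (crossMoment μ f g)ᵀ := by
        rw [crossMoment_regressionResidual_right_eq_zero hf hg hG, Matrix.mul_zero, sub_zero,
          regressionResidual, crossMoment_sub_right hf hf (hg.mulVec _),
          crossMoment_mulVec_right hf hg, regressionMatrix, transpose_mul,
          transpose_inv_crossMoment_self, crossMoment_transpose, Matrix.mul_assoc]

theorem exists_ae_eq_mulVec_iff (hg : MemLp g 2 μ) (hG : IsUnit (crossMoment μ g g).det) :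
    (∃ M : Matrix ι κ ℝ, ∀ᵐ ω ∂μ, f ω = M *ᵥ g ω) ↔ regressionResidual μ f g =ᵐ[μ] 0 := by
  refine ⟨fun ⟨M, hM⟩ => ?_, fun h =>
    ⟨regressionMatrix μ f g, h.mono fun ω hω => sub_eq_zero.1 hω⟩⟩
  have hreg : regressionMatrix μ f g = M := by
    rw [regressionMatrix, crossMoment_congr_ae_left hM, crossMoment_mulVec_left hg hg,
      mul_nonsing_inv_cancel_right _ _ hG]
  filter_upwards [hM] with ω hω
  simp [regressionResidual, hreg, hω]

theorem crossMoment_sub_mul_inv_mul_eq_zero_iff (hf : MemLp f 2 μ) (hg : MemLp g 2 μ)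
    (hG : IsUnit (crossMoment μ g g).det) :
    crossMoment μ f f - crossMoment μ f g * (crossMoment μ g g)⁻¹ * (crossMoment μ f g)ᵀ = 0 ↔
      ∃ M : Matrix ι κ ℝ, ∀ᵐ ω ∂μ, f ω = M *ᵥ g ω := by
  rw [← crossMoment_regressionResidual_self hf hg hG,
    crossMoment_self_eq_zero_iff (hf.regressionResidual hg), exists_ae_eq_mulVec_iff hg hG]

end Regression

namespace Matrix

variable {𝕜 n : Type*} [RCLike 𝕜] [Fintype n] [DecidableEq n] {A S : Matrix n n 𝕜}

open scoped ComplexOrder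

theorem PosDef.posSemidef_inv_sub_inv_add (hA : A.PosDef) (hS : S.PosSemidef) :
    (A⁻¹ - (A + S)⁻¹).PosSemidef := by
  have hAS := hA.add_posSemidef hS
  have hA' : IsUnit A.det := (isUnit_iff_isUnit_det A).1 hA.isUnit
  have hAS' : IsUnit (A + S).det := (isUnit_iff_isUnit_det _).1 hAS.isUnit
  have key : A⁻¹ - (A + S)⁻¹ = ((A + S)⁻¹)ᴴ * (S + Sᴴ * A⁻¹ * S) * (A + S)⁻¹ := by
    rw [hAS.inv.isHermitian.eq, hS.isHermitian.eq]
    calc A⁻¹ - (A + S)⁻¹ = (A + S)⁻¹ * ((A + S) - A) * A⁻¹ := by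
          rw [mul_sub, sub_mul, nonsing_inv_mul _ hAS', one_mul,
            mul_nonsing_inv_cancel_right _ _ hA']
      _ = (A + S)⁻¹ * (S * A⁻¹ * (A + S)) * (A + S)⁻¹ := by
          rw [← mul_assoc, ← mul_assoc, mul_nonsing_inv_cancel_right _ _ hAS', add_sub_cancel_left]
      _ = (A + S)⁻¹ * (S + S * A⁻¹ * S) * (A + S)⁻¹ := by
          rw [mul_add, nonsing_inv_mul_cancel_right _ _ hA']
  rw [key]
  exact (hS.add (hA.inv.posSemidef.conjTranspose_mul_mul_same S)).conjTranspose_mul_mul_same _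

theorem inv_add_eq_inv_iff (hAS : IsUnit (A + S).det) : (A + S)⁻¹ = A⁻¹ ↔ S = 0 :=
  ⟨fun h => add_eq_left.1 (inv_inj h hAS), fun h => by rw [h, add_zero]⟩

end Matrix

section WeightedMeasure

variable {Ω : Type*} [MeasurableSpace Ω] {P : Measure Ω} {w : Ω → ℝ}

theorem integral_withDensity_ofReal (hw : Measurable w) (hw0 : ∀ ω, 0 ≤ w ω) (h : Ω → ℝ) :
    ∫ ω, h ω ∂P.withDensity (fun ω => ENNReal.ofReal (w ω)) = ∫ ω, w ω * h ω ∂P := by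
  rw [integral_withDensity_eq_integral_toReal_smul hw.ennreal_ofReal
    (ae_of_all _ fun _ => ENNReal.ofReal_lt_top)]
  simp only [ENNReal.toReal_ofReal (hw0 _), smul_eq_mul]

theorem memLp_two_withDensity_ofReal_iff (hw : Measurable w) (hw0 : ∀ ω, 0 ≤ w ω) {h : Ω → ℝ}
    (hh : Measurable h) :
    MemLp h 2 (P.withDensity fun ω => ENNReal.ofReal (w ω)) ↔
      Integrable (fun ω => w ω * h ω ^ 2) P := by
  rw [memLp_two_iff_integrable_sq hh.aestronglyMeasurable,
    integrable_withDensity_iff hw.ennreal_ofReal (ae_of_all _ fun _ => ENNReal.ofReal_lt_top)]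
  simp only [ENNReal.toReal_ofReal (hw0 _), mul_comm]

end WeightedMeasure

theorem efficiency_gain_matrix_inequality_general
    {Ω : Type*} [MeasurableSpace Ω] (P : Measure Ω)
    {p₁ p₂ : ℕ}
    (w₀ w₁ : Ω → ℝ) (hw₀ : Measurable w₀)
    (hw₀0 : ∀ ω, 0 ≤ w₀ ω) (hw₁0 : ∀ ω, 0 ≤ w₁ ω)
    (u : Ω → EuclideanSpace ℝ (Fin p₁)) (v : Ω → EuclideanSpace ℝ (Fin p₂))
    (hu : Measurable u) (hv : Measurable v)
    (hint : Integrable (fun ω => (w₀ ω + w₁ ω) * (‖u ω‖ ^ 2 + ‖v ω‖ ^ 2)) P)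
    (Γrct Γrwd : Matrix (Fin p₁) (Fin p₁) ℝ) (Γ₁₂ : Matrix (Fin p₁) (Fin p₂) ℝ)
    (Γ₂ : Matrix (Fin p₂) (Fin p₂) ℝ)
    (hΓrwd : Γrwd = Matrix.of fun i j => ∫ ω, w₀ ω * (u ω i * u ω j) ∂P)
    (hΓ₁₂ : Γ₁₂ = Matrix.of fun i j => ∫ ω, w₀ ω * (u ω i * v ω j) ∂P)
    (hΓ₂ : Γ₂ = Matrix.of fun i j => ∫ ω, w₀ ω * (v ω i * v ω j) ∂P)
    (hrctPD : Γrct.PosDef) (hΓ₂PD : Γ₂.PosDef) :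
    (Γrwd - Γ₁₂ * Γ₂⁻¹ * Γ₁₂.transpose).PosSemidef ∧
    (Γrwd - Γ₁₂ * Γ₂⁻¹ * Γ₁₂.transpose = 0 ↔
      ∃ M : Matrix (Fin p₁) (Fin p₂) ℝ,
        ∀ᵐ ω ∂(P.withDensity fun ω => ENNReal.ofReal (w₀ ω)),
          ∀ i, u ω i = M.mulVec (fun j => v ω j) i) ∧
    ((Γrct⁻¹ - (Γrct + Γrwd - Γ₁₂ * Γ₂⁻¹ * Γ₁₂.transpose)⁻¹).PosSemidef ∧
      ((Γrct + Γrwd - Γ₁₂ * Γ₂⁻¹ * Γ₁₂.transpose)⁻¹ = Γrct⁻¹ ↔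
        ∃ M : Matrix (Fin p₁) (Fin p₂) ℝ,
          ∀ᵐ ω ∂(P.withDensity fun ω => ENNReal.ofReal (w₀ ω)),
            ∀ i, u ω i = M.mulVec (fun j => v ω j) i)) := by
  set μ := P.withDensity fun ω => ENNReal.ofReal (w₀ ω)
  have hmoment {m n : ℕ} (a : Ω → Fin m → ℝ) (b : Ω → Fin n → ℝ) :
      (Matrix.of fun i j => ∫ ω, w₀ ω * (a ω i * b ω j) ∂P) = crossMoment μ a b := by
    ext i j
    exact (integral_withDensity_ofReal hw₀ hw₀0 _).symm
  have hL2 {m : ℕ} (a : Ω → EuclideanSpace ℝ (Fin m)) (ha : Measurable a)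
      (hbound : ∀ ω, ‖a ω‖ ^ 2 ≤ ‖u ω‖ ^ 2 + ‖v ω‖ ^ 2) :
      MemLp (fun ω => (a ω).ofLp) 2 μ := by
    refine memLp_pi_iff.2 fun i => (memLp_two_withDensity_ofReal_iff hw₀ hw₀0 (by fun_prop)).2 <|
      hint.mono' (by fun_prop) (ae_of_all _ fun ω => ?_)
    rw [norm_mul, Real.norm_of_nonneg (hw₀0 ω), norm_pow]
    exact mul_le_mul (le_add_of_nonneg_right (hw₁0 ω))
      ((pow_le_pow_left₀ (norm_nonneg _) (PiLp.norm_apply_le _ i) 2).trans (hbound ω))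
      (by positivity) (by linarith [hw₀0 ω, hw₁0 ω])
  have hf := hL2 u hu fun ω => le_add_of_nonneg_right (sq_nonneg _)
  have hg := hL2 v hv fun ω => le_add_of_nonneg_left (sq_nonneg _)
  obtain rfl := hΓrwd.trans (hmoment _ _)
  obtain rfl := hΓ₁₂.trans (hmoment _ _)
  obtain rfl := hΓ₂.trans (hmoment _ _)
  have hG : IsUnit (crossMoment μ _ _).det := (isUnit_iff_isUnit_det _).1 hΓ₂PD.isUnit
  have hS := crossMoment_regressionResidual_self hf hg hG ▸
    posSemidef_crossMoment_self (hf.regressionResidual hg)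
  have hzero := crossMoment_sub_mul_inv_mul_eq_zero_iff hf hg hG
  simp only [funext_iff] at hzero
  rw [add_sub_assoc]
  exact ⟨hS, hzero, hrctPD.posSemidef_inv_sub_inv_add hS,
    (inv_add_eq_inv_iff ((isUnit_iff_isUnit_det _).1 (hrctPD.add_posSemidef hS).isUnit)).trans
      hzero⟩

/-- core of Theorem 3, efficiency gain by data integration:
(a) `Γ_rwd − Γ₁₂ Γ₂⁻¹ Γ₁₂ᵀ` is positive semidefinite; (b) it vanishes iff `u = M·v`
a.e. w.r.t. the weighted measure `w₀·dP` for some matrix `M`; (c) in the Loewner order,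
`(Γ_rct + Γ_rwd − Γ₁₂ Γ₂⁻¹ Γ₁₂ᵀ)⁻¹ ≼ Γ_rct⁻¹`, with equality exactly under (b). -/
theorem efficiency_gain_matrix_inequality
    {Ω : Type*} [MeasurableSpace Ω] (P : Measure Ω) [IsProbabilityMeasure P]
    {p₁ p₂ : ℕ}
    (w₀ w₁ : Ω → ℝ) (hw₀ : Measurable w₀) (hw₁ : Measurable w₁)
    (hw₀0 : ∀ ω, 0 ≤ w₀ ω) (hw₁0 : ∀ ω, 0 ≤ w₁ ω)
    (u : Ω → EuclideanSpace ℝ (Fin p₁)) (v : Ω → EuclideanSpace ℝ (Fin p₂))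
    (hu : Measurable u) (hv : Measurable v)
    (hint : Integrable (fun ω => (w₀ ω + w₁ ω) * (‖u ω‖ ^ 2 + ‖v ω‖ ^ 2)) P)
    (Γrct Γrwd : Matrix (Fin p₁) (Fin p₁) ℝ) (Γ₁₂ : Matrix (Fin p₁) (Fin p₂) ℝ)
    (Γ₂ : Matrix (Fin p₂) (Fin p₂) ℝ)
    (hΓrct : Γrct = Matrix.of fun i j => ∫ ω, w₁ ω * (u ω i * u ω j) ∂P)
    (hΓrwd : Γrwd = Matrix.of fun i j => ∫ ω, w₀ ω * (u ω i * u ω j) ∂P)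
    (hΓ₁₂ : Γ₁₂ = Matrix.of fun i j => ∫ ω, w₀ ω * (u ω i * v ω j) ∂P)
    (hΓ₂ : Γ₂ = Matrix.of fun i j => ∫ ω, w₀ ω * (v ω i * v ω j) ∂P)
    (hrctPD : Γrct.PosDef) (hΓ₂PD : Γ₂.PosDef) :
    (Γrwd - Γ₁₂ * Γ₂⁻¹ * Γ₁₂.transpose).PosSemidef ∧
    (Γrwd - Γ₁₂ * Γ₂⁻¹ * Γ₁₂.transpose = 0 ↔
      ∃ M : Matrix (Fin p₁) (Fin p₂) ℝ,
        ∀ᵐ ω ∂(P.withDensity fun ω => ENNReal.ofReal (w₀ ω)),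
          ∀ i, u ω i = M.mulVec (fun j => v ω j) i) ∧
    ((Γrct⁻¹ - (Γrct + Γrwd - Γ₁₂ * Γ₂⁻¹ * Γ₁₂.transpose)⁻¹).PosSemidef ∧
      ((Γrct + Γrwd - Γ₁₂ * Γ₂⁻¹ * Γ₁₂.transpose)⁻¹ = Γrct⁻¹ ↔
        ∃ M : Matrix (Fin p₁) (Fin p₂) ℝ,
          ∀ᵐ ω ∂(P.withDensity fun ω => ENNReal.ofReal (w₀ ω)),
            ∀ i, u ω i = M.mulVec (fun j => v ω j) i)) :=
  efficiency_gain_matrix_inequality_general P w₀ w₁ hw₀ hw₀0 hw₁0 u v hu hv hint Γrct Γrwd Γ₁₂ Γ₂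
    hΓrwd hΓ₁₂ hΓ₂ hrctPD hΓ₂PD
end

section
/- (Weighted loss decomposition underlying Remark 1.) Let W be a strictly positive ℋ-measurable random variable bounded above and below by positive constants, and define the weighted conditional expectation E_W[g | 𝒢] = E[g·W | 𝒢]/E[W | 𝒢], T = E[W | 𝒢], Ā = E_W[A | 𝒢], and the overlap weight ω = Ā·(1 − Ā). Suppose Y = μ + A·τ + (1−S)·λ·(A − e) + ε, where μ, τ, λ are 𝒢-measurable, ε ∈ L²(P) with E[ε | ℋ] = 0 a.s., and all displayed products are integrable. Then for all bounded 𝒢-measurable random variables t and l: E[ W·( Y − E_W[Y | 𝒢] − (A − Ā)·t − (1−S)·(A − Ā)·l )² ] = E[ T·ω·( (τ − t) + (1−S)·(λ − l) )² ] + E[W·ε²]. In particular, minimizing the left-hand side over (t, l) is equivalent to minimizing the overlap-weighted squared approximation error E[T·ω·((τ − t) + (1−S)·(λ − l))²]. -/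
/-!
Write the outcome as `Y = α + A β + ε` with the `G`-measurable `α = μ - (1 - S) λ e` and
`β = τ + (1 - S) λ`. Since `G`-measurable factors pull out of the weighted conditional
expectation and `E[W ε | G] = E[W E[ε | H] | G] = 0`, we get `E_W[Y | G] = α + β Ā`, so the
residual is `(A - Ā) D + ε` with `D = (τ - t) + (1 - S)(λ - l)`. Expanding the square, the cross
term `2 W (A - Ā) D ε` integrates to zero because its first factor is `H`-measurable, and
conditioning the main term on `G` gives `E[W (A - Ā)² | G] = T Ā (1 - Ā)` because `A² = A`.
-/

open MeasureTheory
open scoped ENNReal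

noncomputable def weightedCondExp {Ω : Type*} (m : MeasurableSpace Ω) {mΩ : MeasurableSpace Ω}
    (P : Measure Ω) (W f : Ω → ℝ) : Ω → ℝ :=
  fun ω => P[fun ω => f ω * W ω|m] ω / P[W|m] ω

section

variable {Ω : Type*} {mΩ : MeasurableSpace Ω} {P : Measure Ω}

lemma condExp_mul_ae_eq_zero_of_condExp_ae_eq_zero {m : MeasurableSpace Ω} {f ε : Ω → ℝ}
    (hf : StronglyMeasurable[m] f) (hεf : Integrable (ε * f) P) (hε : Integrable ε P)
    (hε0 : P[ε|m] =ᵐ[P] 0) : P[ε * f|m] =ᵐ[P] 0 := by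
  filter_upwards [condExp_mul_of_stronglyMeasurable_right hf hεf hε, hε0] with ω hpull hzero
  simp [hpull, hzero]

lemma condExp_ae_eq_zero_of_le [IsFiniteMeasure P] {m₁ m₂ : MeasurableSpace Ω}
    (h₁₂ : m₁ ≤ m₂) (h₂ : m₂ ≤ mΩ) {g : Ω → ℝ} (hg : P[g|m₂] =ᵐ[P] 0) :
    P[g|m₁] =ᵐ[P] 0 :=
  (condExp_condExp_of_le h₁₂ h₂).symm.trans
    ((condExp_congr_ae hg).trans (by rw [condExp_zero]))

lemma integral_eq_zero_of_condExp_ae_eq_zero [IsFiniteMeasure P] {m : MeasurableSpace Ω}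
    (hm : m ≤ mΩ) {g : Ω → ℝ} (hg : P[g|m] =ᵐ[P] 0) : ∫ ω, g ω ∂P = 0 := by
  rw [← integral_condExp hm, integral_congr_ae hg]
  simp only [Pi.zero_apply, integral_zero]

lemma mem_Icc_of_eq_zero_or_eq_one {x : ℝ} (h : x = 0 ∨ x = 1) : x ∈ Set.Icc (0 : ℝ) 1 := by
  rcases h with rfl | rfl <;> simp

lemma memLp_top_of_eq_zero_or_eq_one [IsFiniteMeasure P] {f : Ω → ℝ}
    (hf : AEStronglyMeasurable f P) (h01 : ∀ ω, f ω = 0 ∨ f ω = 1) : MemLp f ∞ P :=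
  memLp_of_bounded (ae_of_all P fun ω => mem_Icc_of_eq_zero_or_eq_one (h01 ω)) hf ∞

section WeightedCondExp

variable {m : MeasurableSpace Ω} {W : Ω → ℝ}

lemma stronglyMeasurable_weightedCondExp (f : Ω → ℝ) :
    StronglyMeasurable[m] (weightedCondExp m P W f) :=
  (stronglyMeasurable_condExp.measurable.div
    stronglyMeasurable_condExp.measurable).stronglyMeasurable

lemma weightedCondExp_mul_condExp (hT : ∀ᵐ ω ∂P, P[W|m] ω ≠ 0) (f : Ω → ℝ) :
    ∀ᵐ ω ∂P, weightedCondExp m P W f ω * P[W|m] ω = P[f * W|m] ω := by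
  filter_upwards [hT] with ω hTω
  exact div_mul_cancel₀ _ hTω

lemma le_condExp_of_ae_le [IsFiniteMeasure P] (hm : m ≤ mΩ) {c : ℝ} (hW : Integrable W P)
    (hcW : ∀ᵐ ω ∂P, c ≤ W ω) : ∀ᵐ ω ∂P, c ≤ P[W|m] ω := by
  have h := condExp_mono (m := m) (integrable_const c) hW hcW
  rwa [condExp_const hm] at h

lemma weightedCondExp_mem_Icc {f : Ω → ℝ} (hf : ∀ᵐ ω ∂P, f ω ∈ Set.Icc 0 1)
    (hW0 : ∀ᵐ ω ∂P, 0 ≤ W ω) (hW : Integrable W P) (hfW : Integrable (f * W) P)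
    (hT : ∀ᵐ ω ∂P, 0 < P[W|m] ω) :
    ∀ᵐ ω ∂P, weightedCondExp m P W f ω ∈ Set.Icc 0 1 := by
  have hnonneg : 0 ≤ᵐ[P] P[f * W|m] :=
    condExp_nonneg (by filter_upwards [hf, hW0] with ω hfω hWω using mul_nonneg hfω.1 hWω)
  have hle : P[f * W|m] ≤ᵐ[P] P[W|m] :=
    condExp_mono hfW hW (by
      filter_upwards [hf, hW0] with ω hfω hWω using mul_le_of_le_one_left hWω hfω.2)
  filter_upwards [hnonneg, hle, hT] with ω h0 h1 hTω
  exact ⟨div_nonneg h0 hTω.le, (div_le_one hTω).2 h1⟩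

lemma weightedCondExp_add_mul_add [IsFiniteMeasure P] {α β A ε : Ω → ℝ}
    (hα : StronglyMeasurable[m] α) (hβ : StronglyMeasurable[m] β) (hα2 : MemLp α 2 P)
    (hβ2 : MemLp β 2 P) (hAtop : MemLp A ∞ P) (hWtop : MemLp W ∞ P) (hε : Integrable ε P)
    (hεW0 : P[ε * W|m] =ᵐ[P] 0) (hT : ∀ᵐ ω ∂P, P[W|m] ω ≠ 0) :
    weightedCondExp m P W (fun ω => α ω + A ω * β ω + ε ω)
      =ᵐ[P] α + β * weightedCondExp m P W A := by
  have hW : Integrable W P := hWtop.integrable le_top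
  have hAW : Integrable (A * W) P := hW.mul_of_top_right hAtop
  have hαW : Integrable (α * W) P := (hα2.integrable one_le_two).mul_of_top_left hWtop
  have hβAW : Integrable (β * (A * W)) P :=
    (hβ2.integrable one_le_two).mul_of_top_left (hWtop.mul hAtop)
  have hεW : Integrable (ε * W) P := hε.mul_of_top_left hWtop
  have hsplit :
      (fun ω => (α ω + A ω * β ω + ε ω) * W ω) = α * W + β * (A * W) + ε * W := by
    funext ω
    simp only [Pi.add_apply, Pi.mul_apply]
    ring
  have hYW : P[fun ω => (α ω + A ω * β ω + ε ω) * W ω|m]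
      =ᵐ[P] α * P[W|m] + β * P[A * W|m] := by
    rw [hsplit]
    filter_upwards [condExp_add (hαW.add hβAW) hεW m, condExp_add hαW hβAW m,
      condExp_mul_of_stronglyMeasurable_left hα hαW hW,
      condExp_mul_of_stronglyMeasurable_left hβ hβAW hAW, hεW0] with ω h h' hα' hβ' hε'
    simp only [h, h', hα', hβ', hε', Pi.add_apply, Pi.mul_apply, Pi.zero_apply, add_zero]
  filter_upwards [hYW, hT] with ω hω hTω
  simp only [weightedCondExp, hω, Pi.add_apply, Pi.mul_apply]
  field_simp
  rfl

lemma condExp_mul_sub_weightedCondExp_sq [IsFiniteMeasure P] {A : Ω → ℝ}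
    (hA01 : ∀ ω, A ω = 0 ∨ A ω = 1) (hW : Integrable W P) (hAW : Integrable (A * W) P)
    (hT : ∀ᵐ ω ∂P, P[W|m] ω ≠ 0) (hAbar : MemLp (weightedCondExp m P W A) ∞ P) :
    P[fun ω => W ω * (A ω - weightedCondExp m P W A ω) ^ 2|m]
      =ᵐ[P] fun ω =>
        P[W|m] ω * (weightedCondExp m P W A ω * (1 - weightedCondExp m P W A ω)) := by
  set Abar := weightedCondExp m P W A
  set c : Ω → ℝ := fun ω => 1 - 2 * Abar ω
  have hAbarm : StronglyMeasurable[m] Abar := stronglyMeasurable_weightedCondExp A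
  have hcm : StronglyMeasurable[m] c := stronglyMeasurable_const.sub (hAbarm.const_mul 2)
  have hctop : MemLp c ∞ P := (memLp_const 1).sub (hAbar.const_mul 2)
  have hexpand : (fun ω => W ω * (A ω - Abar ω) ^ 2) = c * (A * W) + (Abar * Abar) * W := by
    funext ω
    rcases hA01 ω with h | h <;> simp only [c, Pi.add_apply, Pi.mul_apply, h] <;> ring
  have hcAW : Integrable (c * (A * W)) P := hAW.mul_of_top_right hctop
  have hAbar2W : Integrable ((Abar * Abar) * W) P := hW.mul_of_top_right (hAbar.mul hAbar)
  rw [hexpand]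
  filter_upwards [condExp_add hcAW hAbar2W m,
    condExp_mul_of_stronglyMeasurable_left hcm hcAW hAW,
    condExp_mul_of_stronglyMeasurable_left (hAbarm.mul hAbarm) hAbar2W hW,
    weightedCondExp_mul_condExp hT A] with ω hadd hpull hpull' hAbarT
  simp only [hadd, hpull, hpull', Pi.add_apply, Pi.mul_apply, ← hAbarT, c]
  ring

end WeightedCondExp

section Loss

variable [IsFiniteMeasure P] {mG mH : MeasurableSpace Ω}

lemma integral_mul_sq_mul_add_of_condExp_eq_zero (hGH : mG ≤ mH) (hHF : mH ≤ mΩ)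
    {W g D ε : Ω → ℝ}
    (hW : StronglyMeasurable[mH] W) (hg : StronglyMeasurable[mH] g)
    (hD : StronglyMeasurable[mG] D) (hWtop : MemLp W ∞ P) (hgtop : MemLp g ∞ P)
    (hD2 : MemLp D 2 P) (hε : MemLp ε 2 P) (hεH : P[ε|mH] =ᵐ[P] 0) :
    ∫ ω, W ω * (g ω * D ω + ε ω) ^ 2 ∂P
      = ∫ ω, P[fun ω => W ω * g ω ^ 2|mG] ω * D ω ^ 2 ∂P
        + ∫ ω, W ω * ε ω ^ 2 ∂P := by
  set K : Ω → ℝ := fun ω => W ω * g ω ^ 2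
  set F : Ω → ℝ := fun ω => 2 * W ω * g ω * D ω
  have hKtop : MemLp K ∞ P := by
    have hgg : MemLp (g * g) ∞ P := hgtop.mul hgtop
    have hK : K = W * (g * g) := by funext ω; simp only [K, Pi.mul_apply]; ring
    rw [hK]
    exact hgg.mul hWtop
  have hF2 : MemLp F 2 P := by
    have hWg : MemLp (W * g) ∞ P := hgtop.mul hWtop
    have hF : F = fun ω => 2 * (W * g * D) ω := by
      funext ω; simp only [F, Pi.mul_apply]; ring
    rw [hF]
    exact (hD2.mul hWg : MemLp (W * g * D) 2 P).const_mul 2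
  have hF : StronglyMeasurable[mH] F :=
    ((stronglyMeasurable_const.mul hW).mul hg).mul (hD.mono hGH)
  have hKDD : Integrable (K * (D * D)) P := (hD2.integrable_mul hD2).mul_of_top_right hKtop
  have hεF : Integrable (ε * F) P := hε.integrable_mul hF2
  have hWεε : Integrable (W * (ε * ε)) P := (hε.integrable_mul hε).mul_of_top_right hWtop
  have hexpand :
      (fun ω => W ω * (g ω * D ω + ε ω) ^ 2) = K * (D * D) + ε * F + W * (ε * ε) := by
    funext ω
    simp only [K, F, Pi.add_apply, Pi.mul_apply]
    ring
  have hcross : ∫ ω, (ε * F) ω ∂P = 0 :=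
    integral_eq_zero_of_condExp_ae_eq_zero hHF
      (condExp_mul_ae_eq_zero_of_condExp_ae_eq_zero hF hεF (hε.integrable one_le_two) hεH)
  have hmain : ∫ ω, (K * (D * D)) ω ∂P = ∫ ω, P[K|mG] ω * D ω ^ 2 ∂P := by
    rw [← integral_condExp (hGH.trans hHF)]
    refine integral_congr_ae ?_
    filter_upwards [condExp_mul_of_stronglyMeasurable_right (hD.mul hD) hKDD
      (hKtop.integrable le_top)] with ω hω
    simp only [hω, Pi.mul_apply, sq]
  rw [hexpand, integral_add' (hKDD.add hεF) hWεε, integral_add' hKDD hεF, hcross, hmain,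
    add_zero]
  simp only [Pi.mul_apply, sq]

lemma integral_mul_sq_sub_weightedCondExp_of_eq_add_mul_add (hGH : mG ≤ mH) (hHF : mH ≤ mΩ)
    {A W Y α β ε u : Ω → ℝ}
    (hA : StronglyMeasurable[mH] A) (hA01 : ∀ ω, A ω = 0 ∨ A ω = 1)
    (hW : StronglyMeasurable[mH] W) (hWtop : MemLp W ∞ P) (hW0 : ∀ᵐ ω ∂P, 0 ≤ W ω)
    (hT : ∀ᵐ ω ∂P, 0 < P[W|mG] ω)
    (hα : StronglyMeasurable[mG] α) (hβ : StronglyMeasurable[mG] β)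
    (hu : StronglyMeasurable[mG] u) (hα2 : MemLp α 2 P) (hβ2 : MemLp β 2 P) (hu2 : MemLp u 2 P)
    (hε : MemLp ε 2 P) (hεH : P[ε|mH] =ᵐ[P] 0)
    (hY : Y = fun ω => α ω + A ω * β ω + ε ω) :
    ∫ ω, W ω * (Y ω - weightedCondExp mG P W Y ω
        - (A ω - weightedCondExp mG P W A ω) * u ω) ^ 2 ∂P
      = ∫ ω, P[W|mG] ω * (weightedCondExp mG P W A ω * (1 - weightedCondExp mG P W A ω))
          * (β ω - u ω) ^ 2 ∂P + ∫ ω, W ω * ε ω ^ 2 ∂P := by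
  subst hY
  set Abar := weightedCondExp mG P W A
  have hWint : Integrable W P := hWtop.integrable le_top
  have hAtop : MemLp A ∞ P :=
    memLp_top_of_eq_zero_or_eq_one (hA.mono hHF).aestronglyMeasurable hA01
  have hAW : Integrable (A * W) P := hWint.mul_of_top_right hAtop
  have hT0 : ∀ᵐ ω ∂P, P[W|mG] ω ≠ 0 := hT.mono fun ω h => h.ne'
  have hAbarm : StronglyMeasurable[mG] Abar := stronglyMeasurable_weightedCondExp A
  have hAbartop : MemLp Abar ∞ P :=
    memLp_of_bounded (weightedCondExp_mem_Icc
      (ae_of_all P fun ω => mem_Icc_of_eq_zero_or_eq_one (hA01 ω)) hW0 hWint hAW hT)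
      (hAbarm.mono (hGH.trans hHF)).aestronglyMeasurable ∞
  have hεW0 : P[ε * W|mG] =ᵐ[P] 0 :=
    condExp_ae_eq_zero_of_le hGH hHF (condExp_mul_ae_eq_zero_of_condExp_ae_eq_zero hW
      ((hε.integrable one_le_two).mul_of_top_left hWtop) (hε.integrable one_le_two) hεH)
  have hresidual : ∀ᵐ ω ∂P, W ω * (α ω + A ω * β ω + ε ω
        - weightedCondExp mG P W (fun ω => α ω + A ω * β ω + ε ω) ω
        - (A ω - Abar ω) * u ω) ^ 2
      = W ω * ((A ω - Abar ω) * (β ω - u ω) + ε ω) ^ 2 := by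
    filter_upwards [weightedCondExp_add_mul_add hα hβ hα2 hβ2 hAtop hWtop
      (hε.integrable one_le_two) hεW0 hT0] with ω hω
    rw [hω]
    simp only [Pi.add_apply, Pi.mul_apply]
    ring
  rw [integral_congr_ae hresidual, integral_mul_sq_mul_add_of_condExp_eq_zero hGH hHF hW
    (g := fun ω => A ω - Abar ω) (D := fun ω => β ω - u ω) (hA.sub (hAbarm.mono hGH))
    (hβ.sub hu) hWtop (hAtop.sub hAbartop) (hβ2.sub hu2) hε hεH]
  congr 1
  refine integral_congr_ae ?_
  filter_upwards [condExp_mul_sub_weightedCondExp_sq hA01 hWint hAW hT0 hAbartop] with ω hω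
  rw [hω]

end Loss

end

theorem weighted_loss_decomposition_general
    {Ω : Type*} {mΩ : MeasurableSpace Ω} (P : Measure Ω) [IsProbabilityMeasure P]
    {mG mH : MeasurableSpace Ω} (hGH : mG ≤ mH) (hHF : mH ≤ mΩ)
    (A S : Ω → ℝ)
    (hA : StronglyMeasurable[mH] A) (hA01 : ∀ ω, A ω = 0 ∨ A ω = 1)
    (hS : StronglyMeasurable[mG] S) (hS01 : ∀ ω, S ω = 0 ∨ S ω = 1)
    (e : Ω → ℝ) (he : e = P[A|mG])
    -- the weight W, bounded above and below by positive constants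
    (W : Ω → ℝ) (hW : StronglyMeasurable[mH] W)
    (c₁ c₂ : ℝ) (hc₁ : 0 < c₁) (hWb : ∀ ω, c₁ ≤ W ω ∧ W ω ≤ c₂)
    -- structural decomposition of the outcome
    (Y μ τ lam ε : Ω → ℝ)
    (hμ : StronglyMeasurable[mG] μ) (hτ : StronglyMeasurable[mG] τ)
    (hlam : StronglyMeasurable[mG] lam)
    (hμ2 : MemLp μ 2 P) (hτ2 : MemLp τ 2 P) (hlam2 : MemLp lam 2 P)
    (hε : MemLp ε 2 P) (hεH : P[ε|mH] =ᵐ[P] 0)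
    (hY : Y = fun ω => μ ω + A ω * τ ω + (1 - S ω) * lam ω * (A ω - e ω) + ε ω)
    -- weighted conditional expectations
    (T Abar EWY : Ω → ℝ)
    (hT : T = P[W|mG])
    (hAbar : Abar = fun ω => (P[fun ω => A ω * W ω|mG]) ω / T ω)
    (hEWY : EWY = fun ω => (P[fun ω => Y ω * W ω|mG]) ω / T ω) :
    ∀ (t l : Ω → ℝ) (Ct Cl : ℝ),
      StronglyMeasurable[mG] t → StronglyMeasurable[mG] l →
      (∀ ω, |t ω| ≤ Ct) → (∀ ω, |l ω| ≤ Cl) →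
      ∫ ω, W ω * (Y ω - EWY ω - (A ω - Abar ω) * t ω
          - (1 - S ω) * (A ω - Abar ω) * l ω) ^ 2 ∂P
        = (∫ ω, T ω * (Abar ω * (1 - Abar ω)) *
              ((τ ω - t ω) + (1 - S ω) * (lam ω - l ω)) ^ 2 ∂P)
          + ∫ ω, W ω * ε ω ^ 2 ∂P := by
  intro t l Ct Cl ht hl htb hlb
  subst hT he
  obtain rfl : Abar = weightedCondExp mG P W A := hAbar
  obtain rfl : EWY = weightedCondExp mG P W Y := hEWY
  have hGF : mG ≤ mΩ := hGH.trans hHF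
  have hWtop : MemLp W ∞ P :=
    memLp_of_bounded (ae_of_all P hWb) (hW.mono hHF).aestronglyMeasurable ∞
  have hAtop : MemLp A ∞ P :=
    memLp_top_of_eq_zero_or_eq_one (hA.mono hHF).aestronglyMeasurable hA01
  have hS' : StronglyMeasurable[mG] fun ω => 1 - S ω := stronglyMeasurable_const.sub hS
  have hS'top : MemLp (fun ω => 1 - S ω) ∞ P :=
    (memLp_const 1).sub (memLp_top_of_eq_zero_or_eq_one (hS.mono hGF).aestronglyMeasurable hS01)
  have hSlam : MemLp (fun ω => (1 - S ω) * lam ω) 2 P := hlam2.mul' hS'top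
  have ht2 : MemLp t 2 P := .of_bound (ht.mono hGF).aestronglyMeasurable Ct (ae_of_all P htb)
  have hl2 : MemLp l 2 P := .of_bound (hl.mono hGF).aestronglyMeasurable Cl (ae_of_all P hlb)
  have hTpos : ∀ᵐ ω ∂P, 0 < P[W|mG] ω :=
    (le_condExp_of_ae_le hGF (hWtop.integrable le_top) (ae_of_all P fun ω => (hWb ω).1)).mono
      fun ω h => hc₁.trans_le h
  have key := integral_mul_sq_sub_weightedCondExp_of_eq_add_mul_add hGH hHF hA hA01 hW hWtop
    (ae_of_all P fun ω => hc₁.le.trans (hWb ω).1) hTpos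
    (α := fun ω => μ ω - (1 - S ω) * lam ω * P[A|mG] ω)
    (β := fun ω => τ ω + (1 - S ω) * lam ω)
    (u := fun ω => t ω + (1 - S ω) * l ω)
    (hμ.sub ((hS'.mul hlam).mul stronglyMeasurable_condExp)) (hτ.add (hS'.mul hlam))
    (ht.add (hS'.mul hl)) (hμ2.sub ((hAtop.condExp (m := mG) le_top).mul' hSlam))
    (hτ2.add hSlam) (ht2.add (hl2.mul' hS'top)) hε hεH (hY.trans (funext fun ω => by ring))
  convert key using 3 with ω
  · ring
  · funext ω
    ring

/-- weighted loss decomposition underlying Remark 1: the weighted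
squared-error loss decomposes into the overlap-weighted squared approximation error of
`(τ, λ)` by `(t, l)` plus the irreducible term `E[W·ε²]`. -/
theorem weighted_loss_decomposition
    {Ω : Type*} {mΩ : MeasurableSpace Ω} (P : Measure Ω) [IsProbabilityMeasure P]
    {mG mH : MeasurableSpace Ω} (hGH : mG ≤ mH) (hHF : mH ≤ mΩ)
    (A S : Ω → ℝ)
    (hA : StronglyMeasurable[mH] A) (hA01 : ∀ ω, A ω = 0 ∨ A ω = 1)
    (hS : StronglyMeasurable[mG] S) (hS01 : ∀ ω, S ω = 0 ∨ S ω = 1)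
    (e : Ω → ℝ) (he : e = P[A|mG]) (he01 : ∀ᵐ ω ∂P, 0 < e ω ∧ e ω < 1)
    -- the weight W, bounded above and below by positive constants
    (W : Ω → ℝ) (hW : StronglyMeasurable[mH] W)
    (c₁ c₂ : ℝ) (hc₁ : 0 < c₁) (hWb : ∀ ω, c₁ ≤ W ω ∧ W ω ≤ c₂)
    -- structural decomposition of the outcome
    (Y μ τ lam ε : Ω → ℝ)
    (hμ : StronglyMeasurable[mG] μ) (hτ : StronglyMeasurable[mG] τ)
    (hlam : StronglyMeasurable[mG] lam)
    (hμ2 : MemLp μ 2 P) (hτ2 : MemLp τ 2 P) (hlam2 : MemLp lam 2 P)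
    (hε : MemLp ε 2 P) (hεH : P[ε|mH] =ᵐ[P] 0)
    (hY : Y = fun ω => μ ω + A ω * τ ω + (1 - S ω) * lam ω * (A ω - e ω) + ε ω)
    -- weighted conditional expectations
    (T Abar EWY : Ω → ℝ)
    (hT : T = P[W|mG])
    (hAbar : Abar = fun ω => (P[fun ω => A ω * W ω|mG]) ω / T ω)
    (hEWY : EWY = fun ω => (P[fun ω => Y ω * W ω|mG]) ω / T ω) :
    ∀ (t l : Ω → ℝ) (Ct Cl : ℝ),
      StronglyMeasurable[mG] t → StronglyMeasurable[mG] l →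
      (∀ ω, |t ω| ≤ Ct) → (∀ ω, |l ω| ≤ Cl) →
      ∫ ω, W ω * (Y ω - EWY ω - (A ω - Abar ω) * t ω
          - (1 - S ω) * (A ω - Abar ω) * l ω) ^ 2 ∂P
        = (∫ ω, T ω * (Abar ω * (1 - Abar ω)) *
              ((τ ω - t ω) + (1 - S ω) * (lam ω - l ω)) ^ 2 ∂P)
          + ∫ ω, W ω * ε ω ^ 2 ∂P :=
  weighted_loss_decomposition_general P hGH hHF A S hA hA01 hS hS01 e he W hW c₁ c₂ hc₁ hWb Y μ τ
    lam ε hμ hτ hlam hμ2 hτ2 hlam2 hε hεH hY T Abar EWY hT hAbar hEWY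
end

section
/- Assume the displayed products are square-integrable. Then the five subspaces Λ⁽¹⁾, Λ̃⁽²⁾, Λ̃⁽³⁾, Λ̃⁽⁴⁾, Λ̃⁽⁵⁾ of H are mutually orthogonal: for any two distinct spaces among them and any elements h₁, h₂ of those respective spaces, E[h₁ᵀ h₂] = 0. -/
open MeasureTheory
open scoped RealInnerProductSpace ENNReal

section Aux

variable {Ω : Type*} {m : MeasurableSpace Ω} {mΩ : MeasurableSpace Ω} {P : Measure Ω}

private lemma aux_mul_int [IsFiniteMeasure P] {f g : Ω → ℝ} (hf : MemLp f 2 P)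
    (hg : MemLp g 2 P) : Integrable (fun ω => f ω * g ω) P := by
  have h : (1 : ℝ≥0∞) / 1 = 1 / 2 + 1 / 2 := by
    rw [ENNReal.add_halves, div_one]
  have := memLp_one_iff_integrable.mp (MemLp.smul (r := 1) hg hf)
  exact this

private lemma aux_smul_int {E : Type*} [NormedAddCommGroup E] [NormedSpace ℝ E]
    [IsFiniteMeasure P] {f : Ω → ℝ} {g : Ω → E} (hf : MemLp f 2 P)
    (hg : MemLp g 2 P) : Integrable (fun ω => f ω • g ω) P := by
  have h : (1 : ℝ≥0∞) / 1 = 1 / 2 + 1 / 2 := by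
    rw [ENNReal.add_halves, div_one]
  have := memLp_one_iff_integrable.mp (MemLp.smul (r := 1) hg hf)
  exact this

private lemma aux_condexp_clm {E F : Type*} [NormedAddCommGroup E] [NormedSpace ℝ E]
    [CompleteSpace E] [NormedAddCommGroup F] [NormedSpace ℝ F] [CompleteSpace F]
    [IsFiniteMeasure P] (hm : m ≤ mΩ) (L : E →L[ℝ] F) {f : Ω → E} (hf : Integrable f P) :
    P[fun ω => L (f ω)|m] =ᵐ[P] fun ω => L ((P[f|m]) ω) := by
  refine (ae_eq_condExp_of_forall_setIntegral_eq hm (L.integrable_comp hf)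
    (fun s _ _ => (L.integrable_comp integrable_condExp).integrableOn)
    (fun s hs hμs => ?_)
    (L.continuous.comp_stronglyMeasurable stronglyMeasurable_condExp).aestronglyMeasurable).symm
  rw [L.integral_comp_comm integrable_condExp.integrableOn,
    L.integral_comp_comm hf.integrableOn, setIntegral_condExp hm hf hs]

private lemma aux_int_mul_condexp [IsProbabilityMeasure P] (hm : m ≤ mΩ) {X f : Ω → ℝ}
    (hX : StronglyMeasurable[m] X) (hf : Integrable f P)
    (hXf : Integrable (fun ω => X ω * f ω) P) :
    ∫ ω, X ω * f ω ∂P = ∫ ω, X ω * (P[f|m]) ω ∂P := by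
  have h1 : P[X * f|m] =ᵐ[P] X * P[f|m] := condExp_mul_of_stronglyMeasurable_left hX hXf hf
  have key : ∫ ω, (X * f) ω ∂P = ∫ ω, (P[X * f|m]) ω ∂P := (integral_condExp hm).symm
  have key2 : ∫ ω, (P[X * f|m]) ω ∂P = ∫ ω, (X * P[f|m]) ω ∂P := integral_congr_ae h1
  exact key.trans key2

private lemma aux_orth [IsProbabilityMeasure P] (hm : m ≤ mΩ) {X f : Ω → ℝ}
    (hX : StronglyMeasurable[m] X) (hf : Integrable f P)
    (hXf : Integrable (fun ω => X ω * f ω) P) (h0 : P[f|m] =ᵐ[P] 0) :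
    ∫ ω, X ω * f ω ∂P = 0 := by
  rw [aux_int_mul_condexp hm hX hf hXf]
  have h2 : (fun ω => X ω * (P[f|m]) ω) =ᵐ[P] 0 := by
    filter_upwards [h0] with ω h; simp [h]
  rw [integral_congr_ae h2]
  simp

end Aux

/-- Theorem S2, orthogonal decomposition of the nuisance tangent space:
the five subspaces `Λ⁽¹⁾, Λ̃⁽²⁾, Λ̃⁽³⁾, Λ̃⁽⁴⁾, Λ̃⁽⁵⁾` of the Hilbert space of mean-zero
square-integrable `ℝ^p`-valued random vectors are mutually orthogonal. -/
theorem tangent_space_orthogonal_decomposition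
    {Ω : Type*} {mΩ : MeasurableSpace Ω} (P : Measure Ω) [IsProbabilityMeasure P]
    {p : ℕ} {mG mH : MeasurableSpace Ω} (hGH : mG ≤ mH) (hHF : mH ≤ mΩ)
    (ε : Ω → ℝ) (hε : MemLp ε 2 P) (hεH : P[ε|mH] =ᵐ[P] 0)
    (c₁ c₂ : ℝ) (hc₁ : 0 < c₁)
    (hvar : ∀ᵐ ω ∂P, c₁ ≤ (P[fun ω => ε ω ^ 2|mH]) ω ∧ (P[fun ω => ε ω ^ 2|mH]) ω ≤ c₂)
    (Q : Ω → ℝ) (hQmeas : StronglyMeasurable[mG] Q) (hQ2 : MemLp Q 2 P)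
    (hQ0 : ∫ ω, Q ω ∂P = 0)
    (W T : Ω → ℝ) (Tstar : ℝ) (ε₀ : Ω → ℝ)
    (hW : W = fun ω => ((P[fun ω => ε ω ^ 2|mH]) ω)⁻¹)
    (hT : T = P[W|mG]) (hTstar : Tstar = ∫ ω, (T ω)⁻¹ ∂P)
    (hε₀ : ε₀ = fun ω => (T ω)⁻¹ * W ω * ε ω + Q ω)
    (L : Fin 5 → Set (Ω → EuclideanSpace ℝ (Fin p)))
    (hL1 : L 0 = {Γ | MemLp Γ 2 P ∧ (∫ ω, Γ ω ∂P) = 0 ∧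
      P[Γ|mH] =ᵐ[P] 0 ∧ P[fun ω => ε ω • Γ ω|mH] =ᵐ[P] 0})
    (hL2 : L 1 = {g | ∃ Γs : Ω → EuclideanSpace ℝ (Fin p),
      StronglyMeasurable[mG] Γs ∧ Integrable Γs P ∧ (∫ ω, Γs ω ∂P) = 0 ∧
      MemLp g 2 P ∧ g = fun ω => (W ω * ε ω) • Γs ω})
    (hL3 : L 2 = {g | ∃ Γs : Ω → EuclideanSpace ℝ (Fin p),
      StronglyMeasurable[mG] Γs ∧ MemLp Γs 2 P ∧ (∫ ω, Γs ω ∂P) = 0 ∧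
      MemLp g 2 P ∧
      g = fun ω => Γs ω - ((Tstar * T ω)⁻¹ * (W ω * ε ω)) • (∫ ω', Q ω' • Γs ω' ∂P)})
    (hL4 : L 3 = {g | ∃ c : EuclideanSpace ℝ (Fin p), g = fun ω => ε₀ ω • c})
    (hL5 : L 4 = {Γ | MemLp Γ 2 P ∧ (∫ ω, Γ ω ∂P) = 0 ∧
      StronglyMeasurable[mH] Γ ∧ P[Γ|mG] =ᵐ[P] 0}) :
    ∀ i j : Fin 5, i ≠ j → ∀ h₁ ∈ L i, ∀ h₂ ∈ L j,
      ∫ ω, ⟪h₁ ω, h₂ ω⟫ ∂P = 0 := by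
  classical
  letI _inst : MeasurableSpace Ω := mΩ
  have hGF : mG ≤ mΩ := hGH.trans hHF
  have hεint : Integrable ε P := hε.integrable one_le_two
  have hε2int : Integrable (fun ω => ε ω ^ 2) P := hε.integrable_sq
  have hc₂ : 0 < c₂ := by
    obtain ⟨ω, h1, h2⟩ := hvar.exists
    exact hc₁.trans_le (h1.trans h2)
  -- W facts
  have hWH : StronglyMeasurable[mH] W := by
    rw [hW]; exact stronglyMeasurable_condExp.measurable.inv.stronglyMeasurable
  have hWmeas : AEStronglyMeasurable W P := (hWH.mono hHF).aestronglyMeasurable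
  have hWbdd : ∀ᵐ ω ∂P, c₂⁻¹ ≤ W ω ∧ W ω ≤ c₁⁻¹ := by
    filter_upwards [hvar] with ω hω
    simp only [hW]
    constructor
    · exact inv_anti₀ (hc₁.trans_le hω.1) hω.2
    · exact inv_anti₀ hc₁ hω.1
  have hWabs : ∀ᵐ ω ∂P, |W ω| ≤ c₁⁻¹ := by
    filter_upwards [hWbdd] with ω h
    rw [abs_of_nonneg ((inv_nonneg.mpr hc₂.le).trans h.1)]; exact h.2
  have hWint : Integrable W P :=
    Integrable.mono' (integrable_const c₁⁻¹) hWmeas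
      (by filter_upwards [hWabs] with ω h; rw [Real.norm_eq_abs]; exact h)
  have hWσ : ∀ᵐ ω ∂P, W ω * (P[fun ω => ε ω ^ 2|mH]) ω = 1 := by
    filter_upwards [hvar] with ω h
    simp only [hW]
    exact inv_mul_cancel₀ (ne_of_gt (hc₁.trans_le h.1))
  -- T facts
  have hTG : StronglyMeasurable[mG] T := by rw [hT]; exact stronglyMeasurable_condExp
  have hTmeas : AEStronglyMeasurable T P := (hTG.mono hGF).aestronglyMeasurable
  have hTbdd : ∀ᵐ ω ∂P, c₂⁻¹ ≤ T ω ∧ T ω ≤ c₁⁻¹ := by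
    have h1 : (fun _ : Ω => c₂⁻¹) ≤ᵐ[P] W := by
      filter_upwards [hWbdd] with ω h; exact h.1
    have h2 : W ≤ᵐ[P] fun _ : Ω => c₁⁻¹ := by
      filter_upwards [hWbdd] with ω h; exact h.2
    have l1 := condExp_mono (m := mG) (μ := P) (integrable_const _) hWint h1
    have l2 := condExp_mono (m := mG) (μ := P) hWint (integrable_const _) h2
    rw [condExp_const hGF] at l1 l2
    rw [hT]
    filter_upwards [l1, l2] with ω ha hb
    exact ⟨ha, hb⟩
  have hTpos : ∀ᵐ ω ∂P, 0 < T ω := by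
    filter_upwards [hTbdd] with ω h
    exact lt_of_lt_of_le (inv_pos.mpr hc₂) h.1
  have hTinv_bdd : ∀ᵐ ω ∂P, c₁ ≤ (T ω)⁻¹ ∧ (T ω)⁻¹ ≤ c₂ := by
    filter_upwards [hTbdd, hTpos] with ω h hpos
    constructor
    · rw [← inv_inv c₁]
      exact inv_anti₀ hpos h.2
    · rw [← inv_inv c₂]
      exact inv_anti₀ (inv_pos.mpr hc₂) h.1
  have hTinv_abs : ∀ᵐ ω ∂P, |(T ω)⁻¹| ≤ c₂ := by
    filter_upwards [hTinv_bdd] with ω h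
    rw [abs_of_nonneg (hc₁.le.trans h.1)]; exact h.2
  have hTinv_meas : AEStronglyMeasurable (fun ω => (T ω)⁻¹) P :=
    (hTG.mono hGF).measurable.inv.aestronglyMeasurable
  have hTinv_int : Integrable (fun ω => (T ω)⁻¹) P :=
    Integrable.mono' (integrable_const c₂) hTinv_meas
      (by filter_upwards [hTinv_abs] with ω h; rw [Real.norm_eq_abs]; exact h)
  have hTstar_pos : 0 < Tstar := by
    rw [hTstar]
    have hmono := integral_mono_ae (μ := P) (integrable_const c₁) hTinv_int
      (by filter_upwards [hTinv_bdd] with ω h; exact h.1)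
    simp only [integral_const, measure_univ, ENNReal.toReal_one, one_smul, probReal_univ] at hmono
    linarith
  have hTstar_ne : Tstar ≠ 0 := ne_of_gt hTstar_pos
  -- bounded multiplier: T⁻¹ * W
  have hb1meas : AEStronglyMeasurable (fun ω => (T ω)⁻¹ * W ω) P := hTinv_meas.mul hWmeas
  have hb1abs : ∀ᵐ ω ∂P, |(T ω)⁻¹ * W ω| ≤ c₂ * c₁⁻¹ := by
    filter_upwards [hTinv_abs, hWabs] with ω h1 h2
    rw [abs_mul]
    exact mul_le_mul h1 h2 (abs_nonneg _) hc₂.le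
  -- projection helpers
  have hprojL2 : ∀ (F : Ω → EuclideanSpace ℝ (Fin p)), MemLp F 2 P → ∀ i : Fin p,
      MemLp (fun ω => F ω i) 2 P := by
    intro F hF i
    have := (EuclideanSpace.proj (𝕜 := ℝ) i).comp_memLp' (μ := P) hF
    simpa [Function.comp_def] using this
  have hprojSM : ∀ (m' : MeasurableSpace Ω) (F : Ω → EuclideanSpace ℝ (Fin p)),
      StronglyMeasurable[m'] F → ∀ i : Fin p, StronglyMeasurable[m'] (fun ω => F ω i) := by
    intro m' F hF i
    have := (EuclideanSpace.proj (𝕜 := ℝ) i).continuous.comp_stronglyMeasurable hF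
    simpa using this
  have hproj0 : ∀ (F : Ω → EuclideanSpace ℝ (Fin p)), Integrable F P → (∫ ω, F ω ∂P) = 0 →
      ∀ i : Fin p, ∫ ω, F ω i ∂P = 0 := by
    intro F hF h0 i
    have h := ((EuclideanSpace.proj (𝕜 := ℝ) i).integral_comp_comm (μ := P) hF).symm
    rw [h0] at h
    simpa using h.symm
  have hprojInt : ∀ (F : Ω → EuclideanSpace ℝ (Fin p)), Integrable F P → ∀ i : Fin p,
      Integrable (fun ω => F ω i) P := by
    intro F hF i
    have := (EuclideanSpace.proj (𝕜 := ℝ) i).integrable_comp (μ := P) hF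
    simpa [Function.comp] using this
  have hce0 : ∀ (m' : MeasurableSpace Ω), m' ≤ mΩ → ∀ (F : Ω → EuclideanSpace ℝ (Fin p)),
      Integrable F P → P[F|m'] =ᵐ[P] 0 → ∀ i : Fin p,
      P[fun ω => F ω i|m'] =ᵐ[P] 0 := by
    intro m' hm' F hF h0 i
    have heq : (fun ω => F ω i) = fun ω => (EuclideanSpace.proj (𝕜 := ℝ) i) (F ω) := by
      funext ω; simp
    rw [heq]
    refine (aux_condexp_clm hm' (EuclideanSpace.proj (𝕜 := ℝ) i) hF).trans ?_
    filter_upwards [h0] with ω hω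
    simp only [hω]
    simp
  -- bounded multiplication
  have hbmul : ∀ (b f : Ω → ℝ) (C : ℝ), AEStronglyMeasurable b P → (∀ᵐ ω ∂P, |b ω| ≤ C) →
      Integrable f P → Integrable (fun ω => b ω * f ω) P := by
    intro b f C hb hC hf
    exact hf.bdd_mul hb (by filter_upwards [hC] with ω h; rw [Real.norm_eq_abs]; exact h)
  -- reduction to components
  have hcomp : ∀ (f g : Ω → EuclideanSpace ℝ (Fin p)),
      (∀ i, Integrable (fun ω => f ω i * g ω i) P) →
      (∀ i, ∫ ω, f ω i * g ω i ∂P = 0) → ∫ ω, ⟪f ω, g ω⟫ ∂P = 0 := by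
    intro f g hint hz
    have he : ∀ ω, ⟪f ω, g ω⟫ = ∑ i, f ω i * g ω i := by
      intro ω
      rw [PiLp.inner_apply]
      congr 1
      funext j; simp [mul_comm]
    simp_rw [he]
    rw [integral_finset_sum Finset.univ (fun i _ => hint i)]
    exact Finset.sum_eq_zero fun i _ => hz i
  -- the key double-conditioning computation
  have claimS : ∀ g : Ω → ℝ, StronglyMeasurable[mG] g → Integrable g P →
      Integrable (fun ω => (T ω)⁻¹ * W ω ^ 2 * ε ω ^ 2 * g ω) P →
      ∫ ω, (T ω)⁻¹ * W ω ^ 2 * ε ω ^ 2 * g ω ∂P = ∫ ω, g ω ∂P := by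
    intro g hgG hgint hbig
    have hXH : StronglyMeasurable[mH] (fun ω => (T ω)⁻¹ * W ω ^ 2 * g ω) :=
      (((hTG.mono hGH).measurable.inv.mul (hWH.measurable.pow_const 2)).mul
        (hgG.mono hGH).measurable).stronglyMeasurable
    have e1 : (fun ω => (T ω)⁻¹ * W ω ^ 2 * ε ω ^ 2 * g ω)
        = fun ω => ((T ω)⁻¹ * W ω ^ 2 * g ω) * ε ω ^ 2 := by funext ω; ring
    rw [e1] at hbig ⊢
    rw [aux_int_mul_condexp hHF hXH hε2int hbig]
    have e2 : (fun ω => ((T ω)⁻¹ * W ω ^ 2 * g ω) * (P[fun ω => ε ω ^ 2|mH]) ω)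
        =ᵐ[P] fun ω => ((T ω)⁻¹ * g ω) * W ω := by
      filter_upwards [hWσ] with ω h
      have h2 : W ω ^ 2 * (P[fun ω => ε ω ^ 2|mH]) ω = W ω := by
        rw [sq, mul_assoc, h, mul_one]
      calc (T ω)⁻¹ * W ω ^ 2 * g ω * (P[fun ω => ε ω ^ 2|mH]) ω
          = (T ω)⁻¹ * g ω * (W ω ^ 2 * (P[fun ω => ε ω ^ 2|mH]) ω) := by ring
        _ = (T ω)⁻¹ * g ω * W ω := by rw [h2]
    rw [integral_congr_ae e2]
    have hXG : StronglyMeasurable[mG] (fun ω => (T ω)⁻¹ * g ω) :=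
      (hTG.measurable.inv.mul hgG.measurable).stronglyMeasurable
    have hintB : Integrable (fun ω => ((T ω)⁻¹ * g ω) * W ω) P := by
      have := hbmul (fun ω => (T ω)⁻¹ * W ω) g (c₂ * c₁⁻¹) hb1meas hb1abs hgint
      have e3 : (fun ω => ((T ω)⁻¹ * W ω) * g ω) = fun ω => ((T ω)⁻¹ * g ω) * W ω := by
        funext ω; ring
      rwa [e3] at this
    rw [aux_int_mul_condexp hGF hXG hWint hintB, ← hT]
    have e4 : (fun ω => ((T ω)⁻¹ * g ω) * T ω) =ᵐ[P] g := by
      filter_upwards [hTpos] with ω h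
      field_simp
    rw [integral_congr_ae e4]
  -- ε₀ is square integrable
  have hb1L2top : MemLp (fun ω => (T ω)⁻¹ * W ω) ∞ P :=
    memLp_top_of_bound hb1meas (c₂ * c₁⁻¹)
      (by filter_upwards [hb1abs] with ω h; rwa [Real.norm_eq_abs])
  have hε₀2 : MemLp ε₀ 2 P := by
    rw [hε₀]
    refine MemLp.add ?_ hQ2
    have := MemLp.smul (r := 2) hε hb1L2top
    have e : (fun ω => (T ω)⁻¹ * W ω) • ε = fun ω => (T ω)⁻¹ * W ω * ε ω := by
      funext ω; simp [Pi.smul_apply', smul_eq_mul]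
    rwa [e] at this
  have hε₀c2 : ∀ c : EuclideanSpace ℝ (Fin p), MemLp (fun ω => ε₀ ω • c) 2 P := by
    intro c
    have := MemLp.smul (r := 2) (f := fun _ : Ω => c) (φ := ε₀)
      (memLp_top_const c) hε₀2
    exact this
  -- symmetry reduction
  suffices main : ∀ i j : Fin 5, i < j → ∀ h₁ ∈ L i, ∀ h₂ ∈ L j,
      ∫ ω, ⟪h₁ ω, h₂ ω⟫ ∂P = 0 by
    intro i j hij h₁ h1m h₂ h2m
    rcases lt_or_gt_of_ne hij with h | h
    · exact main i j h h₁ h1m h₂ h2m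
    · have hsymm := main j i h h₂ h2m h₁ h1m
      rw [← hsymm]
      congr 1
      funext ω
      exact real_inner_comm _ _
  intro i j hij h₁ h1m h₂ h2m
  fin_cases i <;> fin_cases j <;> (try exact absurd hij (by decide))
  case _ => -- (0,1)
    replace h1m : h₁ ∈ L 0 := h1m
    replace h2m : h₂ ∈ L 1 := h2m
    rw [hL1] at h1m
    rw [hL2] at h2m
    obtain ⟨hΓ2, hΓ0, hΓH, hΓεH⟩ := h1m
    obtain ⟨Γs, hΓsG, hΓsint, hΓs0, hg2, rfl⟩ := h2m
    refine hcomp _ _ (fun i => aux_mul_int (hprojL2 _ hΓ2 i) (hprojL2 _ hg2 i)) (fun i => ?_)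
    have e : (fun ω => h₁ ω i * ((W ω * ε ω) • Γs ω) i)
        = fun ω => (W ω * Γs ω i) * (ε ω * h₁ ω i) := by
      funext ω; simp only [PiLp.smul_apply, smul_eq_mul]; ring
    rw [e]
    have hf : Integrable (fun ω => ε ω * h₁ ω i) P := aux_mul_int hε (hprojL2 _ hΓ2 i)
    have hX : StronglyMeasurable[mH] (fun ω => W ω * Γs ω i) :=
      (hWH.measurable.mul ((hprojSM mG Γs hΓsG i).mono hGH).measurable).stronglyMeasurable
    have hXf : Integrable (fun ω => (W ω * Γs ω i) * (ε ω * h₁ ω i)) P := by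
      have h' := aux_mul_int (hprojL2 _ hΓ2 i) (hprojL2 _ hg2 i)
      rwa [e] at h'
    have h0 : P[fun ω => ε ω * h₁ ω i|mH] =ᵐ[P] 0 := by
      have h' := hce0 mH hHF (fun ω => ε ω • h₁ ω) (aux_smul_int hε hΓ2) hΓεH i
      have e3 : (fun ω => (ε ω • h₁ ω) i) = fun ω => ε ω * h₁ ω i := by
        funext ω; simp only [PiLp.smul_apply, smul_eq_mul]
      rwa [e3] at h'
    exact aux_orth hHF hX hf hXf h0
  case _ => -- (0,2)
    replace h1m : h₁ ∈ L 0 := h1m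
    replace h2m : h₂ ∈ L 2 := h2m
    rw [hL1] at h1m
    rw [hL3] at h2m
    obtain ⟨hΓ2, hΓ0, hΓH, hΓεH⟩ := h1m
    obtain ⟨Γs, hΓsG, hΓs2, hΓs0, hg2, rfl⟩ := h2m
    refine hcomp _ _ (fun i => aux_mul_int (hprojL2 _ hΓ2 i) (hprojL2 _ hg2 i)) (fun i => ?_)
    have h0ε : P[fun ω => ε ω * h₁ ω i|mH] =ᵐ[P] 0 := by
      have h' := hce0 mH hHF (fun ω => ε ω • h₁ ω) (aux_smul_int hε hΓ2) hΓεH i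
      have e3 : (fun ω => (ε ω • h₁ ω) i) = fun ω => ε ω * h₁ ω i := by
        funext ω; simp only [PiLp.smul_apply, smul_eq_mul]
      rwa [e3] at h'
    set A := ∫ ω', Q ω' • Γs ω' ∂P with hA
    have e : (fun ω => h₁ ω i * (Γs ω - ((Tstar * T ω)⁻¹ * (W ω * ε ω)) • A) i)
        = fun ω => Γs ω i * h₁ ω i
          - (Tstar⁻¹ * A i) * (((T ω)⁻¹ * W ω) * (ε ω * h₁ ω i)) := by
      funext ω; simp only [PiLp.sub_apply, PiLp.smul_apply, smul_eq_mul]; ring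
    have int1 : Integrable (fun ω => Γs ω i * h₁ ω i) P :=
      aux_mul_int (hprojL2 _ hΓs2 i) (hprojL2 _ hΓ2 i)
    have intb : Integrable (fun ω => ((T ω)⁻¹ * W ω) * (ε ω * h₁ ω i)) P :=
      hbmul _ _ _ hb1meas hb1abs (aux_mul_int hε (hprojL2 _ hΓ2 i))
    have z1 : ∫ ω, Γs ω i * h₁ ω i ∂P = 0 :=
      aux_orth hHF ((hprojSM mG Γs hΓsG i).mono hGH)
        ((hprojL2 _ hΓ2 i).integrable one_le_two) int1
        (hce0 mH hHF h₁ (hΓ2.integrable one_le_two) hΓH i)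
    have z2 : ∫ ω, ((T ω)⁻¹ * W ω) * (ε ω * h₁ ω i) ∂P = 0 :=
      aux_orth hHF ((hTG.mono hGH).measurable.inv.mul hWH.measurable).stronglyMeasurable
        (aux_mul_int hε (hprojL2 _ hΓ2 i)) intb h0ε
    rw [e, integral_sub int1 (intb.const_mul _), z1, integral_const_mul, z2]
    simp
  case _ => -- (0,3)
    replace h1m : h₁ ∈ L 0 := h1m
    replace h2m : h₂ ∈ L 3 := h2m
    rw [hL1] at h1m
    rw [hL4] at h2m
    obtain ⟨hΓ2, hΓ0, hΓH, hΓεH⟩ := h1m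
    obtain ⟨c, rfl⟩ := h2m
    refine hcomp _ _ (fun i => aux_mul_int (hprojL2 _ hΓ2 i) (hprojL2 _ (hε₀c2 c) i))
      (fun i => ?_)
    have h0ε : P[fun ω => ε ω * h₁ ω i|mH] =ᵐ[P] 0 := by
      have h' := hce0 mH hHF (fun ω => ε ω • h₁ ω) (aux_smul_int hε hΓ2) hΓεH i
      have e3 : (fun ω => (ε ω • h₁ ω) i) = fun ω => ε ω * h₁ ω i := by
        funext ω; simp only [PiLp.smul_apply, smul_eq_mul]
      rwa [e3] at h'
    have e : (fun ω => h₁ ω i * (ε₀ ω • c) i)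
        = fun ω => (c i * ((T ω)⁻¹ * W ω)) * (ε ω * h₁ ω i) + (c i * Q ω) * h₁ ω i := by
      funext ω; simp only [PiLp.smul_apply, smul_eq_mul, hε₀]; ring
    have intA : Integrable (fun ω => (c i * ((T ω)⁻¹ * W ω)) * (ε ω * h₁ ω i)) P := by
      have h' := (hbmul _ _ _ hb1meas hb1abs (aux_mul_int hε (hprojL2 _ hΓ2 i))).const_mul (c i)
      simpa only [← mul_assoc] using h'
    have intB : Integrable (fun ω => (c i * Q ω) * h₁ ω i) P := by
      have h' := (aux_mul_int hQ2 (hprojL2 _ hΓ2 i)).const_mul (c i)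
      simpa only [← mul_assoc] using h'
    have zA : ∫ ω, (c i * ((T ω)⁻¹ * W ω)) * (ε ω * h₁ ω i) ∂P = 0 :=
      aux_orth hHF
        (measurable_const.mul ((hTG.mono hGH).measurable.inv.mul hWH.measurable)).stronglyMeasurable
        (aux_mul_int hε (hprojL2 _ hΓ2 i)) intA h0ε
    have zB : ∫ ω, (c i * Q ω) * h₁ ω i ∂P = 0 :=
      aux_orth hHF (measurable_const.mul (hQmeas.mono hGH).measurable).stronglyMeasurable
        ((hprojL2 _ hΓ2 i).integrable one_le_two) intB
        (hce0 mH hHF h₁ (hΓ2.integrable one_le_two) hΓH i)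
    rw [e, integral_add intA intB, zA, zB, add_zero]
  case _ => -- (0,4)
    replace h1m : h₁ ∈ L 0 := h1m
    replace h2m : h₂ ∈ L 4 := h2m
    rw [hL1] at h1m
    rw [hL5] at h2m
    obtain ⟨hΓ2, hΓ0, hΓH, hΓεH⟩ := h1m
    obtain ⟨hΓ'2, hΓ'0, hΓ'H, hΓ'G⟩ := h2m
    refine hcomp _ _ (fun i => aux_mul_int (hprojL2 _ hΓ2 i) (hprojL2 _ hΓ'2 i)) (fun i => ?_)
    have e : (fun ω => h₁ ω i * h₂ ω i) = fun ω => h₂ ω i * h₁ ω i := by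
      funext ω; ring
    have intA : Integrable (fun ω => h₂ ω i * h₁ ω i) P :=
      aux_mul_int (hprojL2 _ hΓ'2 i) (hprojL2 _ hΓ2 i)
    rw [e]
    exact aux_orth hHF (hprojSM mH h₂ hΓ'H i) ((hprojL2 _ hΓ2 i).integrable one_le_two) intA
      (hce0 mH hHF h₁ (hΓ2.integrable one_le_two) hΓH i)
  case _ => -- (1,2)
    replace h1m : h₁ ∈ L 1 := h1m
    replace h2m : h₂ ∈ L 2 := h2m
    rw [hL2] at h1m
    rw [hL3] at h2m
    obtain ⟨Γ1, hΓ1G, hΓ1int, hΓ10, hg1, rfl⟩ := h1m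
    obtain ⟨Γ2, hΓ2G, hΓ22, hΓ20, hg2, rfl⟩ := h2m
    refine hcomp _ _ (fun i => aux_mul_int (hprojL2 _ hg1 i) (hprojL2 _ hg2 i)) (fun i => ?_)
    set A := ∫ ω', Q ω' • Γ2 ω' ∂P with hA
    have e : (fun ω => ((W ω * ε ω) • Γ1 ω) i *
          (Γ2 ω - ((Tstar * T ω)⁻¹ * (W ω * ε ω)) • A) i)
        = fun ω => (W ω * Γ1 ω i * Γ2 ω i) * ε ω
          - (Tstar⁻¹ * A i) * ((T ω)⁻¹ * W ω ^ 2 * ε ω ^ 2 * Γ1 ω i) := by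
      funext ω; simp only [PiLp.sub_apply, PiLp.smul_apply, smul_eq_mul]; ring
    have int1 : Integrable (fun ω => (W ω * Γ1 ω i * Γ2 ω i) * ε ω) P := by
      have h' := aux_mul_int (hprojL2 _ hg1 i) (hprojL2 _ hΓ22 i)
      have e1 : (fun ω => ((W ω * ε ω) • Γ1 ω) i * Γ2 ω i)
          = fun ω => (W ω * Γ1 ω i * Γ2 ω i) * ε ω := by
        funext ω; simp only [PiLp.smul_apply, smul_eq_mul]; ring
      rwa [e1] at h'
    have intS : Integrable (fun ω => (T ω)⁻¹ * W ω ^ 2 * ε ω ^ 2 * Γ1 ω i) P := by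
      have h' := hbmul _ _ _ hb1meas hb1abs (aux_mul_int hε (hprojL2 _ hg1 i))
      have e2 : (fun ω => ((T ω)⁻¹ * W ω) * (ε ω * ((W ω * ε ω) • Γ1 ω) i))
          = fun ω => (T ω)⁻¹ * W ω ^ 2 * ε ω ^ 2 * Γ1 ω i := by
        funext ω; simp only [PiLp.smul_apply, smul_eq_mul]; ring
      rwa [e2] at h'
    have z1 : ∫ ω, (W ω * Γ1 ω i * Γ2 ω i) * ε ω ∂P = 0 :=
      aux_orth hHF
        ((hWH.measurable.mul ((hprojSM mG Γ1 hΓ1G i).mono hGH).measurable).mul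
          ((hprojSM mG Γ2 hΓ2G i).mono hGH).measurable).stronglyMeasurable
        hεint int1 hεH
    rw [e, integral_sub int1 (intS.const_mul _), z1, integral_const_mul,
      claimS (fun ω => Γ1 ω i) (hprojSM mG Γ1 hΓ1G i) (hprojInt Γ1 hΓ1int i) intS,
      hproj0 Γ1 hΓ1int hΓ10 i]
    simp
  case _ => -- (1,3)
    replace h1m : h₁ ∈ L 1 := h1m
    replace h2m : h₂ ∈ L 3 := h2m
    rw [hL2] at h1m
    rw [hL4] at h2m
    obtain ⟨Γ1, hΓ1G, hΓ1int, hΓ10, hg1, rfl⟩ := h1m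
    obtain ⟨c, rfl⟩ := h2m
    refine hcomp _ _ (fun i => aux_mul_int (hprojL2 _ hg1 i) (hprojL2 _ (hε₀c2 c) i))
      (fun i => ?_)
    have e : (fun ω => ((W ω * ε ω) • Γ1 ω) i * (ε₀ ω • c) i)
        = fun ω => c i * ((T ω)⁻¹ * W ω ^ 2 * ε ω ^ 2 * Γ1 ω i)
          + (c i * (W ω * Q ω * Γ1 ω i)) * ε ω := by
      funext ω; simp only [PiLp.smul_apply, smul_eq_mul, hε₀]; ring
    have intS : Integrable (fun ω => (T ω)⁻¹ * W ω ^ 2 * ε ω ^ 2 * Γ1 ω i) P := by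
      have h' := hbmul _ _ _ hb1meas hb1abs (aux_mul_int hε (hprojL2 _ hg1 i))
      have e2 : (fun ω => ((T ω)⁻¹ * W ω) * (ε ω * ((W ω * ε ω) • Γ1 ω) i))
          = fun ω => (T ω)⁻¹ * W ω ^ 2 * ε ω ^ 2 * Γ1 ω i := by
        funext ω; simp only [PiLp.smul_apply, smul_eq_mul]; ring
      rwa [e2] at h'
    have intB : Integrable (fun ω => (c i * (W ω * Q ω * Γ1 ω i)) * ε ω) P := by
      have h' := (aux_mul_int hQ2 (hprojL2 _ hg1 i)).const_mul (c i)
      have e3 : (fun ω => c i * (Q ω * ((W ω * ε ω) • Γ1 ω) i))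
          = fun ω => (c i * (W ω * Q ω * Γ1 ω i)) * ε ω := by
        funext ω; simp only [PiLp.smul_apply, smul_eq_mul]; ring
      rwa [e3] at h'
    have zB : ∫ ω, (c i * (W ω * Q ω * Γ1 ω i)) * ε ω ∂P = 0 :=
      aux_orth hHF
        (measurable_const.mul ((hWH.measurable.mul (hQmeas.mono hGH).measurable).mul
          ((hprojSM mG Γ1 hΓ1G i).mono hGH).measurable)).stronglyMeasurable
        hεint intB hεH
    rw [e, integral_add (intS.const_mul _) intB, integral_const_mul,
      claimS (fun ω => Γ1 ω i) (hprojSM mG Γ1 hΓ1G i) (hprojInt Γ1 hΓ1int i) intS,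
      hproj0 Γ1 hΓ1int hΓ10 i, zB]
    simp
  case _ => -- (1,4)
    replace h1m : h₁ ∈ L 1 := h1m
    replace h2m : h₂ ∈ L 4 := h2m
    rw [hL2] at h1m
    rw [hL5] at h2m
    obtain ⟨Γ1, hΓ1G, hΓ1int, hΓ10, hg1, rfl⟩ := h1m
    obtain ⟨hΓ'2, hΓ'0, hΓ'H, hΓ'G⟩ := h2m
    refine hcomp _ _ (fun i => aux_mul_int (hprojL2 _ hg1 i) (hprojL2 _ hΓ'2 i)) (fun i => ?_)
    have e : (fun ω => ((W ω * ε ω) • Γ1 ω) i * h₂ ω i)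
        = fun ω => (W ω * Γ1 ω i * h₂ ω i) * ε ω := by
      funext ω; simp only [PiLp.smul_apply, smul_eq_mul]; ring
    have int1 : Integrable (fun ω => (W ω * Γ1 ω i * h₂ ω i) * ε ω) P := by
      have h' := aux_mul_int (hprojL2 _ hg1 i) (hprojL2 _ hΓ'2 i)
      rwa [e] at h'
    rw [e]
    exact aux_orth hHF
      ((hWH.measurable.mul ((hprojSM mG Γ1 hΓ1G i).mono hGH).measurable).mul
        (hprojSM mH h₂ hΓ'H i).measurable).stronglyMeasurable
      hεint int1 hεH
  case _ => -- (2,3)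
    replace h1m : h₁ ∈ L 2 := h1m
    replace h2m : h₂ ∈ L 3 := h2m
    rw [hL3] at h1m
    rw [hL4] at h2m
    obtain ⟨Γ3, hΓ3G, hΓ32, hΓ30, hg1, rfl⟩ := h1m
    obtain ⟨c, rfl⟩ := h2m
    refine hcomp _ _ (fun i => aux_mul_int (hprojL2 _ hg1 i) (hprojL2 _ (hε₀c2 c) i))
      (fun i => ?_)
    set A := ∫ ω', Q ω' • Γ3 ω' ∂P with hA
    have haAi : A i = ∫ ω, Q ω * Γ3 ω i ∂P := by
      have h' := (EuclideanSpace.proj (𝕜 := ℝ) i).integral_comp_comm (μ := P)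
        (aux_smul_int hQ2 hΓ32)
      simpa [smul_eq_mul] using h'.symm
    have e : (fun ω => (Γ3 ω - ((Tstar * T ω)⁻¹ * (W ω * ε ω)) • A) i * (ε₀ ω • c) i)
        = fun ω => (c i * ((T ω)⁻¹ * W ω * Γ3 ω i)) * ε ω
          + c i * (Q ω * Γ3 ω i)
          - (c i * A i * Tstar⁻¹) * ((T ω)⁻¹ * W ω ^ 2 * ε ω ^ 2 * (T ω)⁻¹)
          - (c i * A i * Tstar⁻¹ * ((T ω)⁻¹ * W ω * Q ω)) * ε ω := by
      funext ω; simp only [PiLp.sub_apply, PiLp.smul_apply, smul_eq_mul, hε₀]; ring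
    have int1 : Integrable (fun ω => (c i * ((T ω)⁻¹ * W ω * Γ3 ω i)) * ε ω) P := by
      have h' := (hbmul _ _ _ hb1meas hb1abs (aux_mul_int hε (hprojL2 _ hΓ32 i))).const_mul (c i)
      have e1 : (fun ω => c i * (((T ω)⁻¹ * W ω) * (ε ω * Γ3 ω i)))
          = fun ω => (c i * ((T ω)⁻¹ * W ω * Γ3 ω i)) * ε ω := by funext ω; ring
      rwa [e1] at h'
    have int2 : Integrable (fun ω => c i * (Q ω * Γ3 ω i)) P :=
      (aux_mul_int hQ2 (hprojL2 _ hΓ32 i)).const_mul (c i)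
    have intBIG3 : Integrable (fun ω => (T ω)⁻¹ * W ω ^ 2 * ε ω ^ 2 * (T ω)⁻¹) P := by
      have hmeas2 : AEStronglyMeasurable (fun ω => ((T ω)⁻¹ * W ω) * ((T ω)⁻¹ * W ω)) P :=
        hb1meas.mul hb1meas
      have habs2 : ∀ᵐ ω ∂P, |((T ω)⁻¹ * W ω) * ((T ω)⁻¹ * W ω)| ≤ (c₂ * c₁⁻¹) * (c₂ * c₁⁻¹) := by
        filter_upwards [hb1abs] with ω h
        rw [abs_mul]
        exact mul_le_mul h h (abs_nonneg _) ((abs_nonneg _).trans h)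
      have h' := hbmul _ (fun ω => ε ω ^ 2) _ hmeas2 habs2 hε2int
      have e2 : (fun ω => (((T ω)⁻¹ * W ω) * ((T ω)⁻¹ * W ω)) * ε ω ^ 2)
          = fun ω => (T ω)⁻¹ * W ω ^ 2 * ε ω ^ 2 * (T ω)⁻¹ := by funext ω; ring
      rwa [e2] at h'
    have int4 : Integrable
        (fun ω => (c i * A i * Tstar⁻¹ * ((T ω)⁻¹ * W ω * Q ω)) * ε ω) P := by
      have h' := (hbmul _ _ _ hb1meas hb1abs (aux_mul_int hQ2 hε)).const_mul
        (c i * A i * Tstar⁻¹)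
      have e3 : (fun ω => c i * A i * Tstar⁻¹ * (((T ω)⁻¹ * W ω) * (Q ω * ε ω)))
          = fun ω => (c i * A i * Tstar⁻¹ * ((T ω)⁻¹ * W ω * Q ω)) * ε ω := by
        funext ω; ring
      rwa [e3] at h'
    have z1 : ∫ ω, (c i * ((T ω)⁻¹ * W ω * Γ3 ω i)) * ε ω ∂P = 0 :=
      aux_orth hHF
        (measurable_const.mul (((hTG.mono hGH).measurable.inv.mul hWH.measurable).mul
          ((hprojSM mG Γ3 hΓ3G i).mono hGH).measurable)).stronglyMeasurable
        hεint int1 hεH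
    have z4 : ∫ ω, (c i * A i * Tstar⁻¹ * ((T ω)⁻¹ * W ω * Q ω)) * ε ω ∂P = 0 :=
      aux_orth hHF
        (measurable_const.mul (((hTG.mono hGH).measurable.inv.mul hWH.measurable).mul
          (hQmeas.mono hGH).measurable)).stronglyMeasurable
        hεint int4 hεH
    have s1 := integral_sub ((int1.add int2).sub
      (intBIG3.const_mul (c i * A i * Tstar⁻¹))) int4
    have s2 := integral_sub (int1.add int2) (intBIG3.const_mul (c i * A i * Tstar⁻¹))
    have s3 := integral_add int1 int2
    simp only [Pi.sub_apply, Pi.add_apply] at s1 s2 s3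
    rw [e, s1, s2, s3, z1, z4, integral_const_mul, integral_const_mul,
      claimS (fun ω => (T ω)⁻¹) (hTG.measurable.inv.stronglyMeasurable) hTinv_int intBIG3,
      ← hTstar, ← haAi]
    field_simp
    ring
  case _ => -- (2,4)
    replace h1m : h₁ ∈ L 2 := h1m
    replace h2m : h₂ ∈ L 4 := h2m
    rw [hL3] at h1m
    rw [hL5] at h2m
    obtain ⟨Γ3, hΓ3G, hΓ32, hΓ30, hg1, rfl⟩ := h1m
    obtain ⟨hΓ'2, hΓ'0, hΓ'H, hΓ'G⟩ := h2m
    refine hcomp _ _ (fun i => aux_mul_int (hprojL2 _ hg1 i) (hprojL2 _ hΓ'2 i)) (fun i => ?_)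
    set A := ∫ ω', Q ω' • Γ3 ω' ∂P with hA
    have e : (fun ω => (Γ3 ω - ((Tstar * T ω)⁻¹ * (W ω * ε ω)) • A) i * h₂ ω i)
        = fun ω => Γ3 ω i * h₂ ω i
          - (Tstar⁻¹ * A i) * (((T ω)⁻¹ * W ω * h₂ ω i) * ε ω) := by
      funext ω; simp only [PiLp.sub_apply, PiLp.smul_apply, smul_eq_mul]; ring
    have int1 : Integrable (fun ω => Γ3 ω i * h₂ ω i) P :=
      aux_mul_int (hprojL2 _ hΓ32 i) (hprojL2 _ hΓ'2 i)
    have int2 : Integrable (fun ω => ((T ω)⁻¹ * W ω * h₂ ω i) * ε ω) P := by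
      have h' := hbmul _ _ _ hb1meas hb1abs (aux_mul_int hε (hprojL2 _ hΓ'2 i))
      have e2 : (fun ω => ((T ω)⁻¹ * W ω) * (ε ω * h₂ ω i))
          = fun ω => ((T ω)⁻¹ * W ω * h₂ ω i) * ε ω := by funext ω; ring
      rwa [e2] at h'
    have z1 : ∫ ω, Γ3 ω i * h₂ ω i ∂P = 0 :=
      aux_orth hGF (hprojSM mG Γ3 hΓ3G i) ((hprojL2 _ hΓ'2 i).integrable one_le_two) int1
        (hce0 mG hGF h₂ (hΓ'2.integrable one_le_two) hΓ'G i)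
    have z2 : ∫ ω, ((T ω)⁻¹ * W ω * h₂ ω i) * ε ω ∂P = 0 :=
      aux_orth hHF
        (((hTG.mono hGH).measurable.inv.mul hWH.measurable).mul
          (hprojSM mH h₂ hΓ'H i).measurable).stronglyMeasurable
        hεint int2 hεH
    rw [e, integral_sub int1 (int2.const_mul _), z1, integral_const_mul, z2]
    simp
  case _ => -- (3,4)
    replace h1m : h₁ ∈ L 3 := h1m
    replace h2m : h₂ ∈ L 4 := h2m
    rw [hL4] at h1m
    rw [hL5] at h2m
    obtain ⟨c, rfl⟩ := h1m
    obtain ⟨hΓ'2, hΓ'0, hΓ'H, hΓ'G⟩ := h2m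
    refine hcomp _ _ (fun i => aux_mul_int (hprojL2 _ (hε₀c2 c) i) (hprojL2 _ hΓ'2 i))
      (fun i => ?_)
    have e : (fun ω => (ε₀ ω • c) i * h₂ ω i)
        = fun ω => (c i * ((T ω)⁻¹ * W ω * h₂ ω i)) * ε ω + (c i * Q ω) * h₂ ω i := by
      funext ω; simp only [PiLp.smul_apply, smul_eq_mul, hε₀]; ring
    have intA : Integrable (fun ω => (c i * ((T ω)⁻¹ * W ω * h₂ ω i)) * ε ω) P := by
      have h' := (hbmul _ _ _ hb1meas hb1abs (aux_mul_int hε (hprojL2 _ hΓ'2 i))).const_mul (c i)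
      have e2 : (fun ω => c i * (((T ω)⁻¹ * W ω) * (ε ω * h₂ ω i)))
          = fun ω => (c i * ((T ω)⁻¹ * W ω * h₂ ω i)) * ε ω := by funext ω; ring
      rwa [e2] at h'
    have intB : Integrable (fun ω => (c i * Q ω) * h₂ ω i) P := by
      have h' := (aux_mul_int hQ2 (hprojL2 _ hΓ'2 i)).const_mul (c i)
      simpa only [← mul_assoc] using h'
    have zA : ∫ ω, (c i * ((T ω)⁻¹ * W ω * h₂ ω i)) * ε ω ∂P = 0 :=
      aux_orth hHF
        (measurable_const.mul (((hTG.mono hGH).measurable.inv.mul hWH.measurable).mul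
          (hprojSM mH h₂ hΓ'H i).measurable)).stronglyMeasurable
        hεint intA hεH
    have zB : ∫ ω, (c i * Q ω) * h₂ ω i ∂P = 0 :=
      aux_orth hGF (measurable_const.mul hQmeas.measurable).stronglyMeasurable
        ((hprojL2 _ hΓ'2 i).integrable one_le_two) intB
        (hce0 mG hGF h₂ (hΓ'2.integrable one_le_two) hΓ'G i)
    rw [e, integral_add intA intB, zA, zB, add_zero]
end

section
/- (One direction of Theorem S3, the influence function space.) Let c be an ℋ-measurable ℝ^p-valued random variable with E[c | 𝒢] = 0 a.s. and c·ε ∈ H. Then c·ε is orthogonal to every element of each of the five subspaces Λ⁽¹⁾, Λ̃⁽²⁾, Λ̃⁽³⁾, Λ̃⁽⁴⁾, Λ̃⁽⁵⁾; that is, E[(c·ε)ᵀ h] = 0 for every h in any of these spaces. -/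
/-!
Two conditional-expectation identities carry the argument. Since `E[ε | ℋ] = 0`, the vector
`c ε` is orthogonal to every square-integrable `ℋ`-measurable `Γ`, because
`E[⟪c ε, Γ⟫] = E[⟪c, Γ⟫ E[ε | ℋ]]`; this handles `Λ̃⁽⁵⁾`, the `Γ*` part of `Λ̃⁽³⁾` and the `Q` part
of `ε₀`. Since `W = E[ε² | ℋ]⁻¹` and `c` is `ℋ`-measurable, `E[W ε² c | ℋ] = c`, so by the tower
property `E[W ε² c | 𝒢] = E[c | 𝒢] = 0`; as `⟪c ε, (W ε) a⟫ = ⟪a, W ε² c⟫`, the vector `c ε` is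
orthogonal to `W ε` times any `𝒢`-measurable `a`, which handles `Λ̃⁽²⁾` and the remaining parts of
`Λ̃⁽³⁾` and `ε₀` (the bounds on `E[ε² | ℋ]` bound `W` and `T⁻¹`, which gives integrability).
For `Λ⁽¹⁾`, pull `c` out of `E[ε Γ | ℋ] = 0`.
-/

open MeasureTheory
open scoped RealInnerProductSpace ENNReal

section ConditionalExpectation

variable {Ω : Type*} {m m' mΩ : MeasurableSpace Ω} {μ : Measure Ω}

theorem MeasureTheory.MemLp.integrable_inner {E : Type*} [NormedAddCommGroup E]
    [InnerProductSpace ℝ E] {f g : Ω → E} (hf : MemLp f 2 μ) (hg : MemLp g 2 μ) :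
    Integrable (fun ω => ⟪f ω, g ω⟫) μ :=
  (hf.norm.integrable_mul hg.norm).mono' (hf.1.inner hg.1)
    (.of_forall fun ω => by simpa using norm_inner_le_norm (𝕜 := ℝ) (f ω) (g ω))

theorem memLp_top_inv_of_le {f : Ω → ℝ} {a : ℝ} (hf : AEStronglyMeasurable f μ) (ha : 0 < a)
    (hle : ∀ᵐ ω ∂μ, a ≤ f ω) : MemLp (fun ω => (f ω)⁻¹) ∞ μ := by
  refine memLp_top_of_bound hf.aemeasurable.inv.aestronglyMeasurable a⁻¹ ?_
  filter_upwards [hle] with ω h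
  rw [norm_inv, Real.norm_of_nonneg (ha.le.trans h)]
  exact inv_anti₀ ha h

theorem ae_const_le_condExp [IsFiniteMeasure μ] (hm : m ≤ mΩ) {f : Ω → ℝ} {a : ℝ}
    (hf : Integrable f μ) (hle : ∀ᵐ ω ∂μ, a ≤ f ω) : ∀ᵐ ω ∂μ, a ≤ μ[f|m] ω := by
  have h := condExp_mono (m := m) (integrable_const a) hf hle
  rwa [condExp_const hm] at h

theorem memLp_top_inv_condExp_of_le [IsFiniteMeasure μ] (hm : m ≤ mΩ) {f : Ω → ℝ} {a : ℝ}
    (hf : Integrable f μ) (ha : 0 < a) (hle : ∀ᵐ ω ∂μ, a ≤ f ω) :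
    MemLp (fun ω => (μ[f|m] ω)⁻¹) ∞ μ :=
  memLp_top_inv_of_le (stronglyMeasurable_condExp.mono hm).aestronglyMeasurable ha
    (ae_const_le_condExp hm hf hle)

theorem integral_bilin_eq_zero_of_condExp_eq_zero {E F G : Type*}
    [NormedAddCommGroup E] [NormedSpace ℝ E] [CompleteSpace E]
    [NormedAddCommGroup F] [NormedSpace ℝ F]
    [NormedAddCommGroup G] [NormedSpace ℝ G] [CompleteSpace G]
    [IsFiniteMeasure μ] (B : F →L[ℝ] E →L[ℝ] G) (hm : m ≤ mΩ) {f : Ω → F} {g : Ω → E}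
    (hf : StronglyMeasurable[m] f) (hfg : Integrable (fun ω => B (f ω) (g ω)) μ)
    (hg : Integrable g μ) (hg0 : μ[g|m] =ᵐ[μ] 0) :
    ∫ ω, B (f ω) (g ω) ∂μ = 0 := by
  rw [← integral_condExp hm]
  refine integral_eq_zero_of_ae ?_
  filter_upwards [condExp_bilin_of_stronglyMeasurable_left B hf hfg hg, hg0] with ω h h0
  simp [h, h0]

theorem integral_mul_eq_zero_of_condExp_eq_zero [IsFiniteMeasure μ] (hm : m ≤ mΩ)
    {f g : Ω → ℝ} (hf : StronglyMeasurable[m] f) (hfg : Integrable (fun ω => f ω * g ω) μ)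
    (hg : Integrable g μ) (hg0 : μ[g|m] =ᵐ[μ] 0) :
    ∫ ω, f ω * g ω ∂μ = 0 :=
  integral_bilin_eq_zero_of_condExp_eq_zero (.mul ℝ ℝ) hm hf hfg hg hg0

theorem integral_inner_eq_zero_of_condExp_eq_zero [IsFiniteMeasure μ] {E : Type*}
    [NormedAddCommGroup E] [InnerProductSpace ℝ E] [CompleteSpace E] (hm : m ≤ mΩ)
    {f g : Ω → E} (hf : StronglyMeasurable[m] f) (hfg : Integrable (fun ω => ⟪f ω, g ω⟫) μ)
    (hg : Integrable g μ) (hg0 : μ[g|m] =ᵐ[μ] 0) :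
    ∫ ω, ⟪f ω, g ω⟫ ∂μ = 0 :=
  integral_bilin_eq_zero_of_condExp_eq_zero (innerSL ℝ : E →L[ℝ] E →L[ℝ] ℝ) hm hf hfg hg hg0

theorem condExp_mul_smul_of_mul_condExp_eq_one {E : Type*} [NormedAddCommGroup E]
    [NormedSpace ℝ E] [CompleteSpace E] {W X : Ω → ℝ} {c : Ω → E}
    (hW : StronglyMeasurable[m] W) (hc : StronglyMeasurable[m] c) (hX : Integrable X μ)
    (hWX : ∀ᵐ ω ∂μ, W ω * μ[X|m] ω = 1) (hint : Integrable (fun ω => (W ω * X ω) • c ω) μ) :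
    μ[fun ω => (W ω * X ω) • c ω|m] =ᵐ[μ] c := by
  have hXWc : (fun ω => (W ω * X ω) • c ω) = X • (W • c) := by
    funext ω
    rw [Pi.smul_apply', Pi.smul_apply', smul_smul, mul_comm]
  rw [hXWc] at hint ⊢
  filter_upwards [condExp_smul_of_aestronglyMeasurable_right hX hint
    (hW.smul hc).aestronglyMeasurable, hWX] with ω h h1
  rw [h, Pi.smul_apply', Pi.smul_apply', smul_smul, mul_comm, h1, one_smul]

theorem integrable_mul_sq_smul {E : Type*} [NormedAddCommGroup E] [NormedSpace ℝ E]
    {W ε : Ω → ℝ} {c : Ω → E} (hW : MemLp W ∞ μ) (hε : MemLp ε 2 μ)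
    (hcε : MemLp (fun ω => ε ω • c ω) 2 μ) :
    Integrable (fun ω => (W ω * ε ω ^ 2) • c ω) μ :=
  ((memLp_one_iff_integrable.1 (hcε.smul hε)).smul_of_top_right hW).congr
    (.of_forall fun ω => by simp only [Pi.smul_apply', smul_smul, pow_two])

theorem condExp_mul_sq_smul_eq_zero [IsFiniteMeasure μ] {E : Type*} [NormedAddCommGroup E]
    [NormedSpace ℝ E] [CompleteSpace E] (hmm' : m ≤ m') (hm' : m' ≤ mΩ)
    {W ε : Ω → ℝ} {c : Ω → E} (hW : StronglyMeasurable[m'] W)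
    (hWε : ∀ᵐ ω ∂μ, W ω * μ[fun ω => ε ω ^ 2|m'] ω = 1) (hε : MemLp ε 2 μ)
    (hc : StronglyMeasurable[m'] c) (hξ : Integrable (fun ω => (W ω * ε ω ^ 2) • c ω) μ)
    (hc0 : μ[c|m] =ᵐ[μ] 0) :
    μ[fun ω => (W ω * ε ω ^ 2) • c ω|m] =ᵐ[μ] 0 :=
  (condExp_condExp_of_le hmm' hm').symm.trans <| (condExp_congr_ae
    (condExp_mul_smul_of_mul_condExp_eq_one hW hc hε.integrable_sq hWε hξ)).trans hc0

end ConditionalExpectation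

section Orthogonality

variable {Ω : Type*} {m m' mΩ : MeasurableSpace Ω} {μ : Measure Ω} [IsFiniteMeasure μ]
  {E : Type*} [NormedAddCommGroup E] [InnerProductSpace ℝ E]
  {ε W : Ω → ℝ} {c : Ω → E}

theorem integral_inner_smul_eq_zero_of_condExp_smul_eq_zero [CompleteSpace E] (hm : m ≤ mΩ)
    (hc : StronglyMeasurable[m] c) (hε : MemLp ε 2 μ) (hcε : MemLp (fun ω => ε ω • c ω) 2 μ)
    {Γ : Ω → E} (hΓ : MemLp Γ 2 μ) (hεΓ : μ[fun ω => ε ω • Γ ω|m] =ᵐ[μ] 0) :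
    ∫ ω, ⟪ε ω • c ω, Γ ω⟫ ∂μ = 0 := by
  have hpt : ∀ ω, ⟪ε ω • c ω, Γ ω⟫ = ⟪c ω, ε ω • Γ ω⟫ := fun ω => by
    rw [real_inner_smul_left, real_inner_smul_right]
  simp_rw [hpt] at hcε ⊢
  refine integral_inner_eq_zero_of_condExp_eq_zero hm hc ?_
    (memLp_one_iff_integrable.1 (hΓ.smul hε)) hεΓ
  simpa only [hpt] using hcε.integrable_inner hΓ

theorem integral_inner_smul_eq_zero_of_stronglyMeasurable (hm : m ≤ mΩ) (hε : Integrable ε μ)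
    (hε0 : μ[ε|m] =ᵐ[μ] 0) (hc : StronglyMeasurable[m] c)
    (hcε : MemLp (fun ω => ε ω • c ω) 2 μ) {Γ : Ω → E} (hΓ : StronglyMeasurable[m] Γ)
    (hΓ2 : MemLp Γ 2 μ) :
    ∫ ω, ⟪ε ω • c ω, Γ ω⟫ ∂μ = 0 := by
  have hpt : ∀ ω, ⟪ε ω • c ω, Γ ω⟫ = ⟪c ω, Γ ω⟫ * ε ω := fun ω => by
    rw [real_inner_smul_left, mul_comm]
  have hint := hcε.integrable_inner hΓ2
  simp_rw [hpt] at hint ⊢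
  exact integral_mul_eq_zero_of_condExp_eq_zero hm (hc.inner hΓ) hint hε hε0

theorem integral_inner_smul_mul_smul_eq_zero [CompleteSpace E] (hm : m ≤ mΩ)
    (hξ : Integrable (fun ω => (W ω * ε ω ^ 2) • c ω) μ)
    (hξ0 : μ[fun ω => (W ω * ε ω ^ 2) • c ω|m] =ᵐ[μ] 0)
    (hcε : MemLp (fun ω => ε ω • c ω) 2 μ) {Γ : Ω → E} (hΓ : StronglyMeasurable[m] Γ)
    (hg : MemLp (fun ω => (W ω * ε ω) • Γ ω) 2 μ) :
    ∫ ω, ⟪ε ω • c ω, (W ω * ε ω) • Γ ω⟫ ∂μ = 0 := by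
  have hpt : ∀ ω, ⟪ε ω • c ω, (W ω * ε ω) • Γ ω⟫ = ⟪Γ ω, (W ω * ε ω ^ 2) • c ω⟫ := fun ω => by
    rw [real_inner_smul_left, real_inner_smul_right, real_inner_smul_right, real_inner_comm]
    ring
  have hint := hcε.integrable_inner hg
  simp_rw [hpt] at hint ⊢
  exact integral_inner_eq_zero_of_condExp_eq_zero hm hΓ hint hξ hξ0

theorem integral_inner_smul_sub_smul_eq_zero [CompleteSpace E] (hmm' : m ≤ m') (hm' : m' ≤ mΩ)
    (hε : Integrable ε μ) (hε0 : μ[ε|m'] =ᵐ[μ] 0) (hc : StronglyMeasurable[m'] c)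
    (hcε : MemLp (fun ω => ε ω • c ω) 2 μ)
    (hξ : Integrable (fun ω => (W ω * ε ω ^ 2) • c ω) μ)
    (hξ0 : μ[fun ω => (W ω * ε ω ^ 2) • c ω|m] =ᵐ[μ] 0)
    {a : Ω → ℝ} (ha : StronglyMeasurable[m] a) (v : E) {Γ : Ω → E}
    (hΓ : StronglyMeasurable[m] Γ) (hΓ2 : MemLp Γ 2 μ)
    (hg : MemLp (fun ω => Γ ω - (a ω * (W ω * ε ω)) • v) 2 μ) :
    ∫ ω, ⟪ε ω • c ω, Γ ω - (a ω * (W ω * ε ω)) • v⟫ ∂μ = 0 := by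
  have hS : MemLp (fun ω => (a ω * (W ω * ε ω)) • v) 2 μ :=
    (hΓ2.sub hg).ae_eq (.of_forall fun ω => sub_sub_cancel _ _)
  have hΓ0 : ∫ ω, ⟪ε ω • c ω, Γ ω⟫ ∂μ = 0 :=
    integral_inner_smul_eq_zero_of_stronglyMeasurable hm' hε hε0 hc hcε (hΓ.mono hmm') hΓ2
  have hS0 : ∫ ω, ⟪ε ω • c ω, (a ω * (W ω * ε ω)) • v⟫ ∂μ = 0 := by
    have hpt : ∀ ω, ⟪ε ω • c ω, (a ω * (W ω * ε ω)) • v⟫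
        = ⟪a ω • v, (W ω * ε ω ^ 2) • c ω⟫ := fun ω => by
      rw [real_inner_smul_left, real_inner_smul_right, real_inner_smul_left,
        real_inner_smul_right, real_inner_comm]
      ring
    have hint := hcε.integrable_inner hS
    simp_rw [hpt] at hint ⊢
    exact integral_inner_eq_zero_of_condExp_eq_zero (hmm'.trans hm')
      (ha.smul stronglyMeasurable_const) hint hξ hξ0
  simp_rw [inner_sub_right]
  rw [integral_sub (hcε.integrable_inner hΓ2) (hcε.integrable_inner hS), hΓ0, hS0, sub_zero]

theorem integral_inner_smul_add_smul_eq_zero [CompleteSpace E] (hmm' : m ≤ m') (hm' : m' ≤ mΩ)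
    (hε : Integrable ε μ) (hε0 : μ[ε|m'] =ᵐ[μ] 0) (hc : StronglyMeasurable[m'] c)
    (hcε : MemLp (fun ω => ε ω • c ω) 2 μ)
    (hξ : Integrable (fun ω => (W ω * ε ω ^ 2) • c ω) μ)
    (hξ0 : μ[fun ω => (W ω * ε ω ^ 2) • c ω|m] =ᵐ[μ] 0)
    {a Q : Ω → ℝ} (ha : StronglyMeasurable[m] a) (ha_bdd : MemLp a ∞ μ)
    (hQ : StronglyMeasurable[m'] Q) (hQ2 : MemLp Q 2 μ) (k : E) :
    ∫ ω, ⟪ε ω • c ω, (a ω * W ω * ε ω + Q ω) • k⟫ ∂μ = 0 := by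
  have hQk : MemLp (fun ω => Q ω • k) 2 μ := (memLp_top_const k).smul hQ2
  have hpt : ∀ ω, ⟪ε ω • c ω, (a ω * W ω * ε ω + Q ω) • k⟫
      = ⟪a ω • k, (W ω * ε ω ^ 2) • c ω⟫ + ⟪ε ω • c ω, Q ω • k⟫ := fun ω => by
    simp only [real_inner_smul_left, real_inner_smul_right, real_inner_comm k]
    ring
  have haξ : Integrable (fun ω => ⟪a ω • k, (W ω * ε ω ^ 2) • c ω⟫) μ := by
    simp_rw [real_inner_smul_left]
    exact (hξ.const_inner k).mul_of_top_right ha_bdd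
  simp_rw [hpt]
  rw [integral_add haξ (hcε.integrable_inner hQk),
    integral_inner_eq_zero_of_condExp_eq_zero (f := fun ω => a ω • k) (hmm'.trans hm')
      (ha.smul stronglyMeasurable_const) haξ hξ hξ0,
    integral_inner_smul_eq_zero_of_stronglyMeasurable (Γ := fun ω => Q ω • k) hm' hε hε0 hc hcε
      (hQ.smul stronglyMeasurable_const) hQk, add_zero]

end Orthogonality

theorem influence_function_orthogonal_to_tangent_space_general
    {Ω : Type*} {mΩ : MeasurableSpace Ω} (P : Measure Ω) [IsProbabilityMeasure P]
    {p : ℕ} {mG mH : MeasurableSpace Ω} (hGH : mG ≤ mH) (hHF : mH ≤ mΩ)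
    (ε : Ω → ℝ) (hε : MemLp ε 2 P) (hεH : P[ε|mH] =ᵐ[P] 0)
    (c₁ c₂ : ℝ) (hc₁ : 0 < c₁)
    (hvar : ∀ᵐ ω ∂P, c₁ ≤ (P[fun ω => ε ω ^ 2|mH]) ω ∧ (P[fun ω => ε ω ^ 2|mH]) ω ≤ c₂)
    (Q : Ω → ℝ) (hQmeas : StronglyMeasurable[mG] Q) (hQ2 : MemLp Q 2 P)
    (W T : Ω → ℝ) (Tstar : ℝ) (ε₀ : Ω → ℝ)
    (hW : W = fun ω => ((P[fun ω => ε ω ^ 2|mH]) ω)⁻¹)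
    (hT : T = P[W|mG])
    (hε₀ : ε₀ = fun ω => (T ω)⁻¹ * W ω * ε ω + Q ω)
    (L : Fin 5 → Set (Ω → EuclideanSpace ℝ (Fin p)))
    (hL1 : L 0 = {Γ | MemLp Γ 2 P ∧ (∫ ω, Γ ω ∂P) = 0 ∧
      P[Γ|mH] =ᵐ[P] 0 ∧ P[fun ω => ε ω • Γ ω|mH] =ᵐ[P] 0})
    (hL2 : L 1 = {g | ∃ Γs : Ω → EuclideanSpace ℝ (Fin p),
      StronglyMeasurable[mG] Γs ∧ Integrable Γs P ∧ (∫ ω, Γs ω ∂P) = 0 ∧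
      MemLp g 2 P ∧ g = fun ω => (W ω * ε ω) • Γs ω})
    (hL3 : L 2 = {g | ∃ Γs : Ω → EuclideanSpace ℝ (Fin p),
      StronglyMeasurable[mG] Γs ∧ MemLp Γs 2 P ∧ (∫ ω, Γs ω ∂P) = 0 ∧
      MemLp g 2 P ∧
      g = fun ω => Γs ω - ((Tstar * T ω)⁻¹ * (W ω * ε ω)) • (∫ ω', Q ω' • Γs ω' ∂P)})
    (hL4 : L 3 = {g | ∃ c : EuclideanSpace ℝ (Fin p), g = fun ω => ε₀ ω • c})
    (hL5 : L 4 = {Γ | MemLp Γ 2 P ∧ (∫ ω, Γ ω ∂P) = 0 ∧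
      StronglyMeasurable[mH] Γ ∧ P[Γ|mG] =ᵐ[P] 0})
    -- the candidate influence function multiplier c
    (c : Ω → EuclideanSpace ℝ (Fin p)) (hc : StronglyMeasurable[mH] c)
    (hcG : P[c|mG] =ᵐ[P] 0)
    (hcε : MemLp (fun ω => ε ω • c ω) 2 P) :
    ∀ i : Fin 5, ∀ h ∈ L i, ∫ ω, ⟪ε ω • c ω, h ω⟫ ∂P = 0 := by
  have hGF : mG ≤ mΩ := hGH.trans hHF
  have hεint : Integrable ε P := hε.integrable one_le_two
  have hWm : StronglyMeasurable[mH] W := by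
    rw [hW]; exact stronglyMeasurable_condExp.measurable.inv.stronglyMeasurable
  have hW_bdd : MemLp W ∞ P := hW ▸ memLp_top_inv_of_le
    (stronglyMeasurable_condExp.mono hHF).aestronglyMeasurable hc₁ (hvar.mono fun _ h => h.1)
  have hWε : ∀ᵐ ω ∂P, W ω * (P[fun ω => ε ω ^ 2|mH]) ω = 1 := by
    filter_upwards [hvar] with ω h
    rw [hW]; exact inv_mul_cancel₀ (hc₁.trans_le h.1).ne'
  have hTm : StronglyMeasurable[mG] T := hT ▸ stronglyMeasurable_condExp
  have hT_bdd : MemLp (fun ω => (T ω)⁻¹) ∞ P := by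
    obtain ⟨_, hc₁₂⟩ := hvar.exists
    rw [hT]
    refine memLp_top_inv_condExp_of_le hGF (hW_bdd.integrable le_top)
      (inv_pos.2 (hc₁.trans_le (hc₁₂.1.trans hc₁₂.2))) ?_
    filter_upwards [hvar] with ω h
    rw [hW]; exact inv_anti₀ (hc₁.trans_le h.1) h.2
  have hξ := integrable_mul_sq_smul hW_bdd hε hcε
  have hξG := condExp_mul_sq_smul_eq_zero hGH hHF hWm hWε hε hc hξ hcG
  intro i
  fin_cases i <;> simp only [Fin.reduceFinMk]
  · rw [hL1]; rintro Γ ⟨hΓ, -, -, hεΓ⟩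
    exact integral_inner_smul_eq_zero_of_condExp_smul_eq_zero hHF hc hε hcε hΓ hεΓ
  · rw [hL2]; rintro _ ⟨Γ, hΓ, -, -, hg, rfl⟩
    exact integral_inner_smul_mul_smul_eq_zero hGF hξ hξG hcε hΓ hg
  · rw [hL3]; rintro _ ⟨Γ, hΓ, hΓ2, -, hg, rfl⟩
    exact integral_inner_smul_sub_smul_eq_zero hGH hHF hεint hεH hc hcε hξ hξG
      (stronglyMeasurable_const.mul hTm).measurable.inv.stronglyMeasurable _ hΓ hΓ2 hg
  · rw [hL4]; rintro _ ⟨k, rfl⟩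
    subst hε₀
    exact integral_inner_smul_add_smul_eq_zero hGH hHF hεint hεH hc hcε hξ hξG
      hTm.measurable.inv.stronglyMeasurable hT_bdd (hQmeas.mono hGH) hQ2 k
  · rw [hL5]; rintro Γ ⟨hΓ2, -, hΓ, -⟩
    exact integral_inner_smul_eq_zero_of_stronglyMeasurable hHF hεint hεH hc hcε hΓ hΓ2

/-- one direction of Theorem S3: if `c` is `ℋ`-measurable with
`E[c | 𝒢] = 0` a.s. and `c·ε ∈ H`, then `c·ε` is orthogonal to every element of each of
the five subspaces `Λ⁽¹⁾, Λ̃⁽²⁾, Λ̃⁽³⁾, Λ̃⁽⁴⁾, Λ̃⁽⁵⁾`. -/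
theorem influence_function_orthogonal_to_tangent_space
    {Ω : Type*} {mΩ : MeasurableSpace Ω} (P : Measure Ω) [IsProbabilityMeasure P]
    {p : ℕ} {mG mH : MeasurableSpace Ω} (hGH : mG ≤ mH) (hHF : mH ≤ mΩ)
    (ε : Ω → ℝ) (hε : MemLp ε 2 P) (hεH : P[ε|mH] =ᵐ[P] 0)
    (c₁ c₂ : ℝ) (hc₁ : 0 < c₁)
    (hvar : ∀ᵐ ω ∂P, c₁ ≤ (P[fun ω => ε ω ^ 2|mH]) ω ∧ (P[fun ω => ε ω ^ 2|mH]) ω ≤ c₂)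
    (Q : Ω → ℝ) (hQmeas : StronglyMeasurable[mG] Q) (hQ2 : MemLp Q 2 P)
    (hQ0 : ∫ ω, Q ω ∂P = 0)
    (W T : Ω → ℝ) (Tstar : ℝ) (ε₀ : Ω → ℝ)
    (hW : W = fun ω => ((P[fun ω => ε ω ^ 2|mH]) ω)⁻¹)
    (hT : T = P[W|mG]) (hTstar : Tstar = ∫ ω, (T ω)⁻¹ ∂P)
    (hε₀ : ε₀ = fun ω => (T ω)⁻¹ * W ω * ε ω + Q ω)
    (L : Fin 5 → Set (Ω → EuclideanSpace ℝ (Fin p)))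
    (hL1 : L 0 = {Γ | MemLp Γ 2 P ∧ (∫ ω, Γ ω ∂P) = 0 ∧
      P[Γ|mH] =ᵐ[P] 0 ∧ P[fun ω => ε ω • Γ ω|mH] =ᵐ[P] 0})
    (hL2 : L 1 = {g | ∃ Γs : Ω → EuclideanSpace ℝ (Fin p),
      StronglyMeasurable[mG] Γs ∧ Integrable Γs P ∧ (∫ ω, Γs ω ∂P) = 0 ∧
      MemLp g 2 P ∧ g = fun ω => (W ω * ε ω) • Γs ω})
    (hL3 : L 2 = {g | ∃ Γs : Ω → EuclideanSpace ℝ (Fin p),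
      StronglyMeasurable[mG] Γs ∧ MemLp Γs 2 P ∧ (∫ ω, Γs ω ∂P) = 0 ∧
      MemLp g 2 P ∧
      g = fun ω => Γs ω - ((Tstar * T ω)⁻¹ * (W ω * ε ω)) • (∫ ω', Q ω' • Γs ω' ∂P)})
    (hL4 : L 3 = {g | ∃ c : EuclideanSpace ℝ (Fin p), g = fun ω => ε₀ ω • c})
    (hL5 : L 4 = {Γ | MemLp Γ 2 P ∧ (∫ ω, Γ ω ∂P) = 0 ∧
      StronglyMeasurable[mH] Γ ∧ P[Γ|mG] =ᵐ[P] 0})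
    -- the candidate influence function multiplier c
    (c : Ω → EuclideanSpace ℝ (Fin p)) (hc : StronglyMeasurable[mH] c)
    (hcint : Integrable c P) (hcG : P[c|mG] =ᵐ[P] 0)
    (hcε : MemLp (fun ω => ε ω • c ω) 2 P) :
    ∀ i : Fin 5, ∀ h ∈ L i, ∫ ω, ⟪ε ω • c ω, h ω⟫ ∂P = 0 :=
  influence_function_orthogonal_to_tangent_space_general P hGH hHF ε hε hεH c₁ c₂ hc₁ hvar Q hQmeas
    hQ2 W T Tstar ε₀ hW hT hε₀ L hL1 hL2 hL3 hL4 hL5 c hc hcG hcε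
end

section
/- (Projection onto the influence-function space; key computation for Theorem 1 and Theorem S3.) Let M = {c·ε : c is ℋ-measurable ℝ^p-valued, E[c | 𝒢] = 0 a.s., c·ε ∈ H}. For B ∈ H, set R = E[B·ε | ℋ] and P_B = (R − T⁻¹·E[R·W | 𝒢])·W·ε, assuming R·W·ε ∈ H. Then: (i) the multiplier (R − T⁻¹·E[R·W | 𝒢])·W has 𝒢-conditional mean zero, so P_B ∈ M; (ii) B − P_B is orthogonal to every element of M, i.e., E[(B − P_B)ᵀ (c·ε)] = 0 for all admissible c. Hence P_B is the orthogonal projection of B onto (the closure of) M. -/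
/-!
Write `Y = T⁻¹ E[W R | 𝒢]`. Since `Y` is `𝒢`-measurable and `T = E[W | 𝒢]`, pulling `Y` out of
the conditional expectation gives `E[W (R - Y) | 𝒢] = E[W R | 𝒢] - T Y = 0`, so
`P_B = ε · W (R - Y)` lies in `M`. For `c ε ∈ M`, conditioning on `ℋ` gives
`E[ε (B - P_B) | ℋ] = R - E[ε² | ℋ] W (R - Y) = Y`, and then
`E[(B - P_B)ᵀ c ε] = E[Yᵀ c] = E[Yᵀ E[c | 𝒢]] = 0`.

All the integrability needed comes from `E ‖ε v‖² = E[E[ε² | ℋ] ‖v‖²]` for `ℋ`-measurable `v`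
together with the two-sided bound on the conditional variance: `ε v ∈ L²` iff `v ∈ L²`.
-/

open MeasureTheory
open scoped RealInnerProductSpace ENNReal

namespace MeasureTheory

variable {Ω E : Type*} {m mΩ : MeasurableSpace Ω} {μ : Measure Ω} [NormedAddCommGroup E]

theorem memLp_two_iff_lintegral_enorm_sq_lt_top {f : Ω → E} (hf : AEStronglyMeasurable f μ) :
    MemLp f 2 μ ↔ ∫⁻ ω, ‖f ω‖ₑ ^ 2 ∂μ < ∞ := by
  rw [MemLp, eLpNorm_lt_top_iff_lintegral_rpow_enorm_lt_top two_ne_zero ENNReal.ofNat_ne_top]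
  simp only [ENNReal.toReal_ofNat, ENNReal.rpow_two, and_iff_right hf]

theorem ae_inv_mem_Icc_inv {f : Ω → ℝ} {a b : ℝ} (ha : 0 < a)
    (hab : ∀ᵐ ω ∂μ, f ω ∈ Set.Icc a b) : ∀ᵐ ω ∂μ, (f ω)⁻¹ ∈ Set.Icc b⁻¹ a⁻¹ :=
  hab.mono fun _ h => ⟨inv_anti₀ (ha.trans_le h.1) h.2, inv_anti₀ ha h.1⟩

theorem memLp_top_of_ae_mem_Icc {f : Ω → ℝ} (hf : AEStronglyMeasurable f μ) {a b : ℝ}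
    (hab : ∀ᵐ ω ∂μ, f ω ∈ Set.Icc a b) : MemLp f ∞ μ :=
  memLp_top_of_bound hf (max |a| |b|) (hab.mono fun _ h => abs_le_max_abs_abs h.1 h.2)

theorem lintegral_mul_condLExp (hm : m ≤ mΩ) [SigmaFinite (μ.trim hm)] {φ f : Ω → ℝ≥0∞}
    (hφ : Measurable[m] φ) (hf : AEMeasurable f μ) :
    ∫⁻ ω, μ⁻[f|m] ω * φ ω ∂μ = ∫⁻ ω, f ω * φ ω ∂μ := by
  have htrim : (μ.withDensity μ⁻[f|m]).trim hm = (μ.withDensity f).trim hm := by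
    refine @Measure.ext _ m _ _ fun s hs => ?_
    rw [trim_measurableSet_eq hm hs, trim_measurableSet_eq hm hs, withDensity_apply _ (hm s hs),
      withDensity_apply _ (hm s hs)]
    exact setLIntegral_condLExp hm μ f hs
  have h := congrArg (fun ν => ∫⁻ ω, φ ω ∂ν) htrim
  simp only [lintegral_trim hm hφ] at h
  rwa [lintegral_withDensity_eq_lintegral_mul₀ ((measurable_condLExp' m μ f).aemeasurable)
    (hφ.mono hm le_rfl).aemeasurable,
    lintegral_withDensity_eq_lintegral_mul₀ hf (hφ.mono hm le_rfl).aemeasurable] at h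

theorem lintegral_enorm_smul_sq_eq (hm : m ≤ mΩ) [SigmaFinite (μ.trim hm)] [NormedSpace ℝ E]
    {ε : Ω → ℝ} (hε : MemLp ε 2 μ) {v : Ω → E} (hv : StronglyMeasurable[m] v) :
    ∫⁻ ω, ‖ε ω • v ω‖ₑ ^ 2 ∂μ
      = ∫⁻ ω, ENNReal.ofReal (μ[fun ω => ε ω ^ 2|m] ω) * ‖v ω‖ₑ ^ 2 ∂μ := by
  have hε2 : ∀ ω, ‖ε ω‖ₑ ^ 2 = ENNReal.ofReal (ε ω ^ 2) := fun ω => by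
    rw [← enorm_pow, Real.enorm_of_nonneg (sq_nonneg _)]
  calc ∫⁻ ω, ‖ε ω • v ω‖ₑ ^ 2 ∂μ = ∫⁻ ω, ENNReal.ofReal (ε ω ^ 2) * ‖v ω‖ₑ ^ 2 ∂μ := by
        simp only [enorm_smul, mul_pow, hε2]
    _ = ∫⁻ ω, μ⁻[fun ω => ENNReal.ofReal (ε ω ^ 2)|m] ω * ‖v ω‖ₑ ^ 2 ∂μ :=
        (lintegral_mul_condLExp hm (hv.enorm.pow_const 2)
          hε.integrable_sq.1.aemeasurable.ennreal_ofReal).symm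
    _ = _ := lintegral_congr_ae <| by
        filter_upwards [condLExp_ofReal m hε.integrable_sq (ae_of_all _ fun ω => sq_nonneg (ε ω))]
          with ω hω
        rw [hω]

theorem memLp_two_of_memLp_smul (hm : m ≤ mΩ) [SigmaFinite (μ.trim hm)] [NormedSpace ℝ E]
    {ε : Ω → ℝ} (hε : MemLp ε 2 μ) {c : ℝ} (hc : 0 < c)
    (hcε : ∀ᵐ ω ∂μ, c ≤ μ[fun ω => ε ω ^ 2|m] ω) {v : Ω → E} (hv : StronglyMeasurable[m] v)
    (hεv : MemLp (fun ω => ε ω • v ω) 2 μ) :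
    MemLp v 2 μ := by
  rw [memLp_two_iff_lintegral_enorm_sq_lt_top (hv.mono hm).aestronglyMeasurable]
  rw [memLp_two_iff_lintegral_enorm_sq_lt_top hεv.1, lintegral_enorm_smul_sq_eq hm hε hv] at hεv
  have hle : ENNReal.ofReal c * ∫⁻ ω, ‖v ω‖ₑ ^ 2 ∂μ
      ≤ ∫⁻ ω, ENNReal.ofReal (μ[fun ω => ε ω ^ 2|m] ω) * ‖v ω‖ₑ ^ 2 ∂μ := by
    rw [← lintegral_const_mul' _ _ ENNReal.ofReal_ne_top]
    refine lintegral_mono_ae ?_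
    filter_upwards [hcε] with ω hω
    gcongr
  exact ENNReal.lt_top_of_mul_ne_top_right (hle.trans_lt hεv).ne (ENNReal.ofReal_pos.2 hc).ne'

theorem memLp_smul_of_condExp_sq_le (hm : m ≤ mΩ) [SigmaFinite (μ.trim hm)] [NormedSpace ℝ E]
    {ε : Ω → ℝ} (hε : MemLp ε 2 μ) {C : ℝ} (hεC : ∀ᵐ ω ∂μ, μ[fun ω => ε ω ^ 2|m] ω ≤ C)
    {v : Ω → E} (hv : StronglyMeasurable[m] v) (hv2 : MemLp v 2 μ) :
    MemLp (fun ω => ε ω • v ω) 2 μ := by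
  rw [memLp_two_iff_lintegral_enorm_sq_lt_top hv2.1] at hv2
  rw [memLp_two_iff_lintegral_enorm_sq_lt_top (f := fun ω => ε ω • v ω)
      (hε.1.smul (hv.mono hm).aestronglyMeasurable),
    lintegral_enorm_smul_sq_eq hm hε hv]
  calc ∫⁻ ω, ENNReal.ofReal (μ[fun ω => ε ω ^ 2|m] ω) * ‖v ω‖ₑ ^ 2 ∂μ
      ≤ ∫⁻ ω, ENNReal.ofReal C * ‖v ω‖ₑ ^ 2 ∂μ := lintegral_mono_ae <| by
        filter_upwards [hεC] with ω hω
        gcongr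
    _ < ∞ := by
      rw [lintegral_const_mul' _ _ ENNReal.ofReal_ne_top]
      exact ENNReal.mul_lt_top ENNReal.ofReal_lt_top hv2

/-- For `W > 0`, `V ↦ weightedCondExp m μ W V` is the orthogonal projection onto the
`m`-measurable functions in `L²(W • μ)`. -/
noncomputable def weightedCondExp [NormedSpace ℝ E] (m : MeasurableSpace Ω) (μ : Measure[mΩ] Ω)
    (W : Ω → ℝ) (V : Ω → E) : Ω → E :=
  fun ω => (μ[W|m] ω)⁻¹ • μ[fun ω => W ω • V ω|m] ω

theorem stronglyMeasurable_weightedCondExp [NormedSpace ℝ E] (W : Ω → ℝ) (V : Ω → E) :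
    StronglyMeasurable[m] (weightedCondExp m μ W V) :=
  (stronglyMeasurable_condExp.measurable.inv.stronglyMeasurable).smul stronglyMeasurable_condExp

variable [InnerProductSpace ℝ E]

theorem MemLp.integrable_inner_s9 {f g : Ω → E} (hf : MemLp f 2 μ) (hg : MemLp g 2 μ) :
    Integrable (fun ω => ⟪f ω, g ω⟫) μ :=
  (hf.norm.integrable_mul hg.norm).mono' (hf.1.inner hg.1)
    (ae_of_all _ fun ω => norm_inner_le_norm (f ω) (g ω))

variable [CompleteSpace E]

theorem MemLp.weightedCondExp (hm : m ≤ mΩ) {p : ℝ≥0∞} (hp : 1 ≤ p) {W : Ω → ℝ} {V : Ω → E}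
    {a : ℝ} (ha : 0 < a) (hW : ∀ᵐ ω ∂μ, a ≤ μ[W|m] ω) (hWV : MemLp (fun ω => W ω • V ω) p μ) :
    MemLp (weightedCondExp m μ W V) p μ := by
  refine (hWV.condExp (m := m) hp).of_le_mul (c := a⁻¹)
    ((stronglyMeasurable_weightedCondExp W V).mono hm).aestronglyMeasurable ?_
  filter_upwards [hW] with ω hω
  rw [MeasureTheory.weightedCondExp, norm_smul, norm_inv, Real.norm_of_nonneg (ha.le.trans hω)]
  gcongr

theorem condExp_smul_sub_weightedCondExp {W : Ω → ℝ} {V : Ω → E} (hW : Integrable W μ)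
    (hWV : Integrable (fun ω => W ω • V ω) μ) (hW0 : ∀ᵐ ω ∂μ, μ[W|m] ω ≠ 0)
    (hWY : Integrable (fun ω => W ω • weightedCondExp m μ W V ω) μ) :
    μ[fun ω => W ω • (V ω - weightedCondExp m μ W V ω)|m] =ᵐ[μ] 0 := by
  have hpull : μ[fun ω => W ω • weightedCondExp m μ W V ω|m]
      =ᵐ[μ] fun ω => μ[W|m] ω • weightedCondExp m μ W V ω :=
    condExp_smul_of_aestronglyMeasurable_right hW hWY
      (stronglyMeasurable_weightedCondExp W V).aestronglyMeasurable
  have hsplit : (fun ω => W ω • (V ω - weightedCondExp m μ W V ω))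
      = (fun ω => W ω • V ω) - fun ω => W ω • weightedCondExp m μ W V ω :=
    funext fun ω => smul_sub _ _ _
  rw [hsplit]
  filter_upwards [condExp_sub hWV hWY m, hpull, hW0] with ω hsub hpull hW0
  rw [hsub, Pi.sub_apply, hpull, weightedCondExp, smul_inv_smul₀ hW0, sub_self, Pi.zero_apply]

theorem integral_inner_condExp_right (hm : m ≤ mΩ) [SigmaFinite (μ.trim hm)]
    {f g : Ω → E} (hf : StronglyMeasurable[m] f) (hfg : Integrable (fun ω => ⟪f ω, g ω⟫) μ)
    (hg : Integrable g μ) :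
    ∫ ω, ⟪f ω, g ω⟫ ∂μ = ∫ ω, ⟪f ω, μ[g|m] ω⟫ ∂μ :=
  (integral_condExp hm).symm.trans
    (integral_congr_ae (condExp_bilin_of_stronglyMeasurable_left (innerSL ℝ) hf hfg hg))

theorem integral_inner_eq_zero_of_condExp_eq_zero (hm : m ≤ mΩ) [SigmaFinite (μ.trim hm)]
    {f g : Ω → E} (hf : StronglyMeasurable[m] f) (hfg : Integrable (fun ω => ⟪f ω, g ω⟫) μ)
    (hg : Integrable g μ) (hg0 : μ[g|m] =ᵐ[μ] 0) :
    ∫ ω, ⟪f ω, g ω⟫ ∂μ = 0 := by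
  rw [integral_inner_condExp_right hm hf hfg hg]
  refine (integral_congr_ae (g := fun _ => (0 : ℝ)) ?_).trans (integral_zero Ω ℝ)
  filter_upwards [hg0] with ω hω
  rw [hω, Pi.zero_apply, inner_zero_right]

theorem integral_inner_sub_smul_smul_eq_zero {mG mH : MeasurableSpace Ω} (hGH : mG ≤ mH)
    (hHF : mH ≤ mΩ) [IsFiniteMeasure μ] {ε : Ω → ℝ} (hε : MemLp ε 2 μ) {B D Y c : Ω → E}
    (hB : MemLp B 2 μ) (hD : StronglyMeasurable[mH] D) (hεD : MemLp (fun ω => ε ω • D ω) 2 μ)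
    (hY : StronglyMeasurable[mG] Y) (hY2 : MemLp Y 2 μ)
    (hDY : (fun ω => μ[fun ω => ε ω ^ 2|mH] ω • D ω) =ᵐ[μ] μ[fun ω => ε ω • B ω|mH] - Y)
    (hc : StronglyMeasurable[mH] c) (hc2 : MemLp c 2 μ) (hcG : μ[c|mG] =ᵐ[μ] 0)
    (hεc : MemLp (fun ω => ε ω • c ω) 2 μ) :
    ∫ ω, ⟪B ω - ε ω • D ω, ε ω • c ω⟫ ∂μ = 0 := by
  set Z : Ω → E := fun ω => ε ω • (B ω - ε ω • D ω)
  have hεB : Integrable (fun ω => ε ω • B ω) μ := memLp_one_iff_integrable.1 (hB.smul hε)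
  have hε2D : Integrable (fun ω => ε ω ^ 2 • D ω) μ := by
    refine (memLp_one_iff_integrable.1 (hεD.smul hε)).congr (ae_of_all _ fun ω => ?_)
    simp only [Pi.smul_apply', sq, mul_smul]
  have hZ : μ[Z|mH] =ᵐ[μ] Y := by
    have hsplit : Z = (fun ω => ε ω • B ω) - fun ω => ε ω ^ 2 • D ω := by
      funext ω; simp only [Z, smul_sub, sq, mul_smul, Pi.sub_apply]
    have hpull : μ[fun ω => ε ω ^ 2 • D ω|mH] =ᵐ[μ] fun ω => μ[fun ω => ε ω ^ 2|mH] ω • D ω :=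
      condExp_smul_of_aestronglyMeasurable_right hε.integrable_sq hε2D hD.aestronglyMeasurable
    rw [hsplit]
    filter_upwards [condExp_sub hεB hε2D mH, hpull, hDY] with ω hsub hpull hDY
    rw [hsub, Pi.sub_apply, hpull, hDY, Pi.sub_apply, sub_sub_cancel]
  have hcZ : Integrable (fun ω => ⟪c ω, Z ω⟫) μ :=
    (hεc.integrable_inner_s9 (hB.sub hεD)).congr (ae_of_all _ fun ω => by
      simp only [Z, Pi.sub_apply, real_inner_smul_left, real_inner_smul_right])
  calc ∫ ω, ⟪B ω - ε ω • D ω, ε ω • c ω⟫ ∂μ = ∫ ω, ⟪c ω, Z ω⟫ ∂μ := by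
        simp only [Z, real_inner_smul_left, real_inner_smul_right, real_inner_comm]
    _ = ∫ ω, ⟪Y ω, c ω⟫ ∂μ := by
        rw [integral_inner_condExp_right hHF hc hcZ
          (memLp_one_iff_integrable.1 ((hB.sub hεD).smul hε))]
        refine integral_congr_ae ?_
        filter_upwards [hZ] with ω hω
        rw [hω, real_inner_comm]
    _ = 0 := integral_inner_eq_zero_of_condExp_eq_zero (hGH.trans hHF) hY
        (hY2.integrable_inner_s9 hc2) (hc2.integrable one_le_two) hcG

end MeasureTheory

theorem projection_onto_influence_function_space_general
    {Ω : Type*} {mΩ : MeasurableSpace Ω} (P : Measure Ω) [IsProbabilityMeasure P]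
    {p : ℕ} {mG mH : MeasurableSpace Ω} (hGH : mG ≤ mH) (hHF : mH ≤ mΩ)
    (ε : Ω → ℝ) (hε : MemLp ε 2 P)
    (c₁ c₂ : ℝ) (hc₁ : 0 < c₁)
    (hvar : ∀ᵐ ω ∂P, c₁ ≤ (P[fun ω => ε ω ^ 2|mH]) ω ∧ (P[fun ω => ε ω ^ 2|mH]) ω ≤ c₂)
    (W T : Ω → ℝ)
    (hW : W = fun ω => ((P[fun ω => ε ω ^ 2|mH]) ω)⁻¹)
    (hT : T = P[W|mG])
    -- the influence-function space M
    (M : Set (Ω → EuclideanSpace ℝ (Fin p)))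
    (hM : M = {g | ∃ c : Ω → EuclideanSpace ℝ (Fin p),
      StronglyMeasurable[mH] c ∧ Integrable c P ∧ P[c|mG] =ᵐ[P] 0 ∧
      MemLp g 2 P ∧ g = fun ω => ε ω • c ω})
    -- B ∈ H and the projection candidate
    (B : Ω → EuclideanSpace ℝ (Fin p)) (hB : MemLp B 2 P)
    (R : Ω → EuclideanSpace ℝ (Fin p)) (hR : R = P[fun ω => ε ω • B ω|mH])
    (hRWε : MemLp (fun ω => (W ω * ε ω) • R ω) 2 P)
    (PB : Ω → EuclideanSpace ℝ (Fin p))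
    (hPB : PB = fun ω =>
      (W ω * ε ω) • (R ω - (T ω)⁻¹ • (P[fun ω => W ω • R ω|mG]) ω)) :
    -- (i) the multiplier has 𝒢-conditional mean zero, and P_B ∈ M
    (P[fun ω => W ω • (R ω - (T ω)⁻¹ • (P[fun ω => W ω • R ω|mG]) ω)|mG] =ᵐ[P] 0) ∧
    PB ∈ M ∧
    -- (ii) B − P_B is orthogonal to every element of M
    (∀ g ∈ M, ∫ ω, ⟪B ω - PB ω, g ω⟫ ∂P = 0) := by
  subst hT
  set Y := weightedCondExp mG P W R
  have hc₂ : 0 < c₂ := let ⟨_, h₁, h₂⟩ := hvar.exists; hc₁.trans_le (h₁.trans h₂)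
  have hWbd : ∀ᵐ ω ∂P, W ω ∈ Set.Icc c₂⁻¹ c₁⁻¹ := by rw [hW]; exact ae_inv_mem_Icc_inv hc₁ hvar
  have hWm : StronglyMeasurable[mH] W := by
    rw [hW]; exact stronglyMeasurable_condExp.measurable.inv.stronglyMeasurable
  have hWtop : MemLp W ∞ P := memLp_top_of_ae_mem_Icc (hWm.mono hHF).aestronglyMeasurable hWbd
  have hTbd : ∀ᵐ ω ∂P, P[W|mG] ω ∈ Set.Icc c₂⁻¹ c₁⁻¹ := Convex.condExp_mem (hGH.trans hHF)
    (hWtop.integrable le_top) isClosed_Icc (convex_Icc _ _) hWbd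
  have hRm : StronglyMeasurable[mH] R := by rw [hR]; exact stronglyMeasurable_condExp
  have hWR : MemLp (fun ω => W ω • R ω) 2 P :=
    memLp_two_of_memLp_smul hHF hε hc₁ (hvar.mono fun _ h => h.1) (hWm.smul hRm)
      (by simpa only [smul_smul, mul_comm] using hRWε)
  have hY2 : MemLp Y 2 P := hWR.weightedCondExp (hGH.trans hHF) one_le_two (inv_pos.2 hc₂)
    (hTbd.mono fun _ h => h.1)
  have hYm : StronglyMeasurable[mG] Y := stronglyMeasurable_weightedCondExp W R
  set D : Ω → EuclideanSpace ℝ (Fin p) := fun ω => W ω • (R ω - Y ω) with hD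
  have hDm : StronglyMeasurable[mH] D := hWm.smul (hRm.sub (hYm.mono hGH))
  have hD2 : MemLp D 2 P := (hWR.sub (hY2.smul hWtop)).ae_eq
    (ae_of_all _ fun ω => (smul_sub (W ω) (R ω) (Y ω)).symm)
  have hεD : MemLp (fun ω => ε ω • D ω) 2 P :=
    memLp_smul_of_condExp_sq_le hHF hε (hvar.mono fun _ h => h.2) hDm hD2
  have hmean : P[D|mG] =ᵐ[P] 0 := condExp_smul_sub_weightedCondExp (hWtop.integrable le_top)
    (hWR.integrable one_le_two) (hTbd.mono fun _ h => ((inv_pos.2 hc₂).trans_le h.1).ne')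
    ((hY2.integrable one_le_two).smul_of_top_right hWtop)
  have hκD : (fun ω => P[fun ω => ε ω ^ 2|mH] ω • D ω) =ᵐ[P] P[fun ω => ε ω • B ω|mH] - Y := by
    filter_upwards [hvar] with ω h
    rw [hD, hW, hR]
    simp only [smul_smul, mul_inv_cancel₀ (hc₁.trans_le h.1).ne', one_smul, Pi.sub_apply]
  have hPBD : PB = fun ω => ε ω • D ω := by
    rw [hPB]; funext ω; rw [mul_comm, mul_smul]; rfl
  rw [hPBD, hM]
  refine ⟨hmean, ⟨D, hDm, hD2.integrable one_le_two, hmean, hεD, rfl⟩, ?_⟩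
  rintro _ ⟨c, hcm, -, hcG, hεc, rfl⟩
  exact integral_inner_sub_smul_smul_eq_zero hGH hHF hε hB hDm hεD hYm hY2 hκD hcm
    (memLp_two_of_memLp_smul hHF hε hc₁ (hvar.mono fun _ h => h.1) hcm hεc) hcG hεc

/-- projection onto the influence-function space `M = Λ^⊥`: for
`B ∈ H`, with `R = E[B·ε | ℋ]` and `P_B = (R − T⁻¹·E[R·W | 𝒢])·W·ε`, the multiplier of
`P_B` has `𝒢`-conditional mean zero (so `P_B ∈ M`), and `B − P_B` is orthogonal to every
element of `M`; hence `P_B` is the orthogonal projection of `B` onto (the closure of) `M`. -/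
theorem projection_onto_influence_function_space
    {Ω : Type*} {mΩ : MeasurableSpace Ω} (P : Measure Ω) [IsProbabilityMeasure P]
    {p : ℕ} {mG mH : MeasurableSpace Ω} (hGH : mG ≤ mH) (hHF : mH ≤ mΩ)
    (ε : Ω → ℝ) (hε : MemLp ε 2 P) (hεH : P[ε|mH] =ᵐ[P] 0)
    (c₁ c₂ : ℝ) (hc₁ : 0 < c₁)
    (hvar : ∀ᵐ ω ∂P, c₁ ≤ (P[fun ω => ε ω ^ 2|mH]) ω ∧ (P[fun ω => ε ω ^ 2|mH]) ω ≤ c₂)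
    (W T : Ω → ℝ)
    (hW : W = fun ω => ((P[fun ω => ε ω ^ 2|mH]) ω)⁻¹)
    (hT : T = P[W|mG])
    -- the influence-function space M
    (M : Set (Ω → EuclideanSpace ℝ (Fin p)))
    (hM : M = {g | ∃ c : Ω → EuclideanSpace ℝ (Fin p),
      StronglyMeasurable[mH] c ∧ Integrable c P ∧ P[c|mG] =ᵐ[P] 0 ∧
      MemLp g 2 P ∧ g = fun ω => ε ω • c ω})
    -- B ∈ H and the projection candidate
    (B : Ω → EuclideanSpace ℝ (Fin p)) (hB : MemLp B 2 P) (hB0 : (∫ ω, B ω ∂P) = 0)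
    (R : Ω → EuclideanSpace ℝ (Fin p)) (hR : R = P[fun ω => ε ω • B ω|mH])
    (hRWε : MemLp (fun ω => (W ω * ε ω) • R ω) 2 P)
    (PB : Ω → EuclideanSpace ℝ (Fin p))
    (hPB : PB = fun ω =>
      (W ω * ε ω) • (R ω - (T ω)⁻¹ • (P[fun ω => W ω • R ω|mG]) ω)) :
    -- (i) the multiplier has 𝒢-conditional mean zero, and P_B ∈ M
    (P[fun ω => W ω • (R ω - (T ω)⁻¹ • (P[fun ω => W ω • R ω|mG]) ω)|mG] =ᵐ[P] 0) ∧
    PB ∈ M ∧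
    -- (ii) B − P_B is orthogonal to every element of M
    (∀ g ∈ M, ∫ ω, ⟪B ω - PB ω, g ω⟫ ∂P = 0) :=
  projection_onto_influence_function_space_general P hGH hHF ε hε c₁ c₂ hc₁ hvar W T hW hT M hM B hB
    R hR hRWε PB hPB
end

section
/- (Lemma S-Lambda2-bot-5.) Let Q ∈ L²(P) be scalar, 𝒢-measurable with E[Q] = 0, and let Γ* be a 𝒢-measurable ℝ^p-valued random variable with E[Γ*] = 0 such that Γ*, Q·Γ*, Γ*·S_ε and W·ε have the required integrability. Then: (i) Γ* − E[Q·Γ*]·W·ε is orthogonal to every element of Λ⁽¹⁾; (ii) E[Q·Γ*]·(S_ε + W·ε) ∈ Λ⁽¹⁾. Consequently, the orthogonal projection of Γ⁽³⁾ := Γ* + E[Q·Γ*]·S_ε onto the orthogonal complement of Λ⁽¹⁾ equals Γ* − E[Q·Γ*]·W·ε. -/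
open MeasureTheory
open scoped RealInnerProductSpace

/-!
Γ* and the vector W·E[QΓ*] are ℋ-measurable, while every h ∈ Λ⁽¹⁾ has E[h | ℋ] = 0 and
E[εh | ℋ] = 0; pulling the ℋ-measurable factors out of the conditional expectations shows that
both E⟨Γ*, h⟩ and E⟨W·E[QΓ*], εh⟩ vanish, which is (i). For (ii), E[S_ε + Wε | ℋ] = 0 and
E[ε(S_ε + Wε) | ℋ] = −1 + W·E[ε² | ℋ] = 0, and both properties survive multiplication by a
constant vector.
-/

namespace MeasureTheory

variable {Ω E : Type*} {m mΩ : MeasurableSpace Ω} {μ : Measure Ω}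
  [NormedAddCommGroup E] [InnerProductSpace ℝ E] [CompleteSpace E]

theorem integral_eq_zero_of_condExp_ae_eq_zero (hm : m ≤ mΩ) [SigmaFinite (μ.trim hm)]
    {f : Ω → E} (hf : μ[f|m] =ᵐ[μ] 0) : ∫ ω, f ω ∂μ = 0 := by
  rw [← integral_condExp hm, integral_congr_ae hf, Pi.zero_def, integral_zero]

theorem integral_inner_eq_zero_of_condExp_ae_eq_zero (hm : m ≤ mΩ) [SigmaFinite (μ.trim hm)]
    {f g : Ω → E} (hf : StronglyMeasurable[m] f) (hfg : Integrable (fun ω ↦ ⟪f ω, g ω⟫) μ)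
    (hg : Integrable g μ) (hg0 : μ[g|m] =ᵐ[μ] 0) : ∫ ω, ⟪f ω, g ω⟫ ∂μ = 0 := by
  refine integral_eq_zero_of_condExp_ae_eq_zero hm ?_
  filter_upwards [condExp_bilin_of_stronglyMeasurable_left (innerSL ℝ) hf hfg hg, hg0]
    with ω hfgω hgω
  rw [hgω, Pi.zero_apply, map_zero] at hfgω
  exact hfgω

theorem condExp_smul_const (f : Ω → ℝ) (c : E) :
    μ[fun ω ↦ f ω • c|m] =ᵐ[μ] fun ω ↦ μ[f|m] ω • c := by
  by_cases hf : Integrable f μ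
  · exact ((ContinuousLinearMap.toSpanSingleton ℝ c).comp_condExp_comm hf).symm
  rcases eq_or_ne c 0 with rfl | hc
  · simp
  · rw [condExp_of_not_integrable hf,
      condExp_of_not_integrable (mt (integrable_smul_const hc).1 hf)]
    filter_upwards with ω
    simp

theorem condExp_mul_ae_eq_zero_of_stronglyMeasurable_left {f g : Ω → ℝ}
    (hf : StronglyMeasurable[m] f) (hfg : Integrable (fun ω ↦ f ω * g ω) μ)
    (hg : Integrable g μ) (hg0 : μ[g|m] =ᵐ[μ] 0) : μ[fun ω ↦ f ω * g ω|m] =ᵐ[μ] 0 := by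
  filter_upwards [condExp_mul_of_stronglyMeasurable_left hf hfg hg, hg0] with ω hpull hω
  exact hpull.trans (by simp [hω])

theorem condExp_add_ae_eq {f g a b : Ω → ℝ} (hf : Integrable f μ) (hg : Integrable g μ)
    (hfa : μ[f|m] =ᵐ[μ] a) (hgb : μ[g|m] =ᵐ[μ] b) :
    μ[fun ω ↦ f ω + g ω|m] =ᵐ[μ] a + b :=
  (condExp_add hf hg m).trans (hfa.add hgb)

theorem ae_norm_inv_le_inv {v : Ω → ℝ} {c : ℝ} (hc : 0 < c) (hv : ∀ᵐ ω ∂μ, c ≤ v ω) :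
    ∀ᵐ ω ∂μ, ‖(v ω)⁻¹‖ ≤ c⁻¹ := by
  filter_upwards [hv] with ω hω
  rw [norm_inv, Real.norm_of_nonneg (hc.le.trans hω)]
  exact inv_anti₀ hc hω

theorem condExp_inv_condExp_mul_ae_eq_one (hm : m ≤ mΩ) {g : Ω → ℝ} {c : ℝ}
    (hg : Integrable g μ) (hc : 0 < c) (hgc : ∀ᵐ ω ∂μ, c ≤ μ[g|m] ω) :
    μ[fun ω ↦ (μ[g|m] ω)⁻¹ * g ω|m] =ᵐ[μ] 1 := by
  have hinv : StronglyMeasurable[m] fun ω ↦ (μ[g|m] ω)⁻¹ := stronglyMeasurable_condExp.fun_inv₀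
  have hint : Integrable (fun ω ↦ (μ[g|m] ω)⁻¹ * g ω) μ :=
    hg.bdd_mul (hinv.mono hm).aestronglyMeasurable (ae_norm_inv_le_inv hc hgc)
  filter_upwards [condExp_mul_of_stronglyMeasurable_left hinv hint hg, hgc] with ω hpull hcω
  exact hpull.trans (inv_mul_cancel₀ (hc.trans_le hcω).ne')

def lambda1 (μ : Measure Ω) (m : MeasurableSpace Ω) (ε : Ω → ℝ) : Set (Ω → E) :=
  {Γ | MemLp Γ 2 μ ∧ ∫ ω, Γ ω ∂μ = 0 ∧ μ[Γ|m] =ᵐ[μ] 0 ∧ μ[fun ω ↦ ε ω • Γ ω|m] =ᵐ[μ] 0}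

theorem integral_inner_sub_smul_eq_zero_of_mem_lambda1 [IsFiniteMeasure μ] (hm : m ≤ mΩ)
    {Γ : Ω → E} {W ε : Ω → ℝ} {C : ℝ}
    (hΓ : StronglyMeasurable[m] Γ) (hΓ2 : MemLp Γ 2 μ) (hW : StronglyMeasurable[m] W)
    (hWC : ∀ᵐ ω ∂μ, ‖W ω‖ ≤ C) (hε : MemLp ε 2 μ) (c : E) {h : Ω → E}
    (hh : h ∈ lambda1 μ m ε) : ∫ ω, ⟪Γ ω - (W ω * ε ω) • c, h ω⟫ ∂μ = 0 := by
  obtain ⟨hh2, -, hh0, hεh0⟩ := hh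
  have hεh : Integrable (fun ω ↦ ε ω • h ω) μ := memLp_one_iff_integrable.1 (hh2.smul hε)
  have hWc : StronglyMeasurable[m] fun ω ↦ W ω • c := hW.smul_const c
  have hΓh : Integrable (fun ω ↦ ⟪Γ ω, h ω⟫) μ :=
    memLp_one_iff_integrable.1 ((innerSL ℝ).memLp_of_bilin 1 hΓ2 hh2)
  have hWcεh : Integrable (fun ω ↦ ⟪W ω • c, ε ω • h ω⟫) μ := by
    refine (innerSL ℝ).integrable_of_bilin_of_bdd_left (C * ‖c‖)
      (hWc.mono hm).aestronglyMeasurable ?_ hεh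
    filter_upwards [hWC] with ω hω
    rw [norm_smul]
    gcongr
  have hsplit : ∀ ω, ⟪Γ ω - (W ω * ε ω) • c, h ω⟫ = ⟪Γ ω, h ω⟫ - ⟪W ω • c, ε ω • h ω⟫ := by
    intro ω
    rw [inner_sub_left, real_inner_smul_left, real_inner_smul_left, real_inner_smul_right]
    ring
  simp_rw [hsplit]
  rw [integral_sub hΓh hWcεh,
    integral_inner_eq_zero_of_condExp_ae_eq_zero hm hΓ hΓh (hh2.integrable one_le_two) hh0,
    integral_inner_eq_zero_of_condExp_ae_eq_zero hm hWc hWcεh hεh hεh0, sub_zero]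

theorem smul_const_mem_lambda1 [IsFiniteMeasure μ] (hm : m ≤ mΩ) {f ε : Ω → ℝ}
    (hf : MemLp f 2 μ) (hf0 : μ[f|m] =ᵐ[μ] 0)
    (hεf0 : μ[fun ω ↦ ε ω * f ω|m] =ᵐ[μ] 0) (c : E) : (fun ω ↦ f ω • c) ∈ lambda1 μ m ε := by
  refine ⟨(memLp_top_const c).smul hf, ?_, ?_, ?_⟩
  · rw [integral_smul_const, integral_eq_zero_of_condExp_ae_eq_zero hm hf0, zero_smul]
  · filter_upwards [condExp_smul_const f c, hf0] with ω hpull hω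
    rw [hpull, hω, Pi.zero_apply, zero_smul, Pi.zero_apply]
  · simp_rw [smul_smul]
    filter_upwards [condExp_smul_const (fun ω ↦ ε ω * f ω) c, hεf0] with ω hpull hω
    rw [hpull, hω, Pi.zero_apply, zero_smul, Pi.zero_apply]

end MeasureTheory

theorem projection_of_Gamma3_onto_Lambda1_perp_general
    {Ω : Type*} {mΩ : MeasurableSpace Ω} (P : Measure Ω) [IsProbabilityMeasure P]
    {p : ℕ} {mG mH : MeasurableSpace Ω} (hGH : mG ≤ mH) (hHF : mH ≤ mΩ)
    (ε : Ω → ℝ) (hε : MemLp ε 2 P) (hεH : P[ε|mH] =ᵐ[P] 0)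
    (c₁ c₂ : ℝ) (hc₁ : 0 < c₁)
    (hvar : ∀ᵐ ω ∂P, c₁ ≤ (P[fun ω => ε ω ^ 2|mH]) ω ∧ (P[fun ω => ε ω ^ 2|mH]) ω ≤ c₂)
    (W : Ω → ℝ) (hW : W = fun ω => ((P[fun ω => ε ω ^ 2|mH]) ω)⁻¹)
    (Sε : Ω → ℝ) (hSε2 : MemLp Sε 2 P) (hSεH : P[Sε|mH] =ᵐ[P] 0)
    (hSεε : P[fun ω => Sε ω * ε ω|mH] =ᵐ[P] fun _ => (-1 : ℝ))
    (Λ1 : Set (Ω → EuclideanSpace ℝ (Fin p)))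
    (hΛ1 : Λ1 = {Γ | MemLp Γ 2 P ∧ (∫ ω, Γ ω ∂P) = 0 ∧
      P[Γ|mH] =ᵐ[P] 0 ∧ P[fun ω => ε ω • Γ ω|mH] =ᵐ[P] 0})
    (Q : Ω → ℝ)
    (Γs : Ω → EuclideanSpace ℝ (Fin p)) (hΓs : StronglyMeasurable[mG] Γs)
    (hΓs2 : MemLp Γs 2 P) :
    -- (i) Γ* − E[Q·Γ*]·W·ε ⟂ Λ⁽¹⁾
    (∀ h ∈ Λ1,
      ∫ ω, ⟪Γs ω - (W ω * ε ω) • (∫ ω', Q ω' • Γs ω' ∂P), h ω⟫ ∂P = 0) ∧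
    -- (ii) E[Q·Γ*]·(S_ε + W·ε) ∈ Λ⁽¹⁾
    (fun ω => (Sε ω + W ω * ε ω) • (∫ ω', Q ω' • Γs ω' ∂P)) ∈ Λ1 := by
  have hvar₁ : ∀ᵐ ω ∂P, c₁ ≤ P[fun ω ↦ ε ω ^ 2|mH] ω := hvar.mono fun _ h ↦ h.1
  have hWm : StronglyMeasurable[mH] W := hW ▸ stronglyMeasurable_condExp.fun_inv₀
  have hWb : ∀ᵐ ω ∂P, ‖W ω‖ ≤ c₁⁻¹ := hW ▸ ae_norm_inv_le_inv hc₁ hvar₁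
  have hWε : MemLp (fun ω ↦ W ω * ε ω) 2 P :=
    hε.smul (memLp_top_of_bound (hWm.mono hHF).aestronglyMeasurable _ hWb)
  have hWε0 : P[fun ω ↦ W ω * ε ω|mH] =ᵐ[P] 0 :=
    condExp_mul_ae_eq_zero_of_stronglyMeasurable_left hWm (hWε.integrable one_le_two)
      (hε.integrable one_le_two) hεH
  have hεWε : P[fun ω ↦ ε ω * (W ω * ε ω)|mH] =ᵐ[P] 1 := by
    refine (condExp_congr_ae (ae_of_all _ fun ω ↦ ?_)).trans
      (condExp_inv_condExp_mul_ae_eq_one hHF hε.integrable_sq hc₁ hvar₁)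
    rw [hW]
    ring
  refine ⟨fun h hh ↦ ?_, ?_⟩
  · rw [hΛ1] at hh
    exact integral_inner_sub_smul_eq_zero_of_mem_lambda1 hHF (hΓs.mono hGH) hΓs2 hWm hWb hε _ hh
  · rw [hΛ1]
    refine smul_const_mem_lambda1 (f := fun ω ↦ Sε ω + W ω * ε ω) hHF (hSε2.add hWε) ?_ ?_ _
    · simpa using condExp_add_ae_eq (hSε2.integrable one_le_two) (hWε.integrable one_le_two)
        hSεH hWε0
    · have hexpand : ∀ ω, ε ω * (Sε ω + W ω * ε ω) = Sε ω * ε ω + ε ω * (W ω * ε ω) :=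
        fun ω ↦ by ring
      simp_rw [hexpand]
      filter_upwards [condExp_add_ae_eq (hSε2.integrable_mul hε) (hε.integrable_mul hWε)
        hSεε hεWε] with ω hω
      exact hω.trans (by norm_num)

/-- Lemma S-Lambda2-bot-5: for `𝒢`-measurable `Γ*` with `E[Γ*] = 0`
and `Q` scalar `𝒢`-measurable with `E[Q] = 0`, (i) `Γ* − E[Q·Γ*]·W·ε` is orthogonal to
every element of `Λ⁽¹⁾`, and (ii) `E[Q·Γ*]·(S_ε + W·ε) ∈ Λ⁽¹⁾`; consequently the
projection of `Γ⁽³⁾ = Γ* + E[Q·Γ*]·S_ε` onto `Λ⁽¹⁾^⊥` is `Γ* − E[Q·Γ*]·W·ε`. -/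
theorem projection_of_Gamma3_onto_Lambda1_perp
    {Ω : Type*} {mΩ : MeasurableSpace Ω} (P : Measure Ω) [IsProbabilityMeasure P]
    {p : ℕ} {mG mH : MeasurableSpace Ω} (hGH : mG ≤ mH) (hHF : mH ≤ mΩ)
    (ε : Ω → ℝ) (hε : MemLp ε 2 P) (hεH : P[ε|mH] =ᵐ[P] 0)
    (c₁ c₂ : ℝ) (hc₁ : 0 < c₁)
    (hvar : ∀ᵐ ω ∂P, c₁ ≤ (P[fun ω => ε ω ^ 2|mH]) ω ∧ (P[fun ω => ε ω ^ 2|mH]) ω ≤ c₂)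
    (W : Ω → ℝ) (hW : W = fun ω => ((P[fun ω => ε ω ^ 2|mH]) ω)⁻¹)
    (Sε : Ω → ℝ) (hSε2 : MemLp Sε 2 P) (hSεH : P[Sε|mH] =ᵐ[P] 0)
    (hSεε : P[fun ω => Sε ω * ε ω|mH] =ᵐ[P] fun _ => (-1 : ℝ))
    (Λ1 : Set (Ω → EuclideanSpace ℝ (Fin p)))
    (hΛ1 : Λ1 = {Γ | MemLp Γ 2 P ∧ (∫ ω, Γ ω ∂P) = 0 ∧
      P[Γ|mH] =ᵐ[P] 0 ∧ P[fun ω => ε ω • Γ ω|mH] =ᵐ[P] 0})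
    (Q : Ω → ℝ) (hQmeas : StronglyMeasurable[mG] Q) (hQ2 : MemLp Q 2 P)
    (hQ0 : ∫ ω, Q ω ∂P = 0)
    (Γs : Ω → EuclideanSpace ℝ (Fin p)) (hΓs : StronglyMeasurable[mG] Γs)
    (hΓs2 : MemLp Γs 2 P) (hΓs0 : (∫ ω, Γs ω ∂P) = 0)
    (hΓsSε : MemLp (fun ω => Sε ω • Γs ω) 2 P) :
    -- (i) Γ* − E[Q·Γ*]·W·ε ⟂ Λ⁽¹⁾
    (∀ h ∈ Λ1,
      ∫ ω, ⟪Γs ω - (W ω * ε ω) • (∫ ω', Q ω' • Γs ω' ∂P), h ω⟫ ∂P = 0) ∧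
    -- (ii) E[Q·Γ*]·(S_ε + W·ε) ∈ Λ⁽¹⁾
    (fun ω => (Sε ω + W ω * ε ω) • (∫ ω', Q ω' • Γs ω' ∂P)) ∈ Λ1 :=
  projection_of_Gamma3_onto_Lambda1_perp_general P hGH hHF ε hε hεH c₁ c₂ hc₁ hvar W hW Sε hSε2 hSεH
    hSεε Λ1 hΛ1 Q Γs hΓs hΓs2
end
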